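/- arXiv:2507.09698 — 8 statements merged into one kernel-verified Lean document; each statement's English description precedes it below -/
import Mathlib

section
/- Let (X,d) be a metric space and t > 0. Then the metric complexity C^t, defined on finite subsets of X by C^t(A) = log D^t(A), is a diversity; that is: (i) C^t(A) = 0 if and only if A has at most one element, and (ii) C^t(A ∪ B) ≤ C^t(A ∪ C) + C^t(B ∪ C) for all finite subsets A, B, C of X with C nonempty. -/
/-- The exponentiated metric complexity `D^t(A)` of a finite subset `A` of a metric
space: the supremum over finitely supported probability measures `p` supported in `A`
of `(∑_{x,y} p(x)·p(y)·e^{−t·d(x,y)})⁻¹`, with `D^t(∅) = 1` by convention. -/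
noncomputable def Dfin {X : Type*} [MetricSpace X] (t : ℝ) (A : Finset X) : ℝ :=
  if A.Nonempty then
    sSup { r : ℝ | ∃ p : X → ℝ, (∀ x, 0 ≤ p x) ∧ (∀ x, p x ≠ 0 → x ∈ A) ∧
      (∑ x ∈ A, p x) = 1 ∧
      r = (∑ x ∈ A, ∑ y ∈ A, p x * p y * Real.exp (-(t * dist x y)))⁻¹ }
  else 1

namespace MetDiv

variable {X : Type*} [MetricSpace X]

noncomputable def Kern (t : ℝ) (x y : X) : ℝ := Real.exp (-(t * dist x y))

noncomputable def Zb (t : ℝ) (S : Finset X) (f g : X → ℝ) : ℝ :=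
  ∑ x ∈ S, ∑ y ∈ S, f x * g y * Kern t x y

noncomputable def lin (t : ℝ) (S : Finset X) (f : X → ℝ) (c : X) : ℝ :=
  ∑ x ∈ S, f x * Kern t x c

lemma Kern_pos (t : ℝ) (x y : X) : 0 < Kern t x y := Real.exp_pos _

lemma Kern_le_one {t : ℝ} (ht : 0 ≤ t) (x y : X) : Kern t x y ≤ 1 := by
  have h : -(t * dist x y) ≤ 0 := by nlinarith [mul_nonneg ht (dist_nonneg (x := x) (y := y))]
  rw [Kern]; exact Real.exp_le_one_iff.mpr h

lemma Kern_self (t : ℝ) (x : X) : Kern t x x = 1 := by simp [Kern]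

lemma Kern_symm (t : ℝ) (x y : X) : Kern t x y = Kern t y x := by
  rw [Kern, Kern, dist_comm]

lemma Kern_tri {t : ℝ} (ht : 0 ≤ t) (x c y : X) :
    Kern t x c * Kern t c y ≤ Kern t x y := by
  rw [Kern, Kern, Kern, ← Real.exp_add]
  apply Real.exp_le_exp.mpr
  have h := dist_triangle x c y
  nlinarith [mul_le_mul_of_nonneg_left h ht]

/-- symmetry of the bilinear form -/
lemma Zb_comm (t : ℝ) (S : Finset X) (f g : X → ℝ) : Zb t S f g = Zb t S g f := by
  rw [Zb, Zb, Finset.sum_comm]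
  refine Finset.sum_congr rfl fun x _ => Finset.sum_congr rfl fun y _ => ?_
  rw [Kern_symm]; ring

/-- expansion of the quadratic form on a linear combination -/
lemma Zb_expand (t : ℝ) (S : Finset X) (f g : X → ℝ) (α β : ℝ) :
    Zb t S (fun x => α * f x + β * g x) (fun x => α * f x + β * g x)
      = α^2 * Zb t S f f + 2*α*β * Zb t S f g + β^2 * Zb t S g g := by
  have h : ∀ x y : X, (α * f x + β * g x) * (α * f y + β * g y) * Kern t x y
      = α^2 * (f x * f y * Kern t x y) + α*β * (f x * g y * Kern t x y)
        + α*β * (g x * f y * Kern t x y) + β^2 * (g x * g y * Kern t x y) := by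
    intros; ring
  rw [Zb]
  simp_rw [h, Finset.sum_add_distrib, ← Finset.mul_sum]
  have hsym := Zb_comm t S f g
  rw [Zb, Zb] at hsym
  conv_rhs => rw [Zb, Zb, Zb]
  rw [← hsym]; ring

lemma Zb_congr (t : ℝ) (S : Finset X) {f g f' g' : X → ℝ}
    (hf : ∀ x, f x = f' x) (hg : ∀ x, g x = g' x) : Zb t S f g = Zb t S f' g' := by
  refine Finset.sum_congr rfl fun x _ => Finset.sum_congr rfl fun y _ => ?_
  rw [hf x, hg y]

/-- sum against a delta function -/
lemma sum_delta (S : Finset X) [DecidableEq X] {c : X} (hc : c ∈ S) (f : X → ℝ) :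
    ∑ x ∈ S, (if x = c then 1 else 0) * f x = f c := by
  simp [ite_mul, Finset.sum_ite_eq', hc]

lemma Zb_delta_right (t : ℝ) (S : Finset X) [DecidableEq X] {c : X} (hc : c ∈ S) (f : X → ℝ) :
    Zb t S f (fun y => if y = c then 1 else 0) = lin t S f c := by
  rw [Zb, lin]
  refine Finset.sum_congr rfl fun x _ => ?_
  have h : ∀ y : X, f x * (if y = c then (1:ℝ) else 0) * Kern t x y
      = if y = c then f x * Kern t x y else 0 := by
    intro y; split_ifs <;> simp
  simp_rw [h, Finset.sum_ite_eq' S c, if_pos hc]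

lemma Zb_delta_delta (t : ℝ) (S : Finset X) [DecidableEq X] {a c : X} (ha : a ∈ S) (hc : c ∈ S) :
    Zb t S (fun y => if y = a then 1 else 0) (fun y => if y = c then 1 else 0) = Kern t a c := by
  rw [Zb_delta_right t S hc, lin]
  have h : ∀ x : X, (if x = a then (1:ℝ) else 0) * Kern t x c
      = if x = a then Kern t x c else 0 := by intro x; split_ifs <;> simp
  simp_rw [h, Finset.sum_ite_eq' S a, if_pos ha]

section Bounds
variable {t : ℝ} {S : Finset X} {f g : X → ℝ}

lemma lin_nonneg (hf : ∀ x, 0 ≤ f x) (c : X) : 0 ≤ lin t S f c :=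
  Finset.sum_nonneg fun x _ => mul_nonneg (hf x) (Kern_pos t x c).le

lemma lin_le_one (ht : 0 ≤ t) (hf : ∀ x, 0 ≤ f x) (hsum : ∑ x ∈ S, f x = 1) (c : X) :
    lin t S f c ≤ 1 := by
  rw [lin, ← hsum]
  refine Finset.sum_le_sum fun x _ => ?_
  nlinarith [Kern_le_one ht x c, hf x, (Kern_pos t x c).le]

lemma Zb_nonneg (hf : ∀ x, 0 ≤ f x) (hg : ∀ x, 0 ≤ g x) : 0 ≤ Zb t S f g :=
  Finset.sum_nonneg fun x _ => Finset.sum_nonneg fun y _ =>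
    mul_nonneg (mul_nonneg (hf x) (hg y)) (Kern_pos t x y).le

lemma Zb_le_one (ht : 0 ≤ t) (hf : ∀ x, 0 ≤ f x) (hg : ∀ x, 0 ≤ g x)
    (hfs : ∑ x ∈ S, f x = 1) (hgs : ∑ x ∈ S, g x = 1) : Zb t S f g ≤ 1 := by
  have h1 : Zb t S f g ≤ ∑ x ∈ S, ∑ y ∈ S, f x * g y := by
    refine Finset.sum_le_sum fun x _ => Finset.sum_le_sum fun y _ => ?_
    nlinarith [Kern_le_one ht x y, (Kern_pos t x y).le, hf x, hg y, mul_nonneg (hf x) (hg y)]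
  have h2 : ∑ x ∈ S, ∑ y ∈ S, f x * g y = 1 := by
    simp_rw [← Finset.mul_sum, hgs, mul_one, hfs]
  linarith

lemma lin_mul_lin_le_Zb (ht : 0 ≤ t) (hf : ∀ x, 0 ≤ f x) (hg : ∀ x, 0 ≤ g x) (c : X) :
    lin t S f c * lin t S g c ≤ Zb t S f g := by
  have h1 : lin t S f c * lin t S g c
      = ∑ x ∈ S, ∑ y ∈ S, f x * g y * (Kern t x c * Kern t c y) := by
    rw [lin, lin, Finset.sum_mul]
    refine Finset.sum_congr rfl fun x _ => ?_
    rw [Finset.mul_sum]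
    refine Finset.sum_congr rfl fun y _ => ?_
    rw [Kern_symm t y c]; ring
  rw [h1, Zb]
  refine Finset.sum_le_sum fun x _ => Finset.sum_le_sum fun y _ => ?_
  exact mul_le_mul_of_nonneg_left (Kern_tri ht x c y) (mul_nonneg (hf x) (hg y))

lemma sq_lin_le_Zb (ht : 0 ≤ t) (hf : ∀ x, 0 ≤ f x) (c : X) :
    (lin t S f c)^2 ≤ Zb t S f f := by
  rw [sq]; exact lin_mul_lin_le_Zb ht hf hf c

lemma Zb_pos (hf : ∀ x, 0 ≤ f x) (hsum : ∑ x ∈ S, f x = 1) : 0 < Zb t S f f := by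
  have hx : ∃ x ∈ S, f x ≠ 0 := by
    by_contra h
    push_neg at h
    rw [Finset.sum_eq_zero (fun x hx => h x hx)] at hsum
    norm_num at hsum
  obtain ⟨x0, hx0S, hx0⟩ := hx
  have hfx0 : 0 < f x0 := lt_of_le_of_ne (hf x0) (Ne.symm hx0)
  have hterm : 0 < f x0 * f x0 * Kern t x0 x0 := mul_pos (mul_pos hfx0 hfx0) (Kern_pos t x0 x0)
  have hinner : f x0 * f x0 * Kern t x0 x0 ≤ ∑ y ∈ S, f x0 * f y * Kern t x0 y := by
    refine Finset.single_le_sum (f := fun y => f x0 * f y * Kern t x0 y) ?_ hx0S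
    exact fun y _ => mul_nonneg (mul_nonneg hfx0.le (hf y)) (Kern_pos t x0 y).le
  have houter : ∑ y ∈ S, f x0 * f y * Kern t x0 y ≤ Zb t S f f := by
    refine Finset.single_le_sum (f := fun x => ∑ y ∈ S, f x * f y * Kern t x y) ?_ hx0S
    exact fun x _ => Finset.sum_nonneg fun y _ =>
      mul_nonneg (mul_nonneg (hf x) (hf y)) (Kern_pos t x y).le
  linarith

end Bounds

section Support
variable {t : ℝ} {S T : Finset X} {f g : X → ℝ}

lemma sum_extend (hsupp : ∀ x, f x ≠ 0 → x ∈ S) (hST : S ⊆ T) :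
    ∑ x ∈ S, f x = ∑ x ∈ T, f x := by
  refine Finset.sum_subset hST fun x _ hx => ?_
  by_contra h
  exact hx (hsupp x h)

lemma Zb_extend (hfs : ∀ x, f x ≠ 0 → x ∈ S) (hgs : ∀ x, g x ≠ 0 → x ∈ S) (hST : S ⊆ T) :
    Zb t S f g = Zb t T f g := by
  rw [Zb, Zb]
  have hinner : ∀ x : X, ∑ y ∈ S, f x * g y * Kern t x y = ∑ y ∈ T, f x * g y * Kern t x y := by
    intro x
    refine Finset.sum_subset hST fun y _ hy => ?_
    have : g y = 0 := by by_contra h; exact hy (hgs y h)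
    rw [this]; ring
  simp_rw [hinner]
  refine Finset.sum_subset hST fun x _ hx => ?_
  have : f x = 0 := by by_contra h; exact hx (hfs x h)
  rw [this]
  simp

end Support


set_option maxHeartbeats 1000000 in
theorem coreAlg (u v z w a b : ℝ) (hu0 : 0 ≤ u) (hu1 : u ≤ 1) (hv0 : 0 ≤ v) (hv1 : v ≤ 1)
    (hzu : u^2 ≤ z) (hz1 : z ≤ 1) (hwv : v^2 ≤ w) (hw1 : w ≤ 1)
    (ha : 0 ≤ a) (hb : 0 ≤ b) (hab : a + b = 1) :
    ∃ s r : ℝ, 0 ≤ s ∧ s ≤ 1 ∧ 0 ≤ r ∧ r ≤ 1 ∧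
      ((1-s)^2*z + 2*s*(1-s)*u + s^2) * ((1-r)^2*w + 2*r*(1-r)*v + r^2)
        ≤ a^2*z + 2*a*b*(u*v) + b^2*w := by
  have hb' : b = 1 - a := by linarith
  subst hb'
  have ha1 : a ≤ 1 := by linarith
  have hz0 : 0 ≤ z := le_trans (sq_nonneg u) hzu
  have hw0 : 0 ≤ w := le_trans (sq_nonneg v) hwv
  rcases le_or_gt z u with hc1 | hc1
  · rcases le_or_gt w v with hc2 | hc2
    · refine ⟨0, 0, le_refl _, zero_le_one, le_refl _, zero_le_one, ?_⟩
      have key : (a^2*z + 2*a*(1-a)*(u*v) + (1-a)^2*w)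
          - ((1-(0:ℝ))^2*z + 2*0*(1-0)*u + 0^2) * ((1-(0:ℝ))^2*w + 2*0*(1-0)*v + 0^2)
          = a^2*(z*(1-w)) + (1-a)^2*(w*(1-z)) + 2*(a*(1-a))*(u*v-z*w) := by ring
      have h1 : 0 ≤ u*v - z*w := by nlinarith
      have e1 : 0 ≤ a^2*(z*(1-w)) := mul_nonneg (sq_nonneg a) (mul_nonneg hz0 (by linarith))
      have e2 : 0 ≤ (1-a)^2*(w*(1-z)) := mul_nonneg (sq_nonneg (1-a)) (mul_nonneg hw0 (by linarith))
      have e3 : 0 ≤ 2*(a*(1-a))*(u*v-z*w) :=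
        mul_nonneg (by positivity) h1
      linarith [key, e1, e2, e3]
    · have hA2 : (0:ℝ) < w + 1 - 2*v := by nlinarith [sq_nonneg (1-v)]
      refine ⟨0, (w-v)/(w+1-2*v), le_refl _, zero_le_one,
        div_nonneg (by linarith) hA2.le, by rw [div_le_one hA2]; linarith, ?_⟩
      have hg : ((1-(w-v)/(w+1-2*v))^2*w + 2*((w-v)/(w+1-2*v))*(1-(w-v)/(w+1-2*v))*v
          + ((w-v)/(w+1-2*v))^2) = (w - v^2)/(w+1-2*v) := by
        have hd := hA2.ne'
        generalize hD : w + 1 - 2*v = D at hd ⊢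
        field_simp
        rw [← hD]; ring
      rw [hg]
      have h0 : ((1-(0:ℝ))^2*z + 2*0*(1-0)*u + 0^2) = z := by norm_num
      rw [h0, mul_comm, div_mul_eq_mul_div, div_le_iff₀ hA2]
      have key : (a^2*z + 2*a*(1-a)*(u*v) + (1-a)^2*w) * (w+1-2*v) - (w - v^2)*z
          = ((1-a)*(w-v) - a*u*(1-v))^2 + a^2*(1-v)^2*(z-u^2) + (1-a)^2*((w-v^2)*(1-z))
            + 2*(a*(1-a))*((w-v^2)*(u-z)) := by ring
      have e1 : 0 ≤ ((1-a)*(w-v) - a*u*(1-v))^2 := sq_nonneg _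
      have e2 : 0 ≤ a^2*(1-v)^2*(z-u^2) := by
        have : 0 ≤ z - u^2 := by linarith
        positivity
      have e3 : 0 ≤ (1-a)^2*((w-v^2)*(1-z)) :=
        mul_nonneg (sq_nonneg _) (mul_nonneg (by linarith) (by linarith))
      have e4 : 0 ≤ 2*(a*(1-a))*((w-v^2)*(u-z)) :=
        mul_nonneg (by positivity) (mul_nonneg (by linarith) (by linarith))
      linarith [key, e1, e2, e3, e4]
  · have hA1 : (0:ℝ) < z + 1 - 2*u := by nlinarith [sq_nonneg (1-u)]
    have hg1 : ((1-(z-u)/(z+1-2*u))^2*z + 2*((z-u)/(z+1-2*u))*(1-(z-u)/(z+1-2*u))*u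
        + ((z-u)/(z+1-2*u))^2) = (z - u^2)/(z+1-2*u) := by
      have hd := hA1.ne'
      generalize hD : z + 1 - 2*u = D at hd ⊢
      field_simp
      rw [← hD]; ring
    rcases le_or_gt w v with hc2 | hc2
    · refine ⟨(z-u)/(z+1-2*u), 0, div_nonneg (by linarith) hA1.le,
        by rw [div_le_one hA1]; linarith, le_refl _, zero_le_one, ?_⟩
      have h0 : ((1-(0:ℝ))^2*w + 2*0*(1-0)*v + 0^2) = w := by norm_num
      rw [hg1, h0, div_mul_eq_mul_div, div_le_iff₀ hA1]
      have key : (a^2*z + 2*a*(1-a)*(u*v) + (1-a)^2*w) * (z+1-2*u) - (z - u^2)*w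
          = (a*(z-u) - (1-a)*v*(1-u))^2 + (1-a)^2*(1-u)^2*(w-v^2) + a^2*((z-u^2)*(1-w))
            + 2*(a*(1-a))*((z-u^2)*(v-w)) := by ring
      have e1 : 0 ≤ (a*(z-u) - (1-a)*v*(1-u))^2 := sq_nonneg _
      have e2 : 0 ≤ (1-a)^2*(1-u)^2*(w-v^2) := by
        have : 0 ≤ w - v^2 := by linarith
        positivity
      have e3 : 0 ≤ a^2*((z-u^2)*(1-w)) :=
        mul_nonneg (sq_nonneg _) (mul_nonneg (by linarith) (by linarith))
      have e4 : 0 ≤ 2*(a*(1-a))*((z-u^2)*(v-w)) :=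
        mul_nonneg (by positivity) (mul_nonneg (by linarith) (by linarith))
      linarith [key, e1, e2, e3, e4]
    · have hA2 : (0:ℝ) < w + 1 - 2*v := by nlinarith [sq_nonneg (1-v)]
      have hg2 : ((1-(w-v)/(w+1-2*v))^2*w + 2*((w-v)/(w+1-2*v))*(1-(w-v)/(w+1-2*v))*v
          + ((w-v)/(w+1-2*v))^2) = (w - v^2)/(w+1-2*v) := by
        have hd := hA2.ne'
        generalize hD : w + 1 - 2*v = D at hd ⊢
        field_simp
        rw [← hD]; ring
      refine ⟨(z-u)/(z+1-2*u), (w-v)/(w+1-2*v), div_nonneg (by linarith) hA1.le,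
        by rw [div_le_one hA1]; linarith, div_nonneg (by linarith) hA2.le,
        by rw [div_le_one hA2]; linarith, ?_⟩
      rw [hg1, hg2, div_mul_div_comm, div_le_iff₀ (mul_pos hA1 hA2)]
      have key : (a^2*z + 2*a*(1-a)*(u*v) + (1-a)^2*w) * ((z+1-2*u)*(w+1-2*v))
          - (z - u^2)*(w - v^2)
          = (1-u)^2*(1-v)^2*((a*u+(1-a)*v)^2 + a^2*(z-u^2) + (1-a)^2*(w-v^2))
            + (a*(1-v)*(z-u^2) - (1-a)*(1-u)*(w-v^2))^2
            + (w-v^2)*(a*(z-u^2) - (a*u+(1-a)*v)*(1-u))^2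
            + (z-u^2)*((1-a)*(w-v^2) - (a*u+(1-a)*v)*(1-v))^2 := by ring
      have hzu' : (0:ℝ) ≤ z - u^2 := by linarith
      have hwv' : (0:ℝ) ≤ w - v^2 := by linarith
      have e1 : 0 ≤ (1-u)^2*(1-v)^2*((a*u+(1-a)*v)^2 + a^2*(z-u^2) + (1-a)^2*(w-v^2)) := by
        positivity
      have e2 : 0 ≤ (a*(1-v)*(z-u^2) - (1-a)*(1-u)*(w-v^2))^2 := sq_nonneg _
      have e3 : 0 ≤ (w-v^2)*(a*(z-u^2) - (a*u+(1-a)*v)*(1-u))^2 :=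
        mul_nonneg hwv' (sq_nonneg _)
      have e4 : 0 ≤ (z-u^2)*((1-a)*(w-v^2) - (a*u+(1-a)*v)*(1-v))^2 :=
        mul_nonneg hzu' (sq_nonneg _)
      linarith [key, e1, e2, e3, e4]

section DfinLemmas
variable {X : Type*} [MetricSpace X]

def probSet (t : ℝ) (A : Finset X) : Set ℝ :=
  { r : ℝ | ∃ p : X → ℝ, (∀ x, 0 ≤ p x) ∧ (∀ x, p x ≠ 0 → x ∈ A) ∧
      (∑ x ∈ A, p x) = 1 ∧
      r = (∑ x ∈ A, ∑ y ∈ A, p x * p y * Real.exp (-(t * dist x y)))⁻¹ }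

lemma Dfin_of_nonempty {t : ℝ} {A : Finset X} (hA : A.Nonempty) :
    Dfin t A = sSup (probSet t A) := by
  rw [Dfin, if_pos hA]; rfl

lemma Dfin_of_empty (t : ℝ) : Dfin t (∅ : Finset X) = 1 := by
  rw [Dfin, if_neg]; simp

lemma mem_probSet {t : ℝ} {A : Finset X} {p : X → ℝ} (h1 : ∀ x, 0 ≤ p x)
    (h2 : ∀ x, p x ≠ 0 → x ∈ A) (h3 : (∑ x ∈ A, p x) = 1) :
    (Zb t A p p)⁻¹ ∈ probSet t A :=
  ⟨p, h1, h2, h3, rfl⟩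

lemma probSet_elim {t : ℝ} {A : Finset X} {r : ℝ} (hr : r ∈ probSet t A) :
    ∃ p : X → ℝ, (∀ x, 0 ≤ p x) ∧ (∀ x, p x ≠ 0 → x ∈ A) ∧
      (∑ x ∈ A, p x) = 1 ∧ r = (Zb t A p p)⁻¹ := hr

lemma bddAbove_probSet (t : ℝ) (A : Finset X) : BddAbove (probSet t A) := by
  refine ⟨(A.card : ℝ), fun r hr => ?_⟩
  obtain ⟨p, h1, h2, h3, h4⟩ := probSet_elim hr
  have hZ : 0 < Zb t A p p := Zb_pos h1 h3
  have hdiag : ∑ x ∈ A, (p x)^2 ≤ Zb t A p p := by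
    rw [Zb]
    refine Finset.sum_le_sum fun x hx => ?_
    have : (p x)^2 = p x * p x * Kern t x x := by rw [Kern_self]; ring
    rw [this]
    refine Finset.single_le_sum (f := fun y => p x * p y * Kern t x y) ?_ hx
    exact fun y _ => mul_nonneg (mul_nonneg (h1 x) (h1 y)) (Kern_pos t x y).le
  have hcs : (1:ℝ) ≤ (A.card : ℝ) * ∑ x ∈ A, (p x)^2 := by
    have := Finset.sum_mul_sq_le_sq_mul_sq A (fun _ => (1:ℝ)) p
    simp only [one_pow, one_mul, Finset.sum_const, nsmul_eq_mul, mul_one] at this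
    rw [h3] at this
    norm_num at this
    convert this using 2
  have hcard : (1:ℝ) ≤ (A.card : ℝ) * Zb t A p p := by
    have hc0 : (0:ℝ) ≤ (A.card : ℝ) := Nat.cast_nonneg _
    nlinarith
  rw [h4]
  have h5 := inv_mul_cancel₀ (ne_of_gt hZ)
  nlinarith [inv_pos.mpr hZ]

lemma one_mem_probSet (t : ℝ) {A : Finset X} [DecidableEq X] {a : X} (ha : a ∈ A) :
    (1:ℝ) ∈ probSet t A := by
  have h := mem_probSet (t := t) (A := A) (p := fun x => if x = a then (1:ℝ) else 0)
    (fun x => by by_cases h : x = a <;> simp [h])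
    (fun x hx => by by_contra h; simp [show x ≠ a from fun he => h (he ▸ ha)] at hx)
    (by simp [Finset.sum_ite_eq', ha])
  rwa [Zb_delta_delta t A ha ha, Kern_self, inv_one] at h

lemma one_le_Dfin (t : ℝ) [DecidableEq X] (A : Finset X) : 1 ≤ Dfin t A := by
  rcases A.eq_empty_or_nonempty with h | h
  · rw [h, Dfin_of_empty]
  · rw [Dfin_of_nonempty h]
    exact le_csSup (bddAbove_probSet t A) (one_mem_probSet t h.choose_spec)

lemma Dfin_pos (t : ℝ) [DecidableEq X] (A : Finset X) : 0 < Dfin t A :=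
  lt_of_lt_of_le one_pos (one_le_Dfin t A)

lemma le_Dfin {t : ℝ} {A : Finset X} {r : ℝ} (hA : A.Nonempty) (hr : r ∈ probSet t A) :
    r ≤ Dfin t A := by
  rw [Dfin_of_nonempty hA]
  exact le_csSup (bddAbove_probSet t A) hr

lemma inv_le_of_inv_le' {x D : ℝ} (hx : 0 < x) (h : x⁻¹ ≤ D) : D⁻¹ ≤ x := by
  have hD : 0 < D := lt_of_lt_of_le (inv_pos.mpr hx) h
  have h1 : 1 ≤ D * x := by
    calc (1:ℝ) = x⁻¹ * x := (inv_mul_cancel₀ hx.ne').symm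
    _ ≤ D * x := mul_le_mul_of_nonneg_right h hx.le
  calc D⁻¹ = D⁻¹ * 1 := (mul_one _).symm
  _ ≤ D⁻¹ * (D * x) := mul_le_mul_of_nonneg_left h1 (inv_pos.mpr hD).le
  _ = x := by field_simp

lemma Dfin_singleton (t : ℝ) (x0 : X) : Dfin t ({x0} : Finset X) = 1 := by
  classical
  refine le_antisymm ?_ (one_le_Dfin t _)
  rw [Dfin_of_nonempty ⟨x0, Finset.mem_singleton_self x0⟩]
  refine Real.sSup_le ?_ zero_le_one
  rintro r ⟨p, hp0, hpsupp, hpsum, hreq⟩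
  rw [Finset.sum_singleton] at hpsum
  have hZ : ∑ x ∈ ({x0} : Finset X), ∑ y ∈ ({x0} : Finset X),
      p x * p y * Real.exp (-(t * dist x y)) = 1 := by
    rw [Finset.sum_singleton, Finset.sum_singleton, hpsum, dist_self]
    norm_num
  rw [hreq, hZ]; norm_num

lemma one_lt_Dfin_of_pair {t : ℝ} (ht : 0 < t) [DecidableEq X] {A : Finset X} {x y : X}
    (hx : x ∈ A) (hy : y ∈ A) (hxy : x ≠ y) : 1 < Dfin t A := by
  set δx := fun s : X => if s = x then (1:ℝ) else 0 with hδx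
  set δy := fun s : X => if s = y then (1:ℝ) else 0 with hδy
  set p := fun s : X => (1/2 : ℝ) * δx s + (1/2 : ℝ) * δy s with hp
  have hp0 : ∀ s, 0 ≤ p s := by
    intro s
    have h1 : (0:ℝ) ≤ δx s := by rw [hδx]; dsimp only; split_ifs <;> norm_num
    have h2 : (0:ℝ) ≤ δy s := by rw [hδy]; dsimp only; split_ifs <;> norm_num
    rw [hp]; dsimp only; nlinarith
  have hpsupp : ∀ s, p s ≠ 0 → s ∈ A := by
    intro s hs
    by_contra hsA
    apply hs
    have h1 : s ≠ x := fun he => hsA (he ▸ hx)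
    have h2 : s ≠ y := fun he => hsA (he ▸ hy)
    rw [hp]; dsimp only; rw [hδx]; dsimp only
    rw [hδy]; dsimp only
    rw [if_neg h1, if_neg h2]; ring
  have hpsum : ∑ s ∈ A, p s = 1 := by
    rw [hp]
    rw [Finset.sum_add_distrib, ← Finset.mul_sum, ← Finset.mul_sum, hδx, hδy]
    rw [Finset.sum_ite_eq' A x (fun _ => (1:ℝ)), Finset.sum_ite_eq' A y (fun _ => (1:ℝ))]
    rw [if_pos hx, if_pos hy]
    norm_num
  have hmem : (Zb t A p p)⁻¹ ∈ probSet t A := mem_probSet hp0 hpsupp hpsum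
  have hZ : Zb t A p p = (1 + Kern t x y)/2 := by
    rw [hp, hδx, hδy, Zb_expand t A _ _ (1/2) (1/2),
      Zb_delta_delta t A hx hx, Zb_delta_delta t A hx hy, Zb_delta_delta t A hy hy,
      Kern_self, Kern_self]
    ring
  have hd : 0 < dist x y := dist_pos.mpr hxy
  have hK1 : Kern t x y < 1 := by
    rw [Kern]
    have hlt : -(t * dist x y) < 0 := by nlinarith
    calc Real.exp (-(t * dist x y)) < Real.exp 0 := Real.exp_lt_exp.mpr hlt
    _ = 1 := Real.exp_zero
  have hKpos := Kern_pos t x y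
  have hpos : 0 < (1 + Kern t x y)/2 := by nlinarith
  have h1r : 1 < ((1 + Kern t x y)/2)⁻¹ := by
    have hc := inv_mul_cancel₀ (ne_of_gt hpos)
    nlinarith [inv_pos.mpr hpos]
  calc 1 < (Zb t A p p)⁻¹ := by rw [hZ]; exact h1r
  _ ≤ Dfin t A := le_Dfin ⟨x, hx⟩ hmem

end DfinLemmas

end MetDiv

open MetDiv in
set_option maxHeartbeats 1000000 in
/-- The metric complexity C^t(A) = log D^t(A) is a diversity. -/
theorem complexity_isDiversity {X : Type*} [MetricSpace X] [DecidableEq X]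
    (t : ℝ) (ht : 0 < t) :
    (∀ A : Finset X, Real.log (Dfin t A) = 0 ↔ A.card ≤ 1) ∧
    (∀ A B C : Finset X, C ≠ ∅ →
      Real.log (Dfin t (A ∪ B)) ≤ Real.log (Dfin t (A ∪ C)) + Real.log (Dfin t (B ∪ C))) := by
  have ht0 : 0 ≤ t := ht.le
  constructor
  · intro A
    rcases Nat.lt_or_ge A.card 2 with hc | hc
    · have hD : Dfin t A = 1 := by
        rcases Nat.lt_or_ge A.card 1 with h0 | h1
        · have : A.card = 0 := by omega
          rw [Finset.card_eq_zero.mp this, Dfin_of_empty]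
        · have : A.card = 1 := by omega
          obtain ⟨x0, hx0⟩ := Finset.card_eq_one.mp this
          rw [hx0, Dfin_singleton]
      constructor
      · intro _; omega
      · intro _; rw [hD, Real.log_one]
    · obtain ⟨x, hx, y, hy, hxy⟩ := Finset.one_lt_card.mp hc
      have h1 : 1 < Dfin t A := one_lt_Dfin_of_pair ht hx hy hxy
      have h2 : 0 < Real.log (Dfin t A) := Real.log_pos h1
      constructor
      · intro h; linarith
      · intro h; exact absurd h (by omega : ¬A.card ≤ 1)
  · intro A B C hC
    obtain ⟨c, hc⟩ := Finset.nonempty_iff_ne_empty.mpr hC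
    have hACne : (A ∪ C).Nonempty := ⟨c, Finset.mem_union_right _ hc⟩
    have hBCne : (B ∪ C).Nonempty := ⟨c, Finset.mem_union_right _ hc⟩
    have h1D1 : 1 ≤ Dfin t (A ∪ C) := one_le_Dfin t _
    have h1D2 : 1 ≤ Dfin t (B ∪ C) := one_le_Dfin t _
    have hD1pos : 0 < Dfin t (A ∪ C) := by linarith
    have hD2pos : 0 < Dfin t (B ∪ C) := by linarith
    suffices hDD : Dfin t (A ∪ B) ≤ Dfin t (A ∪ C) * Dfin t (B ∪ C) by
      have hpos : 0 < Dfin t (A ∪ B) := Dfin_pos t _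
      calc Real.log (Dfin t (A ∪ B)) ≤ Real.log (Dfin t (A ∪ C) * Dfin t (B ∪ C)) :=
            Real.log_le_log hpos hDD
      _ = Real.log (Dfin t (A ∪ C)) + Real.log (Dfin t (B ∪ C)) :=
            Real.log_mul (ne_of_gt hD1pos) (ne_of_gt hD2pos)
    rcases (A ∪ B).eq_empty_or_nonempty with hAB | hAB
    · rw [hAB, Dfin_of_empty]
      calc (1:ℝ) ≤ Dfin t (A ∪ C) := h1D1
      _ ≤ Dfin t (A ∪ C) * Dfin t (B ∪ C) := le_mul_of_one_le_right hD1pos.le h1D2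
    · rw [Dfin_of_nonempty hAB]
      refine Real.sSup_le ?_ (mul_nonneg hD1pos.le hD2pos.le)
      rintro r ⟨p, hp0, hpsupp, hpsum, hreq⟩
      set U := (A ∪ B) ∪ C with hU
      have hABU : A ∪ B ⊆ U := Finset.subset_union_left
      have hACU : A ∪ C ⊆ U := by
        intro x hx
        rcases Finset.mem_union.mp hx with h | h
        · exact Finset.mem_union_left _ (Finset.mem_union_left _ h)
        · exact Finset.mem_union_right _ h
      have hBCU : B ∪ C ⊆ U := by
        intro x hx
        rcases Finset.mem_union.mp hx with h | h
        · exact Finset.mem_union_left _ (Finset.mem_union_right _ h)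
        · exact Finset.mem_union_right _ h
      have hcU : c ∈ U := Finset.mem_union_right _ hc
      have hpsumU : ∑ x ∈ U, p x = 1 := by
        rw [← sum_extend hpsupp hABU]; exact hpsum
      have hZtrans : Zb t (A ∪ B) p p = Zb t U p p := Zb_extend hpsupp hpsupp hABU
      have hZUpos : 0 < Zb t U p p := Zb_pos hp0 hpsumU
      have hreq' : r = (Zb t U p p)⁻¹ := by rw [hreq, ← hZtrans]; rfl
      set q := fun x : X => if x ∈ A then p x else 0 with hq
      set q' := fun x : X => if x ∈ A then 0 else p x with hq'
      have hqr : ∀ x, p x = q x + q' x := by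
        intro x; rw [hq, hq']; dsimp only; by_cases h : x ∈ A <;> simp [h]
      have hq0 : ∀ x, 0 ≤ q x := by
        intro x; rw [hq]; dsimp only; split_ifs; exacts [hp0 x, le_refl 0]
      have hq'0 : ∀ x, 0 ≤ q' x := by
        intro x; rw [hq']; dsimp only; split_ifs; exacts [le_refl 0, hp0 x]
      set a := ∑ x ∈ U, q x with haa
      set b := ∑ x ∈ U, q' x with hbb
      have hab : a + b = 1 := by
        rw [haa, hbb, ← Finset.sum_add_distrib, ← hpsumU]
        exact Finset.sum_congr rfl fun x _ => (hqr x).symm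
      have ha0 : 0 ≤ a := Finset.sum_nonneg fun x _ => hq0 x
      have hb0 : 0 ≤ b := Finset.sum_nonneg fun x _ => hq'0 x
      rcases eq_or_lt_of_le ha0 with haz | hapos
      · -- a = 0 : p is supported in B
        have hqz : ∀ x ∈ U, q x = 0 :=
          (Finset.sum_eq_zero_iff_of_nonneg fun x _ => hq0 x).mp haz.symm
        have hsuppB : ∀ x, p x ≠ 0 → x ∈ B ∪ C := by
          intro x hxp
          have hxAB : x ∈ A ∪ B := hpsupp x hxp
          rcases Finset.mem_union.mp hxAB with h | h
          · exfalso
            have := hqz x (hABU hxAB)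
            rw [hq] at this; dsimp only at this
            rw [if_pos h] at this
            exact hxp this
          · exact Finset.mem_union_left _ h
        have hsum2 : ∑ x ∈ B ∪ C, p x = 1 := by
          rw [sum_extend hsuppB hBCU]; exact hpsumU
        have hZ2 : Zb t (B ∪ C) p p = Zb t U p p := Zb_extend hsuppB hsuppB hBCU
        have hmem : (Zb t (B ∪ C) p p)⁻¹ ∈ probSet t (B ∪ C) := mem_probSet hp0 hsuppB hsum2
        have hle : r ≤ Dfin t (B ∪ C) := by
          rw [hreq', ← hZ2]
          exact le_Dfin hBCne hmem
        exact hle.trans (le_mul_of_one_le_left hD2pos.le h1D1)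
      · rcases eq_or_lt_of_le hb0 with hbz | hbpos
        · -- b = 0 : p is supported in A
          have hqz : ∀ x ∈ U, q' x = 0 :=
            (Finset.sum_eq_zero_iff_of_nonneg fun x _ => hq'0 x).mp hbz.symm
          have hsuppA : ∀ x, p x ≠ 0 → x ∈ A ∪ C := by
            intro x hxp
            have hxAB : x ∈ A ∪ B := hpsupp x hxp
            by_cases h : x ∈ A
            · exact Finset.mem_union_left _ h
            · exfalso
              have := hqz x (hABU hxAB)
              rw [hq'] at this; dsimp only at this
              rw [if_neg h] at this
              exact hxp this
          have hsum2 : ∑ x ∈ A ∪ C, p x = 1 := by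
            rw [sum_extend hsuppA hACU]; exact hpsumU
          have hZ2 : Zb t (A ∪ C) p p = Zb t U p p := Zb_extend hsuppA hsuppA hACU
          have hmem : (Zb t (A ∪ C) p p)⁻¹ ∈ probSet t (A ∪ C) := mem_probSet hp0 hsuppA hsum2
          have hle : r ≤ Dfin t (A ∪ C) := by
            rw [hreq', ← hZ2]
            exact le_Dfin hACne hmem
          exact hle.trans (le_mul_of_one_le_right hD1pos.le h1D2)
        · -- main case : both parts have positive mass
          set q1 := fun x : X => q x / a with hq1
          set r1 := fun x : X => q' x / b with hr1
          have hq10 : ∀ x, 0 ≤ q1 x := fun x => div_nonneg (hq0 x) hapos.le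
          have hr10 : ∀ x, 0 ≤ r1 x := fun x => div_nonneg (hq'0 x) hbpos.le
          have hq1sum : ∑ x ∈ U, q1 x = 1 := by
            rw [hq1]; dsimp only
            rw [← Finset.sum_div, ← haa, div_self (ne_of_gt hapos)]
          have hr1sum : ∑ x ∈ U, r1 x = 1 := by
            rw [hr1]; dsimp only
            rw [← Finset.sum_div, ← hbb, div_self (ne_of_gt hbpos)]
          have hq1suppA : ∀ x, q1 x ≠ 0 → x ∈ A := by
            intro x hx
            by_contra h
            apply hx
            rw [hq1]; dsimp only; rw [hq]; dsimp only; rw [if_neg h, zero_div]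
          have hr1suppB : ∀ x, r1 x ≠ 0 → x ∈ B := by
            intro x hx
            by_cases h : x ∈ A
            · exfalso
              apply hx
              rw [hr1]; dsimp only; rw [hq']; dsimp only; rw [if_pos h, zero_div]
            · have hpx : p x ≠ 0 := by
                intro hz
                apply hx
                rw [hr1]; dsimp only; rw [hq']; dsimp only; rw [if_neg h, hz, zero_div]
              rcases Finset.mem_union.mp (hpsupp x hpx) with h' | h'
              · exact absurd h' h
              · exact h'
          have hq1suppAC : ∀ x, q1 x ≠ 0 → x ∈ A ∪ C :=
            fun x hx => Finset.mem_union_left _ (hq1suppA x hx)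
          have hr1suppBC : ∀ x, r1 x ≠ 0 → x ∈ B ∪ C :=
            fun x hx => Finset.mem_union_left _ (hr1suppB x hx)
          set z := Zb t U q1 q1 with hz
          set w := Zb t U r1 r1 with hw
          set u := lin t U q1 c with hu
          set v := lin t U r1 c with hv
          have hu0 : 0 ≤ u := lin_nonneg hq10 c
          have hu1 : u ≤ 1 := lin_le_one ht0 hq10 hq1sum c
          have hv0 : 0 ≤ v := lin_nonneg hr10 c
          have hv1 : v ≤ 1 := lin_le_one ht0 hr10 hr1sum c
          have hzu : u^2 ≤ z := sq_lin_le_Zb ht0 hq10 c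
          have hz1 : z ≤ 1 := Zb_le_one ht0 hq10 hq10 hq1sum hq1sum
          have hwv : v^2 ≤ w := sq_lin_le_Zb ht0 hr10 c
          have hw1 : w ≤ 1 := Zb_le_one ht0 hr10 hr10 hr1sum hr1sum
          obtain ⟨s, s2, hs0, hs1, hs20, hs21, hkey⟩ :=
            coreAlg u v z w a b hu0 hu1 hv0 hv1 hzu hz1 hwv hw1 ha0 hb0 hab
          have hcross : u * v ≤ Zb t U q1 r1 := lin_mul_lin_le_Zb ht0 hq10 hr10 c
          have hp' : ∀ x, p x = a * q1 x + b * r1 x := by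
            intro x
            rw [hqr x, hq1, hr1]; dsimp only
            rw [mul_div_cancel₀ _ (ne_of_gt hapos), mul_div_cancel₀ _ (ne_of_gt hbpos)]
          have hZp : Zb t U p p = a^2*z + 2*a*b*(Zb t U q1 r1) + b^2*w := by
            rw [Zb_congr t U hp' hp', Zb_expand t U q1 r1 a b, hz, hw]
          have hZpge : a^2*z + 2*a*b*(u*v) + b^2*w ≤ Zb t U p p := by
            rw [hZp]
            have h2ab : (0:ℝ) ≤ 2*(a*b) := by
              have h := mul_pos hapos hbpos
              linarith [h]
            have h2 := mul_le_mul_of_nonneg_left hcross h2ab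
            linarith [h2]
          -- first mixture on A ∪ C
          set dc := fun x : X => if x = c then (1:ℝ) else 0 with hdc
          have hdc0 : ∀ x, 0 ≤ dc x := by
            intro x; rw [hdc]; dsimp only; split_ifs <;> norm_num
          set p1 := fun x : X => (1-s) * q1 x + s * dc x with hp1
          have hp10 : ∀ x, 0 ≤ p1 x := by
            intro x
            show 0 ≤ (1-s) * q1 x + s * dc x
            exact add_nonneg (mul_nonneg (by linarith [hs1] : (0:ℝ) ≤ 1-s) (hq10 x))
              (mul_nonneg hs0 (hdc0 x))
          have hp1supp : ∀ x, p1 x ≠ 0 → x ∈ A ∪ C := by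
            intro x hx
            by_contra h
            apply hx
            have hxc : x ≠ c := fun he => h (he ▸ Finset.mem_union_right _ hc)
            have hq1x : q1 x = 0 := by
              by_contra h'
              exact h (hq1suppAC x h')
            rw [hp1]; dsimp only; rw [hq1x, hdc]; dsimp only; rw [if_neg hxc]; ring
          have hp1sumU : ∑ x ∈ U, p1 x = 1 := by
            rw [hp1]
            rw [Finset.sum_add_distrib, ← Finset.mul_sum, ← Finset.mul_sum, hq1sum, hdc]
            rw [Finset.sum_ite_eq' U c (fun _ => (1:ℝ)), if_pos hcU]
            ring
          have hp1sum : ∑ x ∈ A ∪ C, p1 x = 1 := by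
            rw [sum_extend hp1supp hACU]; exact hp1sumU
          have hZ1 : Zb t (A ∪ C) p1 p1 = (1-s)^2*z + 2*s*(1-s)*u + s^2 := by
            have e1 : Zb t (A ∪ C) p1 p1 = Zb t U p1 p1 := Zb_extend hp1supp hp1supp hACU
            rw [e1, hp1, Zb_expand t U q1 dc (1-s) s, hdc,
              Zb_delta_right t U hcU q1, Zb_delta_delta t U hcU hcU, Kern_self,
              ← hz, ← hu]
            ring
          have hZ1pos : 0 < Zb t (A ∪ C) p1 p1 := Zb_pos hp10 hp1sum
          have hmem1 : (Zb t (A ∪ C) p1 p1)⁻¹ ∈ probSet t (A ∪ C) :=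
            mem_probSet hp10 hp1supp hp1sum
          have hle1 : (Zb t (A ∪ C) p1 p1)⁻¹ ≤ Dfin t (A ∪ C) := le_Dfin hACne hmem1
          have hD1inv : (Dfin t (A ∪ C))⁻¹ ≤ (1-s)^2*z + 2*s*(1-s)*u + s^2 := by
            have h := inv_le_of_inv_le' hZ1pos hle1
            rwa [hZ1] at h
          have hZspos : 0 < (1-s)^2*z + 2*s*(1-s)*u + s^2 := hZ1 ▸ hZ1pos
          -- second mixture on B ∪ C
          set p2 := fun x : X => (1-s2) * r1 x + s2 * dc x with hp2
          have hp20 : ∀ x, 0 ≤ p2 x := by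
            intro x
            show 0 ≤ (1-s2) * r1 x + s2 * dc x
            exact add_nonneg (mul_nonneg (by linarith [hs21] : (0:ℝ) ≤ 1-s2) (hr10 x))
              (mul_nonneg hs20 (hdc0 x))
          have hp2supp : ∀ x, p2 x ≠ 0 → x ∈ B ∪ C := by
            intro x hx
            by_contra h
            apply hx
            have hxc : x ≠ c := fun he => h (he ▸ Finset.mem_union_right _ hc)
            have hr1x : r1 x = 0 := by
              by_contra h'
              exact h (hr1suppBC x h')
            rw [hp2]; dsimp only; rw [hr1x, hdc]; dsimp only; rw [if_neg hxc]; ring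
          have hp2sumU : ∑ x ∈ U, p2 x = 1 := by
            rw [hp2]
            rw [Finset.sum_add_distrib, ← Finset.mul_sum, ← Finset.mul_sum, hr1sum, hdc]
            rw [Finset.sum_ite_eq' U c (fun _ => (1:ℝ)), if_pos hcU]
            ring
          have hp2sum : ∑ x ∈ B ∪ C, p2 x = 1 := by
            rw [sum_extend hp2supp hBCU]; exact hp2sumU
          have hZ2 : Zb t (B ∪ C) p2 p2 = (1-s2)^2*w + 2*s2*(1-s2)*v + s2^2 := by
            have e1 : Zb t (B ∪ C) p2 p2 = Zb t U p2 p2 := Zb_extend hp2supp hp2supp hBCU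
            rw [e1, hp2, Zb_expand t U r1 dc (1-s2) s2, hdc,
              Zb_delta_right t U hcU r1, Zb_delta_delta t U hcU hcU, Kern_self,
              ← hw, ← hv]
            ring
          have hZ2pos : 0 < Zb t (B ∪ C) p2 p2 := Zb_pos hp20 hp2sum
          have hmem2 : (Zb t (B ∪ C) p2 p2)⁻¹ ∈ probSet t (B ∪ C) :=
            mem_probSet hp20 hp2supp hp2sum
          have hle2 : (Zb t (B ∪ C) p2 p2)⁻¹ ≤ Dfin t (B ∪ C) := le_Dfin hBCne hmem2
          have hD2inv : (Dfin t (B ∪ C))⁻¹ ≤ (1-s2)^2*w + 2*s2*(1-s2)*v + s2^2 := by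
            have h := inv_le_of_inv_le' hZ2pos hle2
            rwa [hZ2] at h
          -- combine
          have hprod : (Dfin t (A ∪ C))⁻¹ * (Dfin t (B ∪ C))⁻¹ ≤ Zb t U p p := by
            calc (Dfin t (A ∪ C))⁻¹ * (Dfin t (B ∪ C))⁻¹
                ≤ ((1-s)^2*z + 2*s*(1-s)*u + s^2) * ((1-s2)^2*w + 2*s2*(1-s2)*v + s2^2) :=
                  mul_le_mul hD1inv hD2inv (inv_pos.mpr hD2pos).le hZspos.le
            _ ≤ a^2*z + 2*a*b*(u*v) + b^2*w := hkey
            _ ≤ Zb t U p p := hZpge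
          have hfin : (Zb t U p p)⁻¹ ≤ Dfin t (A ∪ C) * Dfin t (B ∪ C) := by
            refine inv_le_of_inv_le' (mul_pos hD1pos hD2pos) ?_
            rw [mul_inv]
            exact hprod
          rw [hreq']
          exact hfin
end

section
/- Let A and B be nonempty compact subsets of ℝ (with the standard metric) and let t > 0. Then κ^t(A + B) ≥ κ^t(A) + κ^t(B), where A + B = { a + b : a ∈ A, b ∈ B } is the Minkowski sum. Equivalently, D^t(A + B) ≥ D^t(A) + D^t(B) − 1. -/
open scoped Pointwise

/-- The exponentiated metric complexity of a compact (or arbitrary) subset `K`: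
the supremum of `D^t(F)` over finite subsets `F ⊆ K`. -/
noncomputable def Dcpt {X : Type*} [MetricSpace X] (t : ℝ) (K : Set X) : ℝ :=
  sSup { r : ℝ | ∃ F : Finset X, ↑F ⊆ K ∧ r = Dfin t F }

namespace KappaAux

/-- tanh(t d / 2) written with exponentials. -/
noncomputable def gg (t d : ℝ) : ℝ :=
  (1 - Real.exp (-(t * d))) / (1 + Real.exp (-(t * d)))

/-- "magnitude" of a sorted list: 1 + sum of gg over consecutive gaps. -/
noncomputable def Ml (t : ℝ) : List ℝ → ℝ
  | [] => 1
  | [_] => 1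
  | x :: y :: l => gg t (y - x) + Ml t (y :: l)

/-- the weighting function; `gl` is the incoming boundary value (1 at the start). -/
noncomputable def wf (t : ℝ) : ℝ → List ℝ → ℝ → ℝ
  | _, [] => fun _ => 0
  | gl, [x] => fun z => if z = x then (gl + 1) / 2 else 0
  | gl, x :: y :: l => fun z =>
      if z = x then (gl + gg t (y - x)) / 2 else wf t (gg t (y - x)) (y :: l) z

noncomputable def RS (t : ℝ) (p : ℝ → ℝ) (l : List ℝ) (x : ℝ) : ℝ :=
  (l.map fun y => p y * Real.exp (-(t * |x - y|))).sum

noncomputable def LQ (t : ℝ) (p : ℝ → ℝ) (l : List ℝ) : ℝ :=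
  (l.map fun x => p x * RS t p l x).sum

noncomputable def BL (t : ℝ) (p q : ℝ → ℝ) (l : List ℝ) : ℝ :=
  (l.map fun x => p x * RS t q l x).sum

lemma lsum_add (f g : ℝ → ℝ) (l : List ℝ) :
    (l.map fun x => f x + g x).sum = (l.map f).sum + (l.map g).sum := by
  induction l with
  | nil => simp
  | cons a l ih => simp [ih]; ring

lemma lsum_mul (c : ℝ) (f : ℝ → ℝ) (l : List ℝ) :
    (l.map fun x => c * f x).sum = c * (l.map f).sum := by
  induction l with
  | nil => simp
  | cons a l ih => simp [ih]; ring

lemma one_add_exp_pos (x : ℝ) : 0 < 1 + Real.exp x := by positivity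

lemma gg_identity (t d : ℝ) :
    gg t d * (1 + Real.exp (-(t * d))) = 1 - Real.exp (-(t * d)) :=
  div_mul_cancel₀ _ (ne_of_gt (one_add_exp_pos _))

lemma gg_nonneg {t d : ℝ} (h : 0 ≤ t * d) : 0 ≤ gg t d := by
  apply div_nonneg _ (le_of_lt (one_add_exp_pos _))
  have : Real.exp (-(t * d)) ≤ 1 := Real.exp_le_one_iff.mpr (by linarith)
  linarith

lemma gg_le {t d : ℝ} (h : 0 ≤ t * d) : gg t d ≤ t * d := by
  have h1 : Real.exp (-(t * d)) ≤ 1 := Real.exp_le_one_iff.mpr (by linarith)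
  have h2 : 1 - Real.exp (-(t * d)) ≤ t * d := by
    have := Real.add_one_le_exp (-(t * d)); linarith
  calc gg t d ≤ 1 - Real.exp (-(t * d)) := by
        apply div_le_self (by linarith)
        have := Real.exp_pos (-(t * d)); linarith
    _ ≤ t * d := h2

lemma Ml_ge_one (t : ℝ) (ht : 0 < t) :
    ∀ l : List ℝ, l.Pairwise (· < ·) → 1 ≤ Ml t l
  | [] => fun _ => le_refl 1
  | [_] => fun _ => le_refl 1
  | x :: y :: l => fun h => by
      have hxy : x < y := (List.pairwise_cons.mp h).1 y (by simp)
      have ih := Ml_ge_one t ht (y :: l) (List.pairwise_cons.mp h).2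
      have hg : 0 ≤ gg t (y - x) := gg_nonneg (by nlinarith)
      show 1 ≤ gg t (y - x) + Ml t (y :: l)
      linarith

lemma Ml_le_bound (t : ℝ) (ht : 0 < t) :
    ∀ (l : List ℝ) (x c : ℝ), (x :: l).Pairwise (· < ·) → (∀ z ∈ x :: l, z ≤ c) →
      Ml t (x :: l) ≤ 1 + t * (c - x)
  | [], x, c => fun _ hc => by
      have := hc x (by simp)
      show Ml t [x] ≤ 1 + t * (c - x)
      show (1 : ℝ) ≤ 1 + t * (c - x)
      nlinarith
  | y :: l, x, c => fun hs hc => by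
      have hxy : x < y := (List.pairwise_cons.mp hs).1 y (by simp)
      have ih := Ml_le_bound t ht l y c (List.pairwise_cons.mp hs).2
        (fun z hz => hc z (by simp [hz]))
      have hg : gg t (y - x) ≤ t * (y - x) := gg_le (by nlinarith)
      show gg t (y - x) + Ml t (y :: l) ≤ 1 + t * (c - x)
      have : Ml t (y :: l) ≤ 1 + t * (c - y) := ih
      nlinarith

lemma RS_congr {t : ℝ} {p q : ℝ → ℝ} {l : List ℝ} (x : ℝ)
    (h : ∀ y ∈ l, p y = q y) : RS t p l x = RS t q l x := by
  unfold RS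
  congr 1
  exact List.map_congr_left fun y hy => by rw [h y hy]

lemma RS_nil (t : ℝ) (p : ℝ → ℝ) (x : ℝ) : RS t p [] x = 0 := rfl

lemma RS_cons (t : ℝ) (p : ℝ → ℝ) (a : ℝ) (l : List ℝ) (x : ℝ) :
    RS t p (a :: l) x = p a * Real.exp (-(t * |x - a|)) + RS t p l x := by
  simp [RS]

/-- shift the evaluation point of RS to the left of all list entries. -/
lemma RS_shift {t : ℝ} (p : ℝ → ℝ) :
    ∀ (l : List ℝ) (x0 x1 : ℝ), (∀ y ∈ l, x1 ≤ y) → x0 ≤ x1 →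
      RS t p l x0 = Real.exp (-(t * (x1 - x0))) * RS t p l x1
  | [], x0, x1 => fun _ _ => by simp [RS]
  | a :: l, x0, x1 => fun h h01 => by
      have ha : x1 ≤ a := h a (by simp)
      have ih := RS_shift (t := t) p l x0 x1 (fun y hy => h y (by simp [hy])) h01
      rw [RS_cons, RS_cons, ih]
      have e1 : |x0 - a| = a - x0 := by rw [abs_of_nonpos (by linarith)]; ring
      have e2 : |x1 - a| = a - x1 := by rw [abs_of_nonpos (by linarith)]; ring
      rw [e1, e2]
      have : Real.exp (-(t * (a - x0))) =
          Real.exp (-(t * (x1 - x0))) * Real.exp (-(t * (a - x1))) := by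
        rw [← Real.exp_add]; ring_nf
      rw [this]; ring

lemma LQ_cons {t : ℝ} (p : ℝ → ℝ) (x : ℝ) (l : List ℝ) (h : ∀ y ∈ l, x < y) :
    LQ t p (x :: l) = p x * p x + 2 * p x * RS t p l x + LQ t p l := by
  unfold LQ
  rw [List.map_cons, List.sum_cons]
  rw [RS_cons]
  simp only [sub_self, abs_zero, mul_zero, neg_zero, Real.exp_zero, mul_one]
  have hmap : ∀ y ∈ l, p y * RS t p (x :: l) y =
      p x * (p y * Real.exp (-(t * (y - x)))) + p y * RS t p l y := by
    intro y hy
    rw [RS_cons]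
    have : |y - x| = y - x := abs_of_nonneg (by have := h y hy; linarith)
    rw [this]; ring
  rw [List.map_congr_left hmap, lsum_add, lsum_mul]
  have hRS : RS t p l x = (l.map fun y => p y * Real.exp (-(t * (y - x)))).sum := by
    unfold RS
    congr 1
    apply List.map_congr_left
    intro y hy
    have : |x - y| = y - x := by
      rw [abs_of_nonpos (by have := h y hy; linarith)]; ring
    rw [this]
  rw [← hRS]; ring

lemma sq_RS_le_LQ {t : ℝ} (ht : 0 < t) (p : ℝ → ℝ) :
    ∀ (l : List ℝ), l.Pairwise (· < ·) → ∀ x0, (∀ y ∈ l, x0 ≤ y) →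
      RS t p l x0 ^ 2 ≤ LQ t p l
  | [] => fun _ x0 _ => by simp [RS, LQ]
  | x :: l => fun hs x0 h0 => by
      have hlt : ∀ y ∈ l, x < y := (List.pairwise_cons.mp hs).1
      have hx0 : x0 ≤ x := h0 x (by simp)
      have ih := sq_RS_le_LQ ht p l (List.pairwise_cons.mp hs).2 x
        (fun y hy => le_of_lt (hlt y hy))
      rw [LQ_cons p x l hlt]
      have hshift : RS t p (x :: l) x0 =
          Real.exp (-(t * (x - x0))) * RS t p (x :: l) x := by
        apply RS_shift p (x :: l) x0 x _ hx0
        intro y hy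
        rcases List.mem_cons.mp hy with rfl | hy
        · exact le_refl _
        · exact le_of_lt (hlt y hy)
      rw [hshift]
      have hE : Real.exp (-(t * (x - x0))) ≤ 1 :=
        Real.exp_le_one_iff.mpr (by nlinarith)
      have hEpos := Real.exp_pos (-(t * (x - x0)))
      have hhead : RS t p (x :: l) x = p x + RS t p l x := by
        rw [RS_cons]; simp
      rw [hhead]
      have h1 : (Real.exp (-(t * (x - x0))) * (p x + RS t p l x)) ^ 2 ≤
          (p x + RS t p l x) ^ 2 := by
        rw [mul_pow]
        have hE2 : Real.exp (-(t * (x - x0))) ^ 2 ≤ 1 := by nlinarith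
        calc Real.exp (-(t * (x - x0))) ^ 2 * (p x + RS t p l x) ^ 2
            ≤ 1 * (p x + RS t p l x) ^ 2 :=
              mul_le_mul_of_nonneg_right hE2 (sq_nonneg _)
          _ = (p x + RS t p l x) ^ 2 := one_mul _
      nlinarith [ih]

lemma LQ_nonneg {t : ℝ} (ht : 0 < t) (p : ℝ → ℝ) (l : List ℝ)
    (hs : l.Pairwise (· < ·)) : 0 ≤ LQ t p l := by
  cases l with
  | nil => simp [LQ]
  | cons x l =>
      have := sq_RS_le_LQ ht p (x :: l) hs x (by
        intro y hy
        rcases List.mem_cons.mp hy with rfl | hy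
        · exact le_refl _
        · exact le_of_lt ((List.pairwise_cons.mp hs).1 y hy))
      nlinarith [sq_nonneg (RS t p (x :: l) x)]

lemma BL_symm (t : ℝ) (p q : ℝ → ℝ) :
    ∀ l : List ℝ, BL t p q l = BL t q p l
  | [] => rfl
  | a :: l => by
      have ih := BL_symm t p q l
      unfold BL at *
      rw [List.map_cons, List.sum_cons, List.map_cons, List.sum_cons]
      rw [RS_cons, RS_cons]
      simp only [sub_self, abs_zero, mul_zero, neg_zero, Real.exp_zero, mul_one]
      have hmap : ∀ (r s : ℝ → ℝ), ∀ y ∈ l, r y * RS t s (a :: l) y =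
          s a * (r y * Real.exp (-(t * |y - a|))) + r y * RS t s l y := by
        intro r s y hy
        rw [RS_cons]; ring
      rw [List.map_congr_left (hmap p q), List.map_congr_left (hmap q p),
        lsum_add, lsum_add, lsum_mul, lsum_mul]
      have habs : ∀ r : ℝ → ℝ, (l.map fun y => r y * Real.exp (-(t * |y - a|))).sum
          = RS t r l a := by
        intro r
        unfold RS
        congr 1
        apply List.map_congr_left
        intro y _
        rw [abs_sub_comm]
      rw [habs p, habs q, ih]
      ring

lemma RS_linear (t : ℝ) (p q : ℝ → ℝ) (c : ℝ) (l : List ℝ) (x : ℝ) :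
    RS t (fun z => p z + c * q z) l x = RS t p l x + c * RS t q l x := by
  unfold RS
  rw [← lsum_mul, ← lsum_add]
  congr 1
  apply List.map_congr_left
  intro y _
  ring

lemma LQ_expand (t : ℝ) (p q : ℝ → ℝ) (c : ℝ) (l : List ℝ) :
    LQ t (fun z => p z + c * q z) l =
      LQ t p l + 2 * c * BL t p q l + c ^ 2 * LQ t q l := by
  have hBL : BL t q p l = BL t p q l := BL_symm t q p l
  unfold LQ BL at *
  have hmap : ∀ y ∈ l, (p y + c * q y) * RS t (fun z => p z + c * q z) l y =
      (p y * RS t p l y + c * (p y * RS t q l y)) +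
      (c * (q y * RS t p l y) + c * (c * (q y * RS t q l y))) := by
    intro y _
    rw [RS_linear]; ring
  rw [List.map_congr_left hmap, lsum_add, lsum_add, lsum_add, lsum_mul, lsum_mul,
    lsum_mul, lsum_mul]
  rw [hBL]
  ring

lemma cauchy_schwarz {t : ℝ} (ht : 0 < t) (p q : ℝ → ℝ) (l : List ℝ)
    (hs : l.Pairwise (· < ·)) : BL t p q l ^ 2 ≤ LQ t p l * LQ t q l := by
  have h : ∀ x : ℝ, 0 ≤ LQ t q l * (x * x) + (2 * BL t p q l) * x + LQ t p l := by
    intro x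
    have := LQ_nonneg ht (fun z => p z + x * q z) l hs
    rw [LQ_expand t p q x l] at this
    nlinarith
  have := discrim_le_zero h
  unfold discrim at this
  nlinarith

lemma wf_zero (t : ℝ) :
    ∀ (l : List ℝ) (gl z : ℝ), z ∉ l → wf t gl l z = 0
  | [], _, _ => fun _ => rfl
  | [x], gl, z => fun hz => by
      have : z ≠ x := by simpa using hz
      simp [wf, this]
  | x :: y :: l, gl, z => fun hz => by
      have h1 : z ≠ x := fun h => hz (h ▸ List.mem_cons_self)
      have h2 : z ∉ y :: l := fun h => hz (List.mem_cons_of_mem _ h)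
      have ih := wf_zero t (y :: l) (gg t (y - x)) z h2
      simp [wf, h1, ih]

lemma wf_nonneg {t : ℝ} (ht : 0 < t) :
    ∀ (l : List ℝ) (gl z : ℝ), l.Pairwise (· < ·) → 0 ≤ gl → 0 ≤ wf t gl l z
  | [], _, _ => fun _ _ => le_refl 0
  | [x], gl, z => fun _ hgl => by
      by_cases h : z = x <;> simp [wf, h] <;> linarith
  | x :: y :: l, gl, z => fun hs hgl => by
      have hxy : x < y := (List.pairwise_cons.mp hs).1 y (by simp)
      have hg : 0 ≤ gg t (y - x) := gg_nonneg (by nlinarith)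
      have ih := wf_nonneg ht (y :: l) (gg t (y - x)) z (List.pairwise_cons.mp hs).2 hg
      by_cases h : z = x <;> simp [wf, h]
      · linarith
      · exact ih

lemma wf_agree {t gl : ℝ} {x y : ℝ} {l : List ℝ} (h : ∀ z ∈ y :: l, x < z) :
    ∀ z ∈ y :: l, wf t gl (x :: y :: l) z = wf t (gg t (y - x)) (y :: l) z := by
  intro z hz
  have : z ≠ x := ne_of_gt (h z hz)
  simp [wf, this]

lemma wf_sum (t : ℝ) :
    ∀ (l : List ℝ) (x gl : ℝ), (x :: l).Pairwise (· < ·) →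
      ((x :: l).map (wf t gl (x :: l))).sum = (gl - 1) / 2 + Ml t (x :: l)
  | [], x, gl => fun _ => by simp [wf, Ml]; ring
  | y :: l, x, gl => fun hs => by
      have hlt : ∀ z ∈ y :: l, x < z := (List.pairwise_cons.mp hs).1
      have ih := wf_sum t l y (gg t (y - x)) (List.pairwise_cons.mp hs).2
      rw [List.map_cons, List.sum_cons]
      rw [List.map_congr_left (wf_agree hlt), ih]
      have hx : wf t gl (x :: y :: l) x = (gl + gg t (y - x)) / 2 := by simp [wf]
      have hMl : Ml t (x :: y :: l) = gg t (y - x) + Ml t (y :: l) := rfl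
      rw [hx, hMl]; ring

lemma wf_row {t : ℝ} (ht : 0 < t) :
    ∀ (l : List ℝ) (x gl : ℝ), (x :: l).Pairwise (· < ·) →
      ∀ z ∈ x :: l, RS t (wf t gl (x :: l)) (x :: l) z =
        1 + Real.exp (-(t * (z - x))) * (gl - 1) / 2
  | [], x, gl => fun _ z hz => by
      have : z = x := by simpa using hz
      subst this
      simp [RS, wf]
      ring
  | y :: l, x, gl => fun hs z hz => by
      have hlt : ∀ w ∈ y :: l, x < w := (List.pairwise_cons.mp hs).1
      have hxy : x < y := hlt y (by simp)
      have hstail := (List.pairwise_cons.mp hs).2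
      set g' := gg t (y - x) with hg'
      set u := Real.exp (-(t * (y - x))) with hu
      have hid : g' * (1 + u) = 1 - u := gg_identity t (y - x)
      have hcongr : RS t (wf t gl (x :: y :: l)) (y :: l) z
          = RS t (wf t g' (y :: l)) (y :: l) z := RS_congr z (wf_agree hlt)
      have hwx : wf t gl (x :: y :: l) x = (gl + g') / 2 := by simp [wf, hg']
      rw [RS_cons, hcongr, hwx]
      rcases List.mem_cons.mp hz with rfl | hz2
      · -- z = x
        have hshift : RS t (wf t g' (y :: l)) (y :: l) z =
            u * RS t (wf t g' (y :: l)) (y :: l) y := by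
          rw [hu]
          exact RS_shift _ (y :: l) z y
            (fun w hw => by
              rcases List.mem_cons.mp hw with rfl | hw
              · exact le_refl _
              · exact le_of_lt ((List.pairwise_cons.mp hstail).1 w hw))
            (le_of_lt hxy)
        have hihy := wf_row ht l y g' hstail y (by simp)
        rw [hshift, hihy]
        simp only [sub_self, abs_zero, mul_zero, neg_zero, Real.exp_zero, one_mul, mul_one]
        linear_combination hid / 2
      · -- z ∈ y :: l
        have hih := wf_row ht l y g' hstail z hz2
        have hxz : x < z := hlt z hz2
        have hyz : y ≤ z := by
          rcases List.mem_cons.mp hz2 with rfl | hz3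
          · exact le_refl _
          · exact le_of_lt ((List.pairwise_cons.mp hstail).1 z hz3)
        have habs : |z - x| = z - x := abs_of_nonneg (by linarith)
        have hsplit : Real.exp (-(t * (z - x))) =
            Real.exp (-(t * (z - y))) * u := by
          rw [hu, ← Real.exp_add]; ring_nf
        rw [hih, habs, hsplit]
        linear_combination (Real.exp (-(t * (z - y))) / 2) * hid

lemma RS_smul (t c : ℝ) (p : ℝ → ℝ) (l : List ℝ) (x : ℝ) :
    RS t (fun z => c * p z) l x = c * RS t p l x := by
  unfold RS
  rw [← lsum_mul]
  congr 1
  apply List.map_congr_left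
  intro y _
  ring

lemma LQ_smul (t c : ℝ) (p : ℝ → ℝ) (l : List ℝ) :
    LQ t (fun z => c * p z) l = c ^ 2 * LQ t p l := by
  unfold LQ
  rw [← lsum_mul]
  congr 1
  apply List.map_congr_left
  intro y _
  rw [RS_smul]
  ring

lemma sum_sort (F : Finset ℝ) (f : ℝ → ℝ) :
    ∑ x ∈ F, f x = ((F.sort (· ≤ ·)).map f).sum := by
  rw [← Finset.sum_map_toList]
  exact (((Finset.sort_perm_toList (r := (· ≤ ·)) (s := F)).map f).sum_eq).symm

lemma double_sum (t : ℝ) (p : ℝ → ℝ) (F : Finset ℝ) :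
    ∑ x ∈ F, ∑ y ∈ F, p x * p y * Real.exp (-(t * dist x y)) =
      LQ t p (F.sort (· ≤ ·)) := by
  rw [sum_sort F (fun x => ∑ y ∈ F, p x * p y * Real.exp (-(t * dist x y)))]
  unfold LQ
  congr 1
  apply List.map_congr_left
  intro x _
  rw [sum_sort F (fun y => p x * p y * Real.exp (-(t * dist x y)))]
  unfold RS
  rw [← lsum_mul]
  congr 1
  apply List.map_congr_left
  intro y _
  rw [Real.dist_eq]
  ring

lemma Dfin_eq {t : ℝ} (ht : 0 < t) (F : Finset ℝ) :
    Dfin t F = Ml t (F.sort (· ≤ ·)) := by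
  by_cases hF : F.Nonempty
  · have hsort : (F.sort (· ≤ ·)).Pairwise (· < ·) := (Finset.sortedLT_sort F).pairwise
    have hne : F.sort (· ≤ ·) ≠ [] := by
      obtain ⟨x, hx⟩ := hF
      exact List.ne_nil_of_mem ((Finset.mem_sort _).mpr hx)
    obtain ⟨x0, l0, hl⟩ := List.exists_cons_of_ne_nil hne
    set l := F.sort (· ≤ ·) with hldef
    set M := Ml t l with hMdef
    have hM1 : 1 ≤ M := Ml_ge_one t ht l hsort
    set w := wf t 1 l with hwdef
    have hrow : ∀ z ∈ l, RS t w l z = 1 := by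
      intro z hz
      have := wf_row ht l0 x0 1 (hl ▸ hsort) z (hl ▸ hz)
      rw [hwdef, hl, this]
      ring
    have hwsum : (l.map w).sum = M := by
      have := wf_sum t l0 x0 1 (hl ▸ hsort)
      rw [hwdef, hMdef, hl, this]
      ring
    have hLQw : LQ t w l = M := by
      unfold LQ
      rw [List.map_congr_left (fun x hx => by rw [hrow x hx, mul_one] :
        ∀ x ∈ l, w x * RS t w l x = w x)]
      exact hwsum
    have hMpos : (0:ℝ) < M := by linarith
    have upper : ∀ r ∈ { r : ℝ | ∃ p : ℝ → ℝ, (∀ x, 0 ≤ p x) ∧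
        (∀ x, p x ≠ 0 → x ∈ F) ∧ (∑ x ∈ F, p x) = 1 ∧
        r = (∑ x ∈ F, ∑ y ∈ F, p x * p y * Real.exp (-(t * dist x y)))⁻¹ },
        r ≤ M := by
      rintro r ⟨p, hp0, hsupp, hsum, rfl⟩
      have hbl : BL t p w l = 1 := by
        unfold BL
        rw [List.map_congr_left (fun x hx => by rw [hrow x hx, mul_one] :
          ∀ x ∈ l, p x * RS t w l x = p x)]
        rw [← sum_sort]
        exact hsum
      have hcs := cauchy_schwarz ht p w l hsort
      rw [hbl, hLQw] at hcs
      have hcs' : 1 ≤ LQ t p l * M := by nlinarith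
      have hpos : 0 < LQ t p l := by
        by_contra hcon
        push_neg at hcon
        nlinarith
      rw [double_sum]
      have key : (LQ t p l)⁻¹ * (LQ t p l * M) = M := by field_simp
      calc (LQ t p l)⁻¹ = (LQ t p l)⁻¹ * 1 := (mul_one _).symm
        _ ≤ (LQ t p l)⁻¹ * (LQ t p l * M) :=
            mul_le_mul_of_nonneg_left hcs' (inv_nonneg.mpr hpos.le)
        _ = M := key
    have member : M ∈ { r : ℝ | ∃ p : ℝ → ℝ, (∀ x, 0 ≤ p x) ∧
        (∀ x, p x ≠ 0 → x ∈ F) ∧ (∑ x ∈ F, p x) = 1 ∧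
        r = (∑ x ∈ F, ∑ y ∈ F, p x * p y * Real.exp (-(t * dist x y)))⁻¹ } := by
      refine ⟨fun z => M⁻¹ * w z, ?_, ?_, ?_, ?_⟩
      · intro z
        exact mul_nonneg (inv_nonneg.mpr hMpos.le)
          (wf_nonneg ht l 1 z hsort zero_le_one)
      · intro z hz
        by_contra hzF
        have hnl : z ∉ l := fun h => hzF ((Finset.mem_sort _).mp h)
        have h0 : wf t 1 l z = 0 := wf_zero t l 1 z hnl
        simp only [hwdef, h0, mul_zero] at hz
        exact hz rfl
      · rw [sum_sort F (fun z => M⁻¹ * w z), lsum_mul, hwsum]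
        exact inv_mul_cancel₀ (ne_of_gt hMpos)
      · rw [double_sum t (fun z => M⁻¹ * w z) F]
        rw [LQ_smul t M⁻¹ w l, hLQw]
        rw [show M⁻¹ ^ 2 * M = M⁻¹ by field_simp, inv_inv]
    unfold Dfin
    rw [if_pos hF]
    exact IsGreatest.csSup_eq ⟨member, upper⟩
  · rw [Finset.not_nonempty_iff_eq_empty] at hF
    subst hF
    simp [Dfin, Ml, Finset.sort_empty]

lemma Ml_append (t : ℝ) : ∀ (l : List ℝ) (a : ℝ) (l₂ : List ℝ),
    Ml t (l ++ a :: l₂) = Ml t (l ++ [a]) + Ml t (a :: l₂) - 1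
  | [], a, l₂ => by
      show Ml t (a :: l₂) = 1 + Ml t (a :: l₂) - 1
      ring
  | [c], a, l₂ => by
      show gg t (a - c) + Ml t (a :: l₂) = (gg t (a - c) + 1) + Ml t (a :: l₂) - 1
      ring
  | c :: d :: l', a, l₂ => by
      have ih : Ml t (d :: (l' ++ a :: l₂)) =
          Ml t (d :: (l' ++ [a])) + Ml t (a :: l₂) - 1 := Ml_append t (d :: l') a l₂
      show gg t (d - c) + Ml t (d :: (l' ++ a :: l₂)) =
        (gg t (d - c) + Ml t (d :: (l' ++ [a]))) + Ml t (a :: l₂) - 1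
      linarith

lemma Ml_map_addl (t c : ℝ) : ∀ l : List ℝ, Ml t (l.map (fun z => c + z)) = Ml t l
  | [] => rfl
  | [_] => rfl
  | x :: y :: l => by
      have ih := Ml_map_addl t c (y :: l)
      show gg t ((c + y) - (c + x)) + Ml t ((y :: l).map (fun z => c + z)) =
        gg t (y - x) + Ml t (y :: l)
      rw [ih, show (c + y) - (c + x) = y - x by ring]

lemma Ml_map_addr (t c : ℝ) : ∀ l : List ℝ, Ml t (l.map (fun z => z + c)) = Ml t l
  | [] => rfl
  | [_] => rfl
  | x :: y :: l => by
      have ih := Ml_map_addr t c (y :: l)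
      show gg t ((y + c) - (x + c)) + Ml t ((y :: l).map (fun z => z + c)) =
        gg t (y - x) + Ml t (y :: l)
      rw [ih, show (y + c) - (x + c) = y - x by ring]

lemma le_getLast : ∀ (l : List ℝ), l.Pairwise (· < ·) → ∀ (hne : l ≠ []),
    ∀ x ∈ l, x ≤ l.getLast hne
  | [], _, hne => absurd rfl hne
  | [a], _, _ => fun x hx => by
      have : x = a := by simpa using hx
      simp [this]
  | a :: b :: l, hs, _ => fun x hx => by
      have htail := le_getLast (b :: l) (List.pairwise_cons.mp hs).2 (by simp)
      rw [List.getLast_cons (by simp : (b :: l) ≠ [])]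
      rcases List.mem_cons.mp hx with rfl | hx2
      · have hab : x < b := (List.pairwise_cons.mp hs).1 b (by simp)
        exact le_trans (le_of_lt hab) (htail b (by simp))
      · exact htail x hx2

lemma chain_key {t : ℝ} (ht : 0 < t) (A B : Set ℝ) (F G : Finset ℝ)
    (hF : F.Nonempty) (hG : G.Nonempty) (hFA : ↑F ⊆ A) (hGB : ↑G ⊆ B) :
    ∃ C : Finset ℝ, ↑C ⊆ A + B ∧ Dfin t F + Dfin t G - 1 ≤ Dfin t C := by
  classical
  set lF := F.sort (· ≤ ·) with hlFdef
  set lG := G.sort (· ≤ ·) with hlGdef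
  have hsF : lF.Pairwise (· < ·) := (Finset.sortedLT_sort F).pairwise
  have hsG : lG.Pairwise (· < ·) := (Finset.sortedLT_sort G).pairwise
  have hneF : lF ≠ [] := by
    obtain ⟨x, hx⟩ := hF
    exact List.ne_nil_of_mem ((Finset.mem_sort _).mpr hx)
  have hneG : lG ≠ [] := by
    obtain ⟨x, hx⟩ := hG
    exact List.ne_nil_of_mem ((Finset.mem_sort _).mpr hx)
  obtain ⟨a, lF', hlF⟩ := List.exists_cons_of_ne_nil hneF
  set bm := lG.getLast hneG with hbm
  set L : List ℝ := lG.map (fun z => a + z) ++ lF'.map (fun z => z + bm) with hLdef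
  have haL : a ∈ lF := by rw [hlF]; simp
  have haF : a ∈ F := (Finset.mem_sort (α := ℝ) (· ≤ ·)).mp (hlFdef ▸ haL)
  have hbmL : bm ∈ lG := List.getLast_mem hneG
  have hbmG : bm ∈ G := (Finset.mem_sort (α := ℝ) (· ≤ ·)).mp (hlGdef ▸ hbmL)
  have haltF' : ∀ f ∈ lF', a < f := by
    intro f hf
    have := hlF ▸ hsF
    exact (List.pairwise_cons.mp this).1 f hf
  have hsortL : L.Pairwise (· < ·) := by
    rw [hLdef, List.pairwise_append]
    refine ⟨hsG.map _ (fun x y hxy => by simpa using hxy), ?_, ?_⟩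
    · have hsF' : lF'.Pairwise (· < ·) := by
        have := hlF ▸ hsF
        exact (List.pairwise_cons.mp this).2
      exact hsF'.map _ (fun x y hxy => by simpa using hxy)
    · intro u hu v hv
      obtain ⟨g, hg, rfl⟩ := List.mem_map.mp hu
      obtain ⟨f, hf, rfl⟩ := List.mem_map.mp hv
      have h1 : g ≤ bm := le_getLast lG hsG hneG g hg
      have h2 : a < f := haltF' f hf
      linarith
  have hnodup : L.Nodup := hsortL.nodup
  refine ⟨L.toFinset, ?_, ?_⟩
  · intro z hz
    have hzL : z ∈ L := by
      simpa using hz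
    rcases List.mem_append.mp hzL with h | h
    · obtain ⟨g, hg, rfl⟩ := List.mem_map.mp h
      have hgG : g ∈ G := (Finset.mem_sort (α := ℝ) (· ≤ ·)).mp (hlGdef ▸ hg)
      exact Set.add_mem_add (hFA haF) (hGB hgG)
    · obtain ⟨f, hf, rfl⟩ := List.mem_map.mp h
      have hfL : f ∈ lF := by rw [hlF]; simp [hf]
      have hfF : f ∈ F := (Finset.mem_sort (α := ℝ) (· ≤ ·)).mp (hlFdef ▸ hfL)
      exact Set.add_mem_add (hFA hfF) (hGB hbmG)
  · have hCsort : L.toFinset.sort (· ≤ ·) = L :=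
      (List.toFinset_sort (· ≤ ·) hnodup).mpr (hsortL.imp le_of_lt)
    rw [Dfin_eq ht F, Dfin_eq ht G, Dfin_eq ht L.toFinset, hCsort,
      ← hlFdef, ← hlGdef]
    have hdecomp : lG = lG.dropLast ++ [bm] := (List.dropLast_append_getLast hneG).symm
    have hL2 : L = (lG.dropLast.map (fun z => a + z)) ++
        ((a + bm) :: lF'.map (fun z => z + bm)) := by
      rw [hLdef]
      conv_lhs => rw [hdecomp]
      simp
    have e1 : Ml t ((lG.dropLast.map (fun z => a + z)) ++ [a + bm]) = Ml t lG := by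
      have : (lG.dropLast.map (fun z => a + z)) ++ [a + bm] =
          lG.map (fun z => a + z) := by
        conv_rhs => rw [hdecomp]
        simp
      rw [this, Ml_map_addl]
    have e2 : Ml t ((a + bm) :: lF'.map (fun z => z + bm)) = Ml t lF := by
      have : (a + bm) :: lF'.map (fun z => z + bm) = lF.map (fun z => z + bm) := by
        rw [hlF]; simp
      rw [this, Ml_map_addr]
    rw [hL2, Ml_append, e1, e2]
    linarith


lemma Dfin_singleton {t : ℝ} (ht : 0 < t) (x : ℝ) : Dfin t ({x} : Finset ℝ) = 1 := by
  rw [Dfin_eq ht, Finset.sort_singleton]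
  rfl

lemma Dfin_empty {t : ℝ} (ht : 0 < t) : Dfin t (∅ : Finset ℝ) = 1 := by
  rw [Dfin_eq ht, Finset.sort_empty]
  rfl

end KappaAux

open KappaAux

/-- Superadditivity of κ^t under Minkowski summation on the real line
(a generalization of the Cauchy–Davenport inequality):
κ^t(A + B) ≥ κ^t(A) + κ^t(B) for nonempty compact A, B ⊆ ℝ. -/
theorem kappa_minkowski_superadditive (t : ℝ) (ht : 0 < t)
    (A B : Set ℝ) (hA : A.Nonempty) (hB : B.Nonempty)
    (hAc : IsCompact A) (hBc : IsCompact B) :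
    (Dcpt t A - 1) + (Dcpt t B - 1) ≤ Dcpt t (A + B) - 1 := by
  classical
  obtain ⟨a₀, ha₀⟩ := hA
  obtain ⟨b₀, hb₀⟩ := hB
  have hABc : IsCompact (A + B) := hAc.add hBc
  obtain ⟨b1, hb1⟩ := hABc.bddAbove
  obtain ⟨a1, ha1⟩ := hABc.bddBelow
  have hab0 : a₀ + b₀ ∈ A + B := Set.add_mem_add ha₀ hb₀
  have ha1b1 : a1 ≤ b1 := le_trans (ha1 hab0) (hb1 hab0)
  have hbdd : BddAbove { r : ℝ | ∃ F : Finset ℝ, ↑F ⊆ A + B ∧ r = Dfin t F } := by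
    refine ⟨1 + t * (b1 - a1), ?_⟩
    rintro r ⟨F, hFsub, rfl⟩
    by_cases hF : F.Nonempty
    · rw [Dfin_eq ht]
      have hne : F.sort (· ≤ ·) ≠ [] := by
        obtain ⟨x, hx⟩ := hF
        exact List.ne_nil_of_mem ((Finset.mem_sort _).mpr hx)
      obtain ⟨x, l0, hl⟩ := List.exists_cons_of_ne_nil hne
      have hsort := (Finset.sortedLT_sort F).pairwise
      have hmemAB : ∀ z ∈ x :: l0, z ∈ A + B := by
        intro z hz
        exact hFsub ((Finset.mem_sort (α := ℝ) (· ≤ ·)).mp (hl ▸ hz))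
      rw [hl] at hsort ⊢
      have hle := Ml_le_bound t ht l0 x b1 hsort (fun z hz => hb1 (hmemAB z hz))
      have hxa1 : a1 ≤ x := ha1 (hmemAB x (by simp))
      nlinarith
    · rw [Finset.not_nonempty_iff_eq_empty] at hF
      subst hF
      rw [Dfin_empty ht]
      nlinarith
  have step2 : ∀ r ∈ { r : ℝ | ∃ F : Finset ℝ, ↑F ⊆ A ∧ r = Dfin t F },
      ∀ s ∈ { r : ℝ | ∃ F : Finset ℝ, ↑F ⊆ B ∧ r = Dfin t F },
      r + s ≤ sSup { r : ℝ | ∃ F : Finset ℝ, ↑F ⊆ A + B ∧ r = Dfin t F } + 1 := by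
    rintro r ⟨F, hFsub, rfl⟩ s ⟨G, hGsub, rfl⟩
    obtain ⟨F', hF'ne, hF'sub, hF'eq⟩ :
        ∃ F' : Finset ℝ, F'.Nonempty ∧ ↑F' ⊆ A ∧ Dfin t F = Dfin t F' := by
      by_cases hF : F.Nonempty
      · exact ⟨F, hF, hFsub, rfl⟩
      · rw [Finset.not_nonempty_iff_eq_empty] at hF
        subst hF
        exact ⟨{a₀}, Finset.singleton_nonempty _, by simpa using ha₀,
          by rw [Dfin_empty ht, Dfin_singleton ht]⟩
    obtain ⟨G', hG'ne, hG'sub, hG'eq⟩ :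
        ∃ G' : Finset ℝ, G'.Nonempty ∧ ↑G' ⊆ B ∧ Dfin t G = Dfin t G' := by
      by_cases hG : G.Nonempty
      · exact ⟨G, hG, hGsub, rfl⟩
      · rw [Finset.not_nonempty_iff_eq_empty] at hG
        subst hG
        exact ⟨{b₀}, Finset.singleton_nonempty _, by simpa using hb₀,
          by rw [Dfin_empty ht, Dfin_singleton ht]⟩
    obtain ⟨C, hCsub, hCle⟩ := chain_key ht A B F' G' hF'ne hG'ne hF'sub hG'sub
    have hCS : Dfin t C ≤
        sSup { r : ℝ | ∃ F : Finset ℝ, ↑F ⊆ A + B ∧ r = Dfin t F } :=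
      le_csSup hbdd ⟨C, hCsub, rfl⟩
    rw [hF'eq, hG'eq]
    linarith
  have hSAne : { r : ℝ | ∃ F : Finset ℝ, ↑F ⊆ A ∧ r = Dfin t F }.Nonempty :=
    ⟨Dfin t (∅ : Finset ℝ), ∅, by simp, rfl⟩
  have hSBne : { r : ℝ | ∃ F : Finset ℝ, ↑F ⊆ B ∧ r = Dfin t F }.Nonempty :=
    ⟨Dfin t (∅ : Finset ℝ), ∅, by simp, rfl⟩
  have h1 : ∀ r ∈ { r : ℝ | ∃ F : Finset ℝ, ↑F ⊆ A ∧ r = Dfin t F },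
      sSup { r : ℝ | ∃ F : Finset ℝ, ↑F ⊆ B ∧ r = Dfin t F } ≤
      sSup { r : ℝ | ∃ F : Finset ℝ, ↑F ⊆ A + B ∧ r = Dfin t F } + 1 - r :=
    fun r hr => csSup_le hSBne (fun s hs => by have := step2 r hr s hs; linarith)
  have h2 : sSup { r : ℝ | ∃ F : Finset ℝ, ↑F ⊆ A ∧ r = Dfin t F } ≤
      sSup { r : ℝ | ∃ F : Finset ℝ, ↑F ⊆ A + B ∧ r = Dfin t F } + 1 -
      sSup { r : ℝ | ∃ F : Finset ℝ, ↑F ⊆ B ∧ r = Dfin t F } :=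
    csSup_le hSAne (fun r hr => by have := h1 r hr; linarith)
  unfold Dcpt
  linarith
end

section
/- Let A and B be nonempty compact subsets of ℝ (with the standard metric), let t > 0, and let λ ∈ [0,1]. Then κ^t((1 − λ)·A + λ·B) ≥ (1 − λ)·κ^t(A) + λ·κ^t(B), where (1 − λ)·A + λ·B = { (1 − λ)a + λb : a ∈ A, b ∈ B }. -/
open scoped Pointwise

open Real Finset


/-- `psi u = tanh(u/2)` in algebraic form. -/
noncomputable def psi (u : ℝ) : ℝ := (Real.exp u - 1) / (Real.exp u + 1)

lemma exp_add_one_pos (u : ℝ) : 0 < Real.exp u + 1 := by positivity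

lemma psi_nonneg {u : ℝ} (hu : 0 ≤ u) : 0 ≤ psi u :=
  div_nonneg (by linarith [Real.one_le_exp hu]) (exp_add_one_pos u).le

lemma psi_zero : psi 0 = 0 := by simp [psi]

lemma psi_le {u : ℝ} (hu : 0 ≤ u) : psi u ≤ u := by
  have hE := exp_add_one_pos u
  rw [psi, div_le_iff₀ hE]
  have h1 : (1 - u) * Real.exp u ≤ 1 := by
    have h2 : 1 - u ≤ Real.exp (-u) := by linarith [Real.add_one_le_exp (-u)]
    calc (1 - u) * Real.exp u ≤ Real.exp (-u) * Real.exp u :=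
          mul_le_mul_of_nonneg_right h2 (Real.exp_pos u).le
    _ = 1 := by rw [← Real.exp_add]; simp
  nlinarith [Real.exp_pos u]

lemma hasDerivAt_psi (v : ℝ) : HasDerivAt psi (2 * Real.exp v / (Real.exp v + 1) ^ 2) v := by
  have h1 := Real.hasDerivAt_exp v
  have h : HasDerivAt psi _ v :=
    ((h1.sub_const 1).div (h1.add_const 1) (exp_add_one_pos v).ne')
  convert h using 1
  ring

lemma psi_superhom {c u : ℝ} (hc0 : 0 ≤ c) (hc1 : c ≤ 1) (hu : 0 ≤ u) :
    c * psi u ≤ psi (c * u) := by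
  set f : ℝ → ℝ := fun v => psi (c * v) - c * psi v with hf
  have hder : ∀ v : ℝ, HasDerivAt f
      (c * (2 * Real.exp (c * v) / (Real.exp (c * v) + 1) ^ 2)
        - c * (2 * Real.exp v / (Real.exp v + 1) ^ 2)) v := by
    intro v
    have h1 : HasDerivAt (fun w : ℝ => psi (c * w))
        (c * (2 * Real.exp (c * v) / (Real.exp (c * v) + 1) ^ 2)) v := by
      have := (hasDerivAt_psi (c * v)).comp v ((hasDerivAt_id v).const_mul c)
      simpa [mul_comm, Function.comp_def] using this
    exact h1.sub ((hasDerivAt_psi v).const_mul c)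
  have hdiff : Differentiable ℝ f := fun v => (hder v).differentiableAt
  have hmono : MonotoneOn f (Set.Ici (0:ℝ)) := by
    apply monotoneOn_of_deriv_nonneg (convex_Ici 0) hdiff.continuous.continuousOn
      hdiff.differentiableOn
    intro x hx
    rw [interior_Ici] at hx
    rw [(hder x).deriv]
    have hx0 : (0:ℝ) ≤ x := le_of_lt hx
    have hcx : c * x ≤ x := by nlinarith
    have hE1 : (1:ℝ) ≤ Real.exp (c * x) := Real.one_le_exp (by positivity)
    have hEE : Real.exp (c * x) ≤ Real.exp x := Real.exp_le_exp.2 hcx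
    have key : 2 * Real.exp x / (Real.exp x + 1) ^ 2
        ≤ 2 * Real.exp (c * x) / (Real.exp (c * x) + 1) ^ 2 := by
      rw [div_le_div_iff₀ (by positivity) (by positivity)]
      have hp : 0 ≤ (Real.exp x - Real.exp (c*x)) * (Real.exp x * Real.exp (c*x) - 1) :=
        mul_nonneg (by linarith) (by nlinarith)
      nlinarith [hp]
    have := mul_le_mul_of_nonneg_left key hc0
    linarith
  have h0 : f 0 = 0 := by simp [hf, psi_zero]
  have := hmono (Set.self_mem_Ici) (Set.mem_Ici.2 hu) hu
  rw [h0] at this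
  simpa [hf] using this

namespace KBM

/-- previous value, with convention `prev u 0 = 0`. -/
def prev (u : ℕ → ℝ) (k : ℕ) : ℝ := if k = 0 then 0 else u (k - 1)

lemma tele (u : ℕ → ℝ) (n : ℕ) : ∑ k ∈ range (n+1), (u k - prev u k) = u n := by
  induction n with
  | zero => simp [prev]
  | succ n ih =>
    rw [Finset.sum_range_succ, ih]
    simp [prev]

lemma abel (u q : ℕ → ℝ) (n : ℕ) :
    ∑ k ∈ range n, (u k - prev u k) * (∑ i ∈ Ico k n, q i) = ∑ i ∈ range n, u i * q i := by
  induction n with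
  | zero => simp
  | succ n ih =>
    have h1 : ∀ k ∈ range (n+1),
        (u k - prev u k) * (∑ i ∈ Ico k (n+1), q i)
          = (u k - prev u k) * (∑ i ∈ Ico k n, q i) + (u k - prev u k) * q n := by
      intro k hk
      rw [Finset.sum_Ico_succ_top (Nat.lt_succ_iff.mp (mem_range.1 hk))]
      ring
    rw [Finset.sum_congr rfl h1, Finset.sum_add_distrib, ← Finset.sum_mul, tele,
      Finset.sum_range_succ (fun k => (u k - prev u k) * (∑ i ∈ Ico k n, q i)),
      Ico_self, Finset.sum_empty, mul_zero, add_zero, ih, Finset.sum_range_succ]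

variable (t : ℝ)

noncomputable def hh (x : ℕ → ℝ) (k : ℕ) : ℝ := Real.exp (t * x k)

noncomputable def cc (x : ℕ → ℝ) (k : ℕ) : ℝ := (hh t x k) ^ 2

noncomputable def qq (x p : ℕ → ℝ) (i : ℕ) : ℝ := p i * Real.exp (-(t * x i))

noncomputable def TT (x p : ℕ → ℝ) (n k : ℕ) : ℝ := ∑ i ∈ Ico k n, qq t x p i

noncomputable def Z (x p : ℕ → ℝ) (n : ℕ) : ℝ :=
  ∑ i ∈ range n, ∑ j ∈ range n, p i * p j * Real.exp (-(t * |x i - x j|))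

noncomputable def Kap (x : ℕ → ℝ) (n : ℕ) : ℝ := ∑ k ∈ range (n-1), psi (t * (x (k+1) - x k))

lemma star (x p : ℕ → ℝ) (n : ℕ) (hm : ∀ i j, i ≤ j → j < n → x i ≤ x j) :
    Z t x p n = ∑ k ∈ range n, (cc t x k - prev (cc t x) k) * (TT t x p n k) ^ 2 := by
  induction n with
  | zero => simp [Z]
  | succ n ih =>
    have hmn : ∀ i j, i ≤ j → j < n → x i ≤ x j :=
      fun i j h1 h2 => hm i j h1 (h2.trans (Nat.lt_succ_self n))
    have habel : ∑ k ∈ range n, (cc t x k - prev (cc t x) k) * TT t x p n k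
        = ∑ i ∈ range n, cc t x i * qq t x p i := by
      have := abel (cc t x) (qq t x p) n
      simpa [TT] using this
    -- pointwise: cross terms
    have hcross : ∀ i ∈ range n,
        p i * p n * Real.exp (-(t * |x i - x n|)) = cc t x i * qq t x p i * qq t x p n := by
      intro i hi
      have hle : x i ≤ x n := hm i n (Nat.le_of_lt (mem_range.1 hi)) (Nat.lt_succ_self n)
      rw [abs_sub_comm, abs_of_nonneg (by linarith),
        show (-(t * (x n - x i))) = t * x i - t * x n by ring, Real.exp_sub]
      simp only [cc, hh, qq]
      rw [Real.exp_neg, Real.exp_neg]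
      field_simp
    -- LHS expansion
    have hZ : Z t x p (n+1) = Z t x p n
        + 2 * (qq t x p n * ∑ i ∈ range n, cc t x i * qq t x p i)
        + cc t x n * (qq t x p n)^2 := by
      rw [Z, Finset.sum_range_succ]
      have hrow : ∀ i ∈ range n,
          ∑ j ∈ range (n+1), p i * p j * Real.exp (-(t * |x i - x j|))
            = (∑ j ∈ range n, p i * p j * Real.exp (-(t * |x i - x j|)))
              + cc t x i * qq t x p i * qq t x p n := by
        intro i hi
        rw [Finset.sum_range_succ, hcross i hi]
      rw [Finset.sum_congr rfl hrow, Finset.sum_add_distrib, Finset.sum_range_succ]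
      have hlast : ∀ j ∈ range n,
          p n * p j * Real.exp (-(t * |x n - x j|)) = cc t x j * qq t x p j * qq t x p n := by
        intro j hj
        rw [abs_sub_comm]
        have := hcross j hj
        linarith [hcross j hj, mul_comm (p n) (p j)]
      rw [Finset.sum_congr rfl hlast]
      have hnn : p n * p n * Real.exp (-(t * |x n - x n|)) = cc t x n * (qq t x p n)^2 := by
        simp only [sub_self, abs_zero, mul_zero, neg_zero, Real.exp_zero, cc, hh, qq]
        rw [Real.exp_neg]
        field_simp
      rw [hnn, Z, ← Finset.sum_mul]
      ring
    -- RHS expansion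
    have hT : ∀ k ∈ range (n+1), TT t x p (n+1) k = TT t x p n k + qq t x p n := by
      intro k hk
      rw [TT, Finset.sum_Ico_succ_top (Nat.lt_succ_iff.mp (mem_range.1 hk)), TT]
    have hRHS : ∑ k ∈ range (n+1), (cc t x k - prev (cc t x) k) * (TT t x p (n+1) k) ^ 2
        = (∑ k ∈ range n, (cc t x k - prev (cc t x) k) * (TT t x p n k) ^ 2)
          + 2 * (qq t x p n * ∑ k ∈ range n, (cc t x k - prev (cc t x) k) * TT t x p n k)
          + cc t x n * (qq t x p n)^2 := by
      have h2 : ∀ k ∈ range (n+1),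
          (cc t x k - prev (cc t x) k) * (TT t x p (n+1) k) ^ 2
            = (cc t x k - prev (cc t x) k) * (TT t x p n k) ^ 2
              + 2 * (qq t x p n * ((cc t x k - prev (cc t x) k) * TT t x p n k))
              + (cc t x k - prev (cc t x) k) * (qq t x p n)^2 := by
        intro k hk
        rw [hT k hk]
        ring
      rw [Finset.sum_congr rfl h2, Finset.sum_add_distrib, Finset.sum_add_distrib,
        ← Finset.sum_mul, tele]
      rw [Finset.sum_range_succ (fun k => (cc t x k - prev (cc t x) k) * (TT t x p n k) ^ 2)]
      have hTnn : TT t x p n n = 0 := by rw [TT, Ico_self, Finset.sum_empty]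
      rw [hTnn]
      rw [Finset.sum_range_succ
        (fun k => 2 * (qq t x p n * ((cc t x k - prev (cc t x) k) * TT t x p n k)))]
      rw [hTnn]
      have hfold : ∑ k ∈ range n, 2 * (qq t x p n * ((cc t x k - prev (cc t x) k) * TT t x p n k))
          = 2 * (qq t x p n * ∑ k ∈ range n, (cc t x k - prev (cc t x) k) * TT t x p n k) := by
        rw [Finset.mul_sum, Finset.mul_sum]
      rw [hfold]
      ring
    rw [hZ, hRHS, ih hmn, habel]


noncomputable def bb (x : ℕ → ℝ) (k : ℕ) : ℝ := hh t x k - prev (hh t x) k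

noncomputable def aa (x : ℕ → ℝ) (k : ℕ) : ℝ := cc t x k - prev (cc t x) k

noncomputable def ss (x : ℕ → ℝ) (k : ℕ) : ℝ := hh t x k + prev (hh t x) k

section
variable {t : ℝ} (ht : 0 < t) {x : ℕ → ℝ} {m : ℕ}
  (hsm : ∀ i j, i < j → j < m + 1 → x i < x j)

lemma prev_hh_nonneg {k : ℕ} : 0 ≤ prev (hh t x) k := by
  rcases Nat.eq_zero_or_pos k with h0 | hpos
  · simp [h0, prev]
  · simp only [prev, if_neg (Nat.pos_iff_ne_zero.mp hpos)]
    exact (Real.exp_pos _).le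

lemma prev_cc_eq {k : ℕ} : prev (cc t x) k = (prev (hh t x) k) ^ 2 := by
  rcases Nat.eq_zero_or_pos k with h0 | hpos
  · simp [h0, prev]
  · simp [prev, if_neg (Nat.pos_iff_ne_zero.mp hpos), cc]

include ht hsm

lemma prev_hh_lt {k : ℕ} (hk : k < m + 1) : prev (hh t x) k < hh t x k := by
  rcases Nat.eq_zero_or_pos k with h0 | hpos
  · simp [h0, prev, hh, Real.exp_pos]
  · have hne : k ≠ 0 := Nat.pos_iff_ne_zero.mp hpos
    have hx : x (k-1) < x k := hsm _ _ (Nat.sub_lt hpos one_pos) hk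
    simp only [prev, if_neg hne, hh]
    exact Real.exp_lt_exp.2 (by nlinarith)

lemma bb_pos {k : ℕ} (hk : k < m + 1) : 0 < bb t x k :=
  sub_pos.2 (prev_hh_lt ht hsm hk)

lemma ss_pos {k : ℕ} (hk : k < m + 1) : 0 < ss t x k := by
  have := prev_hh_nonneg (t := t) (x := x) (k := k)
  have := Real.exp_pos (t * x k)
  unfold ss hh at *
  linarith

lemma aa_eq {k : ℕ} : aa t x k = bb t x k * ss t x k := by
  rw [aa, prev_cc_eq, bb, ss, cc]
  ring

lemma aa_pos {k : ℕ} (hk : k < m + 1) : 0 < aa t x k := by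
  rw [aa_eq ht hsm]
  exact mul_pos (bb_pos ht hsm hk) (ss_pos ht hsm hk)

lemma bb_div_ss {k : ℕ} (hk : k < m + 1) : bb t x k / ss t x k = (bb t x k)^2 / aa t x k := by
  rw [aa_eq ht hsm, sq, mul_div_mul_left _ _ (bb_pos ht hsm hk).ne']

lemma Msum : ∑ k ∈ range (m+1), (bb t x k)^2 / aa t x k = 1 + Kap t x (m+1) := by
  rw [Finset.sum_range_succ']
  have h0 : (bb t x 0)^2 / aa t x 0 = 1 := by
    have hp0 : prev (hh t x) 0 = 0 := by simp [prev]
    rw [bb, aa, prev_cc_eq, hp0, sub_zero, cc, hh]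
    norm_num
  rw [h0, Kap]
  simp only [Nat.add_sub_cancel]
  rw [add_comm]
  congr 1
  apply Finset.sum_congr rfl
  intro k hk
  have hk' : k + 1 < m + 1 := by have := mem_range.1 hk; omega
  have ha : (0:ℝ) < hh t x k := Real.exp_pos _
  have hb : hh t x k < hh t x (k+1) :=
    Real.exp_lt_exp.2 (by nlinarith [hsm k (k+1) (Nat.lt_succ_self k) hk'])
  have hprev : prev (hh t x) (k+1) = hh t x k := by simp [prev]
  have hE : Real.exp (t * (x (k+1) - x k)) = hh t x (k+1) / hh t x k := by
    rw [hh, hh, ← Real.exp_sub]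
    congr 1
    ring
  have key : ∀ a b : ℝ, 0 < a → a < b → (b - a)^2 / (b^2 - a^2) = (b/a - 1)/(b/a + 1) := by
    intro a b ha' hab
    have h1 : b^2 - a^2 ≠ 0 := by nlinarith
    have h2 : b / a + 1 ≠ 0 := by
      have : 0 < b / a := div_pos (ha'.trans hab) ha'
      linarith
    have h3 : b + a ≠ 0 := by nlinarith
    field_simp
    ring
  rw [bb, aa, prev_cc_eq, hprev, psi, hE,
    show cc t x (k+1) = hh t x (k+1)^2 from rfl]
  exact key _ _ ha hb

lemma Kap_nonneg : 0 ≤ Kap t x (m+1) := by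
  apply Finset.sum_nonneg
  intro k hk
  have hk' : k + 1 < m + 1 := by
    have := mem_range.1 hk
    simp only [Nat.add_sub_cancel] at this ⊢
    omega
  have : x k < x (k+1) := hsm k (k+1) (Nat.lt_succ_self k) hk'
  exact psi_nonneg (by nlinarith)

omit ht hsm in
lemma tele_Ico (f : ℕ → ℝ) (k n : ℕ) (hkn : k ≤ n) :
    ∑ i ∈ Ico k n, (f i - f (i+1)) = f k - f n := by
  induction n, hkn using Nat.le_induction with
  | base => simp
  | succ n hkn ih => rw [Finset.sum_Ico_succ_top hkn, ih]; ring

lemma upper (p : ℕ → ℝ) (hp : ∀ i, 0 ≤ p i) (hsum : ∑ i ∈ range (m+1), p i = 1) :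
    (Z t x p (m+1))⁻¹ ≤ 1 + Kap t x (m+1) := by
  have hmono : ∀ i j, i ≤ j → j < m+1 → x i ≤ x j := by
    intro i j hij hj
    rcases eq_or_lt_of_le hij with rfl | h
    · exact le_rfl
    · exact (hsm _ _ h hj).le
  have hZ := star t x p (m+1) hmono
  have hone : ∑ k ∈ range (m+1), bb t x k * TT t x p (m+1) k = 1 := by
    have h1 := abel (hh t x) (qq t x p) (m+1)
    have h2 : ∀ i ∈ range (m+1), hh t x i * qq t x p i = p i := by
      intro i _
      rw [hh, qq, mul_comm (p i) _, ← mul_assoc, ← Real.exp_add]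
      simp
    calc ∑ k ∈ range (m+1), bb t x k * TT t x p (m+1) k
        = ∑ i ∈ range (m+1), hh t x i * qq t x p i := by simpa [bb, TT] using h1
      _ = ∑ i ∈ range (m+1), p i := Finset.sum_congr rfl h2
      _ = 1 := hsum
  have hCS := Finset.sum_mul_sq_le_sq_mul_sq (range (m+1))
    (fun k => Real.sqrt (aa t x k) * TT t x p (m+1) k)
    (fun k => bb t x k / Real.sqrt (aa t x k))
  have haa : ∀ k ∈ range (m+1), 0 < aa t x k := fun k hk => aa_pos ht hsm (mem_range.1 hk)
  have e1 : ∀ k ∈ range (m+1),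
      (Real.sqrt (aa t x k) * TT t x p (m+1) k) * (bb t x k / Real.sqrt (aa t x k))
        = bb t x k * TT t x p (m+1) k := by
    intro k hk
    have h := Real.sqrt_pos.2 (haa k hk)
    field_simp
  have e2 : ∀ k ∈ range (m+1), (Real.sqrt (aa t x k) * TT t x p (m+1) k)^2
      = aa t x k * TT t x p (m+1) k ^ 2 := by
    intro k hk
    rw [mul_pow, Real.sq_sqrt (haa k hk).le]
  have e3 : ∀ k ∈ range (m+1), (bb t x k / Real.sqrt (aa t x k))^2
      = bb t x k ^ 2 / aa t x k := by
    intro k hk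
    rw [div_pow, Real.sq_sqrt (haa k hk).le]
  rw [Finset.sum_congr rfl e1, Finset.sum_congr rfl e2, Finset.sum_congr rfl e3, hone,
    Msum ht hsm, one_pow] at hCS
  have hKap := Kap_nonneg ht hsm
  have hM : 0 < 1 + Kap t x (m+1) := by linarith
  have hZ' : Z t x p (m+1) = ∑ k ∈ range (m+1), aa t x k * TT t x p (m+1) k ^ 2 := by
    rw [hZ]
    exact Finset.sum_congr rfl (fun k _ => by rw [aa])
  set S := ∑ k ∈ range (m+1), aa t x k * TT t x p (m+1) k ^ 2 with hS
  have hZpos : 0 < S := by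
    by_contra hcon
    push_neg at hcon
    nlinarith [hCS, hM, mul_nonneg (neg_nonneg.2 hcon) hM.le]
  have h5 := mul_le_mul_of_nonneg_left hCS (inv_nonneg.2 hZpos.le)
  rw [mul_one, ← mul_assoc, inv_mul_cancel₀ hZpos.ne', one_mul] at h5
  rw [hZ']
  exact h5

lemma lower : ∃ p : ℕ → ℝ, (∀ i, 0 ≤ p i) ∧ (∀ i, p i ≠ 0 → i < m+1) ∧
    (∑ i ∈ range (m+1), p i = 1) ∧ Z t x p (m+1) = (1 + Kap t x (m+1))⁻¹ := by
  have hKap := Kap_nonneg ht hsm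
  set M := 1 + Kap t x (m+1) with hMdef
  have hM : 0 < M := by linarith
  set T : ℕ → ℝ := fun k => if k < m+1 then (M * ss t x k)⁻¹ else 0 with hTdef
  set p : ℕ → ℝ := fun i => hh t x i * (T i - T (i+1)) with hpdef
  have hTzero : ∀ i, m+1 ≤ i → T i = 0 := by
    intro i hi
    simp only [hTdef, if_neg (by omega : ¬ i < m+1)]
  have hTval : ∀ i, i < m+1 → T i = (M * ss t x i)⁻¹ := by
    intro i hi
    simp only [hTdef, if_pos hi]
  have hTnonneg : ∀ i, 0 ≤ T i := by
    intro i
    by_cases hi : i < m+1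
    · rw [hTval i hi]
      exact inv_nonneg.2 (mul_nonneg hM.le (ss_pos ht hsm hi).le)
    · rw [hTzero i (by omega)]
  have hTmono : ∀ i, i + 1 < m+1 → T (i+1) ≤ T i := by
    intro i hi
    rw [hTval i (by omega), hTval (i+1) hi]
    have hs1 : 0 < ss t x i := ss_pos ht hsm (by omega)
    have hs2 : ss t x i ≤ ss t x (i+1) := by
      have hprev : prev (hh t x) (i+1) = hh t x i := by simp [prev]
      rw [ss, ss, hprev]
      have : prev (hh t x) i ≤ hh t x (i+1) := by
        rcases Nat.eq_zero_or_pos i with h0 | hpos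
        · simp only [h0, prev, if_pos rfl]
          exact (Real.exp_pos _).le
        · simp only [prev, if_neg (Nat.pos_iff_ne_zero.mp hpos), hh]
          have : x (i-1) < x (i+1) := hsm _ _ (by omega) hi
          exact Real.exp_le_exp.2 (by nlinarith)
      linarith
    apply inv_anti₀ (by positivity)
    exact mul_le_mul_of_nonneg_left hs2 hM.le
  have hp_nonneg : ∀ i, 0 ≤ p i := by
    intro i
    apply mul_nonneg (Real.exp_pos _).le
    by_cases hi : i + 1 < m + 1
    · linarith [hTmono i hi]
    · rw [hTzero (i+1) (by omega)]
      linarith [hTnonneg i]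
  have hsupp : ∀ i, p i ≠ 0 → i < m+1 := by
    intro i hne
    by_contra hcon
    apply hne
    simp only [hpdef, hTzero i (by omega), hTzero (i+1) (by omega), sub_zero, mul_zero]
  have hq : ∀ i, qq t x p i = T i - T (i+1) := by
    intro i
    rw [qq]
    show hh t x i * (T i - T (i+1)) * Real.exp (-(t * x i)) = _
    rw [hh, mul_comm, ← mul_assoc, ← Real.exp_add]
    simp
  have htel : ∀ k, k ≤ m+1 → TT t x p (m+1) k = T k := by
    intro k hk
    rw [TT, Finset.sum_congr rfl (fun i _ => hq i), tele_Ico T k (m+1) hk,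
      hTzero (m+1) le_rfl, sub_zero]
  have hterm : ∀ k, k < m+1 → bb t x k * T k = M⁻¹ * (bb t x k ^2 / aa t x k) := by
    intro k hk
    rw [hTval k hk, ← bb_div_ss ht hsm hk, mul_inv]
    have hs := ss_pos ht hsm hk
    field_simp
  refine ⟨p, hp_nonneg, hsupp, ?_, ?_⟩
  · have h1 := abel (hh t x) (qq t x p) (m+1)
    have h2 : ∀ i ∈ range (m+1), hh t x i * qq t x p i = p i := by
      intro i _
      rw [hq i, hpdef]
    calc ∑ i ∈ range (m+1), p i
        = ∑ i ∈ range (m+1), hh t x i * qq t x p i := (Finset.sum_congr rfl h2).symm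
      _ = ∑ k ∈ range (m+1), bb t x k * TT t x p (m+1) k := by
          rw [← h1]
          exact Finset.sum_congr rfl (fun k hk => by rw [bb, TT])
      _ = ∑ k ∈ range (m+1), M⁻¹ * (bb t x k ^2 / aa t x k) := by
          apply Finset.sum_congr rfl
          intro k hk
          rw [htel k (le_of_lt (mem_range.1 hk)), hterm k (mem_range.1 hk)]
      _ = M⁻¹ * ∑ k ∈ range (m+1), bb t x k ^2 / aa t x k := by rw [← Finset.mul_sum]
      _ = 1 := by rw [Msum ht hsm, ← hMdef, inv_mul_cancel₀ hM.ne']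
  · have hmono : ∀ i j, i ≤ j → j < m+1 → x i ≤ x j := by
      intro i j hij hj
      rcases eq_or_lt_of_le hij with rfl | h
      · exact le_rfl
      · exact (hsm _ _ h hj).le
    have hZ' : Z t x p (m+1) = ∑ k ∈ range (m+1), aa t x k * TT t x p (m+1) k ^ 2 := by
      rw [star t x p (m+1) hmono]
      exact Finset.sum_congr rfl (fun k _ => by rw [aa])
    rw [hZ']
    have hterm2 : ∀ k ∈ range (m+1), aa t x k * TT t x p (m+1) k ^ 2
        = M⁻¹ * (M⁻¹ * (bb t x k ^2 / aa t x k)) := by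
      intro k hk
      have hk' := mem_range.1 hk
      rw [htel k (le_of_lt hk'), hTval k hk']
      have haa' := aa_pos ht hsm hk'
      have hs := ss_pos ht hsm hk'
      have hbb := bb_pos ht hsm hk'
      rw [aa_eq ht hsm]
      field_simp
    rw [Finset.sum_congr rfl hterm2, ← Finset.mul_sum, ← Finset.mul_sum,
      Msum ht hsm, ← hMdef]
    field_simp

end
end KBM

namespace KBM

lemma enum_finset (F : Finset ℝ) (hF : F.Nonempty) :
    ∃ (m : ℕ) (x : ℕ → ℝ), (∀ i j, i < j → j < m + 1 → x i < x j) ∧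
      F = (Finset.range (m+1)).image x := by
  set L := F.sort (· ≤ ·) with hL
  have hlen : L.length = F.card := Finset.length_sort _
  have hpos : 0 < L.length := by rw [hlen]; exact Finset.card_pos.2 hF
  refine ⟨L.length - 1, fun i => L.getD i 0, ?_, ?_⟩
  · intro i j hij hj
    have hj' : j < L.length := by omega
    have hi' : i < L.length := by omega
    simp only [List.getD_eq_getElem _ _ hi', List.getD_eq_getElem _ _ hj']
    exact (Finset.sortedLT_sort F).pairwise.rel_get_of_lt
      (show (⟨i, hi'⟩ : Fin L.length) < ⟨j, hj'⟩ from hij)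
  · ext a
    simp only [Finset.mem_image, Finset.mem_range]
    constructor
    · intro ha
      have ha' : a ∈ L := (Finset.mem_sort _).2 ha
      obtain ⟨i, hi, hval⟩ := List.mem_iff_getElem.1 ha'
      exact ⟨i, by omega, by rw [List.getD_eq_getElem _ _ hi]; exact hval⟩
    · rintro ⟨i, hi, rfl⟩
      have hi' : i < L.length := by omega
      rw [List.getD_eq_getElem _ _ hi']
      exact (Finset.mem_sort _).1 (List.getElem_mem _)

end KBM

namespace KBM

lemma Dfin_empty (t : ℝ) : Dfin t (∅ : Finset ℝ) = 1 := by
  rw [Dfin, if_neg (by simp)]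

section
variable {t : ℝ} (ht : 0 < t) {x : ℕ → ℝ} {m : ℕ}
  (hsm : ∀ i j, i < j → j < m + 1 → x i < x j)
include hsm

lemma inj_on : ∀ i ∈ range (m+1), ∀ j ∈ range (m+1), x i = x j → i = j := by
  intro i hi j hj hxy
  rcases lt_trichotomy i j with h | h | h
  · exact absurd hxy (ne_of_lt (hsm i j h (mem_range.1 hj)))
  · exact h
  · exact absurd hxy.symm (ne_of_lt (hsm j i h (mem_range.1 hi)))

lemma double_sum_eq (p : ℝ → ℝ) :
    ∑ v ∈ (range (m+1)).image x, ∑ w ∈ (range (m+1)).image x,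
      p v * p w * Real.exp (-(t * dist v w)) = Z t x (fun i => p (x i)) (m+1) := by
  have hinj := inj_on hsm
  rw [Finset.sum_image hinj, Z]
  apply Finset.sum_congr rfl
  intro i _
  rw [Finset.sum_image hinj]
  exact Finset.sum_congr rfl (fun j _ => by rw [Real.dist_eq])

omit hsm in
lemma Z_congr {p p' : ℕ → ℝ} {n : ℕ} (h : ∀ i ∈ range n, p i = p' i) :
    Z t x p n = Z t x p' n := by
  rw [Z, Z]
  apply Finset.sum_congr rfl
  intro i hi
  apply Finset.sum_congr rfl
  intro j hj
  rw [h i hi, h j hj]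

include ht

lemma set_elem_le {r : ℝ}
    (hr : r ∈ { r : ℝ | ∃ p : ℝ → ℝ, (∀ v, 0 ≤ p v) ∧
      (∀ v, p v ≠ 0 → v ∈ (range (m+1)).image x) ∧
      (∑ v ∈ (range (m+1)).image x, p v) = 1 ∧
      r = (∑ v ∈ (range (m+1)).image x, ∑ w ∈ (range (m+1)).image x,
        p v * p w * Real.exp (-(t * dist v w)))⁻¹ }) :
    r ≤ 1 + Kap t x (m+1) := by
  obtain ⟨p, hp0, _, hp1, rfl⟩ := hr
  rw [double_sum_eq hsm]
  exact upper ht hsm _ (fun i => hp0 _)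
    (by rw [← Finset.sum_image (inj_on hsm)]; exact hp1)

lemma Dfin_image_le : Dfin t ((range (m+1)).image x) ≤ 1 + Kap t x (m+1) := by
  rw [Dfin, if_pos (Finset.Nonempty.image ⟨0, mem_range.2 (Nat.succ_pos m)⟩ x)]
  exact Real.sSup_le (fun r hr => set_elem_le ht hsm hr)
    (by linarith [Kap_nonneg ht hsm])

lemma le_Dfin_image : 1 + Kap t x (m+1) ≤ Dfin t ((range (m+1)).image x) := by
  have hinj := inj_on hsm
  rw [Dfin, if_pos (Finset.Nonempty.image ⟨0, mem_range.2 (Nat.succ_pos m)⟩ x)]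
  apply le_csSup ⟨1 + Kap t x (m+1), fun r hr => set_elem_le ht hsm hr⟩
  obtain ⟨pf, hpf0, hpfsupp, hpfsum, hZval⟩ := lower ht hsm
  set P : ℝ → ℝ := fun v => ∑ i ∈ range (m+1), if v = x i then pf i else 0 with hP
  have hPx : ∀ j ∈ range (m+1), P (x j) = pf j := by
    intro j hj
    show (∑ i ∈ range (m+1), if x j = x i then pf i else 0) = pf j
    rw [Finset.sum_eq_single_of_mem j hj
      (fun i hi hne => if_neg (fun he => hne (hinj i hi j hj he.symm)))]
    simp
  refine ⟨P, ?_, ?_, ?_, ?_⟩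
  · intro v
    apply Finset.sum_nonneg
    intro i _
    by_cases h : v = x i
    · simp [h, hpf0 i]
    · simp [h]
  · intro v hv
    by_contra hvF
    apply hv
    apply Finset.sum_eq_zero
    intro i hi
    exact if_neg (fun he => hvF (by rw [he]; exact Finset.mem_image_of_mem x hi))
  · rw [Finset.sum_image hinj, Finset.sum_congr rfl hPx, hpfsum]
  · rw [double_sum_eq hsm, Z_congr (fun i hi => hPx i hi), hZval, inv_inv]

omit hsm in
lemma one_le_Dfin_singleton (b : ℝ) : (1:ℝ) ≤ Dfin t ({b} : Finset ℝ) := by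
  have h : ({b} : Finset ℝ) = (range (0+1)).image (fun _ => b) := by simp
  have hsmb : ∀ i j, i < j → j < 0 + 1 → (fun _ : ℕ => b) i < (fun _ : ℕ => b) j := by
    intro i j hij hj
    omega
  have := le_Dfin_image ht hsmb
  rw [← h] at this
  have hK : Kap t (fun _ : ℕ => b) (0+1) = 0 := by simp [Kap]
  rw [hK] at this
  linarith

end

lemma Dfin_le_bound {t : ℝ} (ht : 0 < t) {F : Finset ℝ} {R : ℝ} (hR : 0 ≤ R)
    (hF : ∀ v ∈ F, |v| ≤ R) : Dfin t F ≤ 1 + t * (2 * R) := by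
  rcases F.eq_empty_or_nonempty with rfl | hne
  · rw [Dfin_empty]
    nlinarith
  · obtain ⟨m, x, hsm, rfl⟩ := enum_finset F hne
    refine (Dfin_image_le ht hsm).trans ?_
    have h1 : Kap t x (m+1) ≤ t * (x m - x 0) := by
      rw [Kap]
      simp only [Nat.add_sub_cancel]
      calc ∑ k ∈ range m, psi (t * (x (k+1) - x k))
          ≤ ∑ k ∈ range m, t * (x (k+1) - x k) := by
            apply Finset.sum_le_sum
            intro k hk
            have hlt : x k < x (k+1) :=
              hsm k (k+1) (Nat.lt_succ_self k) (by have := mem_range.1 hk; omega)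
            exact psi_le (by nlinarith)
        _ = t * (x m - x 0) := by rw [← Finset.mul_sum, Finset.sum_range_sub]
    have hxm := abs_le.1 (hF _ (Finset.mem_image_of_mem x (mem_range.2 (Nat.lt_succ_self m))))
    have hx0 := abs_le.1 (hF _ (Finset.mem_image_of_mem x (mem_range.2 (Nat.succ_pos m))))
    have h2 : x m - x 0 ≤ 2 * R := by linarith [hxm.2, hx0.1]
    nlinarith [mul_le_mul_of_nonneg_left h2 ht.le]

lemma staircase {t : ℝ} (ht : 0 < t) {l : ℝ} (hl0 : 0 < l) (hl1 : l < 1) (x y : ℕ → ℝ)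
    (m n : ℕ) (hx : ∀ i j, i < j → j < m+1 → x i < x j)
    (hy : ∀ i j, i < j → j < n+1 → y i < y j) :
    ∃ z : ℕ → ℝ, (∀ i j, i < j → j < (m+n)+1 → z i < z j) ∧
      (∀ k, k < (m+n)+1 → ∃ i j, i < m+1 ∧ j < n+1 ∧ z k = (1-l) * x i + l * y j) ∧
      (1-l) * Kap t x (m+1) + l * Kap t y (n+1) ≤ Kap t z ((m+n)+1) := by
  set z : ℕ → ℝ := fun k => if k < m+1 then (1-l) * x k + l * y 0
    else (1-l) * x m + l * y (k - m) with hz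
  have hzval1 : ∀ k, k < m+1 → z k = (1-l) * x k + l * y 0 := by
    intro k hk
    simp only [hz, if_pos hk]
  have hzval2 : ∀ k, m ≤ k → z k = (1-l) * x m + l * y (k - m) := by
    intro k hk
    rcases eq_or_lt_of_le hk with rfl | h
    · rw [hzval1 m (Nat.lt_succ_self m)]
      simp
    · simp only [hz, if_neg (by omega : ¬ k < m+1)]
  have hgap1 : ∀ k, k < m → z (k+1) - z k = (1-l) * (x (k+1) - x k) := by
    intro k hk
    rw [hzval1 k (by omega), hzval1 (k+1) (by omega)]
    ring
  have hgap2 : ∀ j, j < n → z (m+j+1) - z (m+j) = l * (y (j+1) - y j) := by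
    intro j hj
    rw [hzval2 (m+j) (by omega), hzval2 (m+j+1) (by omega)]
    have e1 : m + j - m = j := by omega
    have e2 : m + j + 1 - m = j + 1 := by omega
    rw [e1, e2]
    ring
  have hsucc : ∀ k, k + 1 < (m+n)+1 → z k < z (k+1) := by
    intro k hk
    by_cases h : k < m
    · have hg := hgap1 k h
      have hxk : x k < x (k+1) := hx k (k+1) (Nat.lt_succ_self k) (by omega)
      nlinarith [hg]
    · obtain ⟨j, rfl⟩ : ∃ j, k = m + j := ⟨k - m, by omega⟩
      have hj : j < n := by omega
      have hg := hgap2 j hj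
      have hyj : y j < y (j+1) := hy j (j+1) (Nat.lt_succ_self j) (by omega)
      nlinarith [hg]
  refine ⟨z, ?_, ?_, ?_⟩
  · intro i j hij hj
    induction j with
    | zero => omega
    | succ j ih =>
      rcases Nat.lt_succ_iff_lt_or_eq.1 hij with h | h
      · exact (ih h (by omega)).trans (hsucc j (by omega))
      · subst h
        exact hsucc i (by omega)
  · intro k hk
    by_cases h : k < m+1
    · exact ⟨k, 0, h, Nat.succ_pos n, hzval1 k h⟩
    · exact ⟨m, k - m, Nat.lt_succ_self m, by omega, hzval2 k (by omega)⟩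
  · rw [Kap, Kap, Kap]
    simp only [Nat.add_sub_cancel]
    rw [Finset.sum_range_add]
    have h1 : ∀ k ∈ range m,
        (1-l) * psi (t * (x (k+1) - x k)) ≤ psi (t * (z (k+1) - z k)) := by
      intro k hk
      have hk' := mem_range.1 hk
      have he : t * (z (k+1) - z k) = (1-l) * (t * (x (k+1) - x k)) := by
        rw [hgap1 k hk']
        ring
      rw [he]
      have hxk : x k < x (k+1) := hx k (k+1) (Nat.lt_succ_self k) (by omega)
      exact psi_superhom (by linarith) (by linarith) (by nlinarith)
    have h2 : ∀ j ∈ range n,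
        l * psi (t * (y (j+1) - y j)) ≤ psi (t * (z (m+j+1) - z (m+j))) := by
      intro j hj
      have hj' := mem_range.1 hj
      have he : t * (z (m+j+1) - z (m+j)) = l * (t * (y (j+1) - y j)) := by
        rw [hgap2 j hj']
        ring
      rw [he]
      have hyj : y j < y (j+1) := hy j (j+1) (Nat.lt_succ_self j) (by omega)
      exact psi_superhom (by linarith) (by linarith) (by nlinarith)
    have e1 : (1-l) * ∑ k ∈ range m, psi (t * (x (k+1) - x k))
        ≤ ∑ k ∈ range m, psi (t * (z (k+1) - z k)) := by
      rw [Finset.mul_sum]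
      exact Finset.sum_le_sum h1
    have e2 : l * ∑ j ∈ range n, psi (t * (y (j+1) - y j))
        ≤ ∑ j ∈ range n, psi (t * (z (m+j+1) - z (m+j))) := by
      rw [Finset.mul_sum]
      exact Finset.sum_le_sum h2
    linarith
end KBM

open KBM

open scoped Pointwise

/-- A Brunn–Minkowski-type inequality for κ^t on the real line:
κ^t((1−λ)A + λB) ≥ (1−λ)κ^t(A) + λκ^t(B) for nonempty compact A, B ⊆ ℝ and λ ∈ [0,1]. -/
theorem kappa_brunn_minkowski (t : ℝ) (ht : 0 < t)
    (A B : Set ℝ) (hA : A.Nonempty) (hB : B.Nonempty)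
    (hAc : IsCompact A) (hBc : IsCompact B)
    (l : ℝ) (hl0 : 0 ≤ l) (hl1 : l ≤ 1) :
    (1 - l) * (Dcpt t A - 1) + l * (Dcpt t B - 1) ≤
      Dcpt t ((1 - l) • A + l • B) - 1 := by
  rcases eq_or_lt_of_le hl0 with rfl | hl0'
  · rw [show ((1:ℝ) - 0) = 1 by norm_num, one_smul, Set.zero_smul_set hB, add_zero]
    simp
  rcases eq_or_lt_of_le hl1 with rfl | hl1'
  · rw [show ((1:ℝ) - 1) = 0 by norm_num, one_smul, Set.zero_smul_set hA, zero_add]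
    simp
  -- main case
  obtain ⟨RA, hRA⟩ := isBounded_iff_forall_norm_le.1 hAc.isBounded
  obtain ⟨RB, hRB⟩ := isBounded_iff_forall_norm_le.1 hBc.isBounded
  set R := max RA 0 + max RB 0 with hR
  have hR0 : 0 ≤ R := add_nonneg (le_max_right _ _) (le_max_right _ _)
  have hsumbound : ∀ v ∈ (1-l) • A + l • B, |v| ≤ R := by
    rintro v ⟨a', ha', b', hb', rfl⟩
    obtain ⟨a, ha, rfl⟩ := ha'
    obtain ⟨b, hb, rfl⟩ := hb'
    have h1 : |a| ≤ max RA 0 := le_trans (hRA a ha) (le_max_left _ _)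
    have h2 : |b| ≤ max RB 0 := le_trans (hRB b hb) (le_max_left _ _)
    simp only [smul_eq_mul]
    calc |(1-l) * a + l * b| ≤ |(1-l) * a| + |l * b| := abs_add_le _ _
      _ = (1-l) * |a| + l * |b| := by
          rw [abs_mul, abs_mul, abs_of_nonneg (by linarith : (0:ℝ) ≤ 1 - l),
            abs_of_nonneg hl0'.le]
      _ ≤ R := by nlinarith [abs_nonneg a, abs_nonneg b, le_max_right RA 0, le_max_right RB 0]
  have hbdd : BddAbove {r : ℝ | ∃ F : Finset ℝ, ↑F ⊆ (1-l) • A + l • B ∧ r = Dfin t F} := by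
    refine ⟨1 + t * (2*R), ?_⟩
    rintro r ⟨F, hFsub, rfl⟩
    exact Dfin_le_bound ht hR0 (fun v hv => hsumbound v (hFsub hv))
  have key : ∀ (F G : Finset ℝ), ↑F ⊆ A → ↑G ⊆ B → F.Nonempty → G.Nonempty →
      (1-l) * (Dfin t F - 1) + l * (Dfin t G - 1) ≤ Dcpt t ((1-l) • A + l • B) - 1 := by
    intro F G hFA hGB hFne hGne
    obtain ⟨m, xx, hx, rfl⟩ := enum_finset F hFne
    obtain ⟨n, yy, hy, rfl⟩ := enum_finset G hGne
    obtain ⟨z, hzmono, hzmem, hzkap⟩ := staircase ht hl0' hl1' xx yy m n hx hy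
    set H : Finset ℝ := (range ((m+n)+1)).image z with hH
    have hHsub : ↑H ⊆ (1-l) • A + l • B := by
      intro v hv
      simp only [hH, coe_image, Set.mem_image, mem_coe, mem_range] at hv
      obtain ⟨k, hk, rfl⟩ := hv
      obtain ⟨i, j, hi, hj, hzk⟩ := hzmem k hk
      rw [hzk]
      refine Set.add_mem_add ?_ ?_
      · rw [← smul_eq_mul]
        exact Set.smul_mem_smul_set (hFA (Finset.mem_image_of_mem xx (mem_range.2 hi)))
      · rw [← smul_eq_mul]
        exact Set.smul_mem_smul_set (hGB (Finset.mem_image_of_mem yy (mem_range.2 hj)))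
    have h1 := Dfin_image_le ht hx
    have h2 := Dfin_image_le ht hy
    have h3 := le_Dfin_image ht hzmono
    have h4 : Dfin t H ≤ Dcpt t ((1-l) • A + l • B) := le_csSup hbdd ⟨H, hHsub, rfl⟩
    have e1 : (1-l) * (Dfin t ((range (m+1)).image xx) - 1) ≤ (1-l) * Kap t xx (m+1) :=
      mul_le_mul_of_nonneg_left (by linarith) (by linarith)
    have e2 : l * (Dfin t ((range (n+1)).image yy) - 1) ≤ l * Kap t yy (n+1) :=
      mul_le_mul_of_nonneg_left (by linarith) hl0'.le
    linarith
  obtain ⟨a, ha⟩ := hA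
  obtain ⟨b, hb⟩ := hB
  have key' : ∀ r ∈ {r : ℝ | ∃ F : Finset ℝ, ↑F ⊆ A ∧ r = Dfin t F},
      ∀ s ∈ {r : ℝ | ∃ F : Finset ℝ, ↑F ⊆ B ∧ r = Dfin t F},
      (1-l) * (r - 1) + l * (s - 1) ≤ Dcpt t ((1-l) • A + l • B) - 1 := by
    rintro r ⟨F, hFA, rfl⟩ s ⟨G, hGB, rfl⟩
    have hb1 : (1:ℝ) ≤ Dfin t ({b} : Finset ℝ) := one_le_Dfin_singleton ht b
    have ha1 : (1:ℝ) ≤ Dfin t ({a} : Finset ℝ) := one_le_Dfin_singleton ht a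
    have hbsub : ↑({b} : Finset ℝ) ⊆ B := by simp [hb]
    have hasub : ↑({a} : Finset ℝ) ⊆ A := by simp [ha]
    by_cases hFne : F.Nonempty
    · by_cases hGne : G.Nonempty
      · exact key F G hFA hGB hFne hGne
      · rw [Finset.not_nonempty_iff_eq_empty.1 hGne, Dfin_empty]
        have hk := key F {b} hFA hbsub hFne ⟨b, Finset.mem_singleton_self b⟩
        nlinarith
    · rw [Finset.not_nonempty_iff_eq_empty.1 hFne, Dfin_empty]
      by_cases hGne : G.Nonempty
      · have hk := key {a} G hasub hGB ⟨a, Finset.mem_singleton_self a⟩ hGne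
        nlinarith
      · rw [Finset.not_nonempty_iff_eq_empty.1 hGne, Dfin_empty]
        have hk := key {a} {b} hasub hbsub ⟨a, Finset.mem_singleton_self a⟩
          ⟨b, Finset.mem_singleton_self b⟩
        nlinarith
  set c0 := Dcpt t ((1-l) • A + l • B) - 1 with hc0
  have hmemA : (1:ℝ) ∈ {r : ℝ | ∃ F : Finset ℝ, ↑F ⊆ A ∧ r = Dfin t F} :=
    ⟨∅, by simp, (Dfin_empty t).symm⟩
  have hmemB : (1:ℝ) ∈ {r : ℝ | ∃ F : Finset ℝ, ↑F ⊆ B ∧ r = Dfin t F} :=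
    ⟨∅, by simp, (Dfin_empty t).symm⟩
  have h1l : (0:ℝ) < 1 - l := by linarith
  set DB := Dcpt t B with hDB
  have inner : ∀ r ∈ {r : ℝ | ∃ F : Finset ℝ, ↑F ⊆ A ∧ r = Dfin t F},
      l * (DB - 1) ≤ c0 - (1-l) * (r - 1) := by
    intro r hr
    have hb0 : (1-l) * (r-1) ≤ c0 := by
      have := key' r hr 1 hmemB
      linarith
    have hsup : DB ≤ (c0 - (1-l) * (r-1)) / l + 1 := by
      rw [hDB, Dcpt]
      apply Real.sSup_le
      · intro s hs
        have hks := key' r hr s hs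
        rw [← sub_le_iff_le_add, le_div_iff₀ hl0']
        linarith
      · have : (0:ℝ) ≤ (c0 - (1-l) * (r-1)) / l := div_nonneg (by linarith) hl0'.le
        linarith
    have h' : DB - 1 ≤ (c0 - (1-l) * (r-1)) / l := by linarith
    calc l * (DB - 1) ≤ l * ((c0 - (1-l) * (r-1)) / l) :=
          mul_le_mul_of_nonneg_left h' hl0'.le
      _ = c0 - (1-l) * (r-1) := by field_simp
  have houter : Dcpt t A ≤ (c0 - l * (DB - 1)) / (1-l) + 1 := by
    rw [Dcpt]
    apply Real.sSup_le
    · intro r hr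
      have := inner r hr
      rw [← sub_le_iff_le_add, le_div_iff₀ h1l]
      linarith
    · have h0 : l * (DB - 1) ≤ c0 := by
        have := inner 1 hmemA
        linarith
      have : (0:ℝ) ≤ (c0 - l * (DB - 1)) / (1-l) := div_nonneg (by linarith) h1l.le
      linarith
  have hfin : (1-l) * (Dcpt t A - 1) ≤ c0 - l * (DB - 1) := by
    have h' : Dcpt t A - 1 ≤ (c0 - l * (DB - 1)) / (1-l) := by linarith
    calc (1-l) * (Dcpt t A - 1) ≤ (1-l) * ((c0 - l * (DB - 1)) / (1-l)) :=
          mul_le_mul_of_nonneg_left h' h1l.le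
      _ = c0 - l * (DB - 1) := by field_simp
  linarith
end

section
/- Let X be a set and let δ, defined on finite subsets of X, be a diversity. Then the set function à = log(δ + 1), i.e. Ã(A) = log(1 + δ(A)), is also a diversity. -/
/-- A diversity on a set `X` (Bryant–Tupper): a real-valued function on finite subsets
which vanishes exactly on sets of at most one element and satisfies the triangle
inequality `δ(A ∪ B) ≤ δ(A ∪ C) + δ(B ∪ C)` for nonempty `C`. -/
def IsDiversity {X : Type*} [DecidableEq X] (δ : Finset X → ℝ) : Prop :=
  (∀ A, δ A = 0 ↔ A.card ≤ 1) ∧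
  (∀ A B C, C ≠ ∅ → δ (A ∪ B) ≤ δ (A ∪ C) + δ (B ∪ C))

lemma diversity_nonneg {X : Type*} [DecidableEq X] (δ : Finset X → ℝ)
    (hδ : IsDiversity δ) (A : Finset X) : 0 ≤ δ A := by
  rcases A.eq_empty_or_nonempty with rfl | ⟨a, ha⟩
  · rw [(hδ.1 ∅).2 (by simp)]
  · have h := hδ.2 A A {a} (by simp)
    have hAa : A ∪ {a} = A := by
      apply Finset.union_eq_left.mpr; simpa using ha
    rw [Finset.union_self, hAa] at h
    linarith

/-- If δ is a diversity, then so is log(1 + δ). -/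
theorem log_one_add_isDiversity {X : Type*} [DecidableEq X]
    (δ : Finset X → ℝ) (hδ : IsDiversity δ) :
    IsDiversity (fun A => Real.log (1 + δ A)) := by
  have hpos : ∀ A, (0:ℝ) < 1 + δ A := fun A => by
    have := diversity_nonneg δ hδ A; linarith
  constructor
  · intro A
    rw [← (hδ.1 A)]
    simp only
    constructor
    · intro h
      have := Real.exp_log (hpos A)
      rw [h, Real.exp_zero] at this
      linarith
    · intro h; rw [h]; simp
  · intro A B C hC
    have h := hδ.2 A B C hC
    have hx := diversity_nonneg δ hδ (A ∪ C)
    have hy := diversity_nonneg δ hδ (B ∪ C)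
    simp only
    rw [← Real.log_mul (ne_of_gt (hpos _)) (ne_of_gt (hpos _))]
    apply Real.log_le_log (hpos _)
    nlinarith [mul_nonneg hx hy]
end

section
/- Let X be a set and let δ be a function from the finite subsets of X to ℝ satisfying the non-degeneracy condition (δ(A) = 0 if and only if A has at most one element) and monotonicity (δ(A) ≤ δ(B) whenever A ⊆ B are finite subsets of X). Then δ is a diversity (i.e. satisfies the triangle inequality δ(A ∪ B) ≤ δ(A ∪ C) + δ(B ∪ C) for all finite A, B, C with C nonempty) if and only if δ(A ∪ B) ≤ δ(A) + δ(B) for all pairs of finite subsets A, B of X whose intersection consists of exactly one point. -/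
/-- For a non-degenerate, monotone set function δ on finite subsets of X, δ is a
diversity if and only if δ(A ∪ B) ≤ δ(A) + δ(B) whenever A and B intersect in
exactly one point. -/
theorem isDiversity_iff_subadditive_one_point {X : Type*} [DecidableEq X]
    (δ : Finset X → ℝ)
    (hnd : ∀ A : Finset X, δ A = 0 ↔ A.card ≤ 1)
    (hmono : ∀ A B : Finset X, A ⊆ B → δ A ≤ δ B) :
    IsDiversity δ ↔
      ∀ A B : Finset X, (A ∩ B).card = 1 → δ (A ∪ B) ≤ δ A + δ B := by
  constructor
  · rintro ⟨-, htri⟩ A B hcard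
    have hne : (A ∩ B) ≠ ∅ := by
      intro h; simp [h] at hcard
    have h := htri A B (A ∩ B) hne
    rwa [Finset.union_eq_left.mpr Finset.inter_subset_left,
      Finset.union_eq_left.mpr Finset.inter_subset_right] at h
  · intro hsub
    -- First: subadditivity for sets with nonempty intersection
    have key : ∀ A B : Finset X, (A ∩ B).Nonempty → δ (A ∪ B) ≤ δ A + δ B := by
      intro A B ⟨x, hx⟩
      rw [Finset.mem_inter] at hx
      set B' : Finset X := (B \ A) ∪ {x} with hB'
      have hint : A ∩ B' = {x} := by
        ext y
        simp only [hB', Finset.mem_inter, Finset.mem_union, Finset.mem_sdiff,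
          Finset.mem_singleton]
        constructor
        · rintro ⟨hyA, (⟨-, hyA'⟩ | rfl)⟩
          · exact absurd hyA hyA'
          · rfl
        · rintro rfl; exact ⟨hx.1, Or.inr rfl⟩
      have hunion : A ∪ B' = A ∪ B := by
        ext y
        simp only [hB', Finset.mem_union, Finset.mem_sdiff, Finset.mem_singleton]
        constructor
        · rintro (h | ⟨h, -⟩ | rfl)
          · exact Or.inl h
          · exact Or.inr h
          · exact Or.inr hx.2
        · rintro (h | h)
          · exact Or.inl h
          · by_cases hA : y ∈ A
            · exact Or.inl hA
            · exact Or.inr (Or.inl ⟨h, hA⟩)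
      have h1 : δ (A ∪ B') ≤ δ A + δ B' := by
        apply hsub
        rw [hint, Finset.card_singleton]
      have h2 : δ B' ≤ δ B := by
        apply hmono
        intro y hy
        simp only [hB', Finset.mem_union, Finset.mem_sdiff, Finset.mem_singleton] at hy
        rcases hy with ⟨h, -⟩ | rfl
        · exact h
        · exact hx.2
      calc δ (A ∪ B) = δ (A ∪ B') := by rw [hunion]
        _ ≤ δ A + δ B' := h1
        _ ≤ δ A + δ B := by linarith
    refine ⟨hnd, fun A B C hC => ?_⟩
    have hCne : C.Nonempty := Finset.nonempty_iff_ne_empty.mpr hC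
    have hmo : δ (A ∪ B) ≤ δ ((A ∪ C) ∪ (B ∪ C)) := by
      apply hmono
      intro y hy
      rcases Finset.mem_union.mp hy with h | h
      · exact Finset.mem_union.mpr (Or.inl (Finset.mem_union.mpr (Or.inl h)))
      · exact Finset.mem_union.mpr (Or.inr (Finset.mem_union.mpr (Or.inl h)))
    have hk : δ ((A ∪ C) ∪ (B ∪ C)) ≤ δ (A ∪ C) + δ (B ∪ C) := by
      apply key
      obtain ⟨x, hx⟩ := hCne
      exact ⟨x, Finset.mem_inter.mpr ⟨Finset.mem_union.mpr (Or.inr hx),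
        Finset.mem_union.mpr (Or.inr hx)⟩⟩
    linarith
end

section
/- Let (X,d) be a metric space, t > 0, and α ∈ [0,∞) with α ≠ 1. Let μ_1, …, μ_n be finitely supported probability measures on X with pairwise disjoint supports, let λ_1, …, λ_n > 0 with ∑_{i=1}^n λ_i = 1, and set μ = ∑_{i=1}^n λ_i μ_i. Let β be a fractional partition on [n] with β(∅) = 0, and for each nonempty s ⊆ [n] set μ_s = (∑_{i ∈ s} λ_i μ_i)/(∑_{i ∈ s} λ_i). Then D_α(μ) ≤ ∑_{s ⊆ [n], s ≠ ∅} β(s)·D_α(μ_s). -/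
/-- A finitely supported probability measure on `X`: nonnegative, total mass one. -/
def IsFinProb {X : Type*} (p : X →₀ ℝ) : Prop :=
  (∀ x, 0 ≤ p x) ∧ (∑ x ∈ p.support, p x) = 1

/-- The Laplace-kernel smoothing `(Zp)(x) = ∑_y e^{−t·d(x,y)}·p(y)`. -/
noncomputable def Zker {X : Type*} [MetricSpace X] (t : ℝ) (p : X →₀ ℝ) (x : X) : ℝ :=
  ∑ y ∈ p.support, Real.exp (-(t * dist x y)) * p y

/-- A fractional partition on `[n]`: a nonnegative function on subsets of `[n]` such
that for every `i`, the weights of the sets containing `i` sum to `1`. -/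
def IsFracPartition {n : ℕ} (β : Finset (Fin n) → ℝ) : Prop :=
  (∀ s, 0 ≤ β s) ∧ ∀ i : Fin n, (∑ s : Finset (Fin n), if i ∈ s then β s else 0) = 1

/-- The exponentiated kernelized α-complexity (α ≠ 1):
`D_α(p) = (∑_{x ∈ supp p} p(x)·((Zp)(x))^{α−1})^{1/(1−α)}`. -/
noncomputable def Dalpha {X : Type*} [MetricSpace X] (t α : ℝ) (p : X →₀ ℝ) : ℝ :=
  (∑ x ∈ p.support, p x * (Zker t p x) ^ (α - 1)) ^ (1 / (1 - α))

private lemma zker_eq_sum_subset {X : Type*} [MetricSpace X] (t : ℝ) (p : X →₀ ℝ)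
    {B : Finset X} (hB : p.support ⊆ B) (x : X) :
    Zker t p x = ∑ y ∈ B, Real.exp (-(t * dist x y)) * p y :=
  Finset.sum_subset hB (fun y _ hy => by
    rw [Finsupp.notMem_support_iff.mp hy, mul_zero])

private lemma fsum_eq_sum_subset {X : Type*} (p : X →₀ ℝ) (g : X → ℝ)
    {B : Finset X} (hB : p.support ⊆ B) :
    ∑ x ∈ p.support, p x * g x = ∑ x ∈ B, p x * g x :=
  Finset.sum_subset hB (fun x _ hx => by
    rw [Finsupp.notMem_support_iff.mp hx, zero_mul])

private lemma holder_two {ι : Type*} (S : Finset ι) (x y : ι → ℝ)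
    (hx : ∀ i ∈ S, 0 ≤ x i) (hy : ∀ i ∈ S, 0 ≤ y i)
    {θ : ℝ} (hθ0 : 0 < θ) (hθ1 : θ < 1) :
    ∑ i ∈ S, (x i) ^ θ * (y i) ^ (1 - θ) ≤ (∑ i ∈ S, x i) ^ θ * (∑ i ∈ S, y i) ^ (1 - θ) := by
  have h1θ : (0:ℝ) < 1 - θ := by linarith
  set Xs := ∑ i ∈ S, x i with hXs
  set Ys := ∑ i ∈ S, y i with hYs
  have hXs0 : 0 ≤ Xs := Finset.sum_nonneg hx
  have hYs0 : 0 ≤ Ys := Finset.sum_nonneg hy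
  rcases eq_or_lt_of_le hXs0 with hX | hX
  · have hall : ∀ i ∈ S, x i = 0 :=
      (Finset.sum_eq_zero_iff_of_nonneg hx).mp hX.symm
    rw [← hX, Real.zero_rpow hθ0.ne', zero_mul]
    apply le_of_eq
    apply Finset.sum_eq_zero
    intro i hi
    rw [hall i hi, Real.zero_rpow hθ0.ne', zero_mul]
  rcases eq_or_lt_of_le hYs0 with hY | hY
  · have hall : ∀ i ∈ S, y i = 0 :=
      (Finset.sum_eq_zero_iff_of_nonneg hy).mp hY.symm
    rw [← hY, Real.zero_rpow h1θ.ne', mul_zero]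
    apply le_of_eq
    apply Finset.sum_eq_zero
    intro i hi
    rw [hall i hi, Real.zero_rpow h1θ.ne', mul_zero]
  have hP : 0 < Xs ^ θ * Ys ^ (1 - θ) :=
    mul_pos (Real.rpow_pos_of_pos hX θ) (Real.rpow_pos_of_pos hY (1 - θ))
  have key : ∀ i ∈ S, (x i) ^ θ * (y i) ^ (1 - θ) ≤
      Xs ^ θ * Ys ^ (1 - θ) * (θ * (x i / Xs) + (1 - θ) * (y i / Ys)) := by
    intro i hi
    have h1 : (x i / Xs) ^ θ * (y i / Ys) ^ (1 - θ)
        ≤ θ * (x i / Xs) + (1 - θ) * (y i / Ys) :=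
      Real.geom_mean_le_arith_mean2_weighted hθ0.le h1θ.le
        (div_nonneg (hx i hi) hXs0) (div_nonneg (hy i hi) hYs0) (by ring)
    have h2 : (x i / Xs) ^ θ * (y i / Ys) ^ (1 - θ)
        = (x i ^ θ * y i ^ (1 - θ)) / (Xs ^ θ * Ys ^ (1 - θ)) := by
      rw [Real.div_rpow (hx i hi) hXs0, Real.div_rpow (hy i hi) hYs0]
      ring
    rw [h2] at h1
    calc (x i) ^ θ * (y i) ^ (1 - θ)
        = Xs ^ θ * Ys ^ (1 - θ) * ((x i ^ θ * y i ^ (1 - θ)) / (Xs ^ θ * Ys ^ (1 - θ))) := by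
          rw [mul_div_cancel₀ _ hP.ne']
      _ ≤ Xs ^ θ * Ys ^ (1 - θ) * (θ * (x i / Xs) + (1 - θ) * (y i / Ys)) :=
          mul_le_mul_of_nonneg_left h1 hP.le
  calc ∑ i ∈ S, (x i) ^ θ * (y i) ^ (1 - θ)
      ≤ ∑ i ∈ S, Xs ^ θ * Ys ^ (1 - θ) * (θ * (x i / Xs) + (1 - θ) * (y i / Ys)) :=
        Finset.sum_le_sum key
    _ = Xs ^ θ * Ys ^ (1 - θ) := by
        rw [← Finset.mul_sum]
        have hxx : ∑ i ∈ S, x i / Xs = 1 := by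
          rw [← Finset.sum_div]; exact div_self hX.ne'
        have hyy : ∑ i ∈ S, y i / Ys = 1 := by
          rw [← Finset.sum_div]; exact div_self hY.ne'
        have : ∑ i ∈ S, (θ * (x i / Xs) + (1 - θ) * (y i / Ys)) = 1 := by
          rw [Finset.sum_add_distrib, ← Finset.mul_sum, ← Finset.mul_sum, hxx, hyy]
          ring
        rw [this, mul_one]


/-- Fractional subadditivity of exponentiated α-complexity over mixtures with
pairwise disjointly supported components. -/
theorem Dalpha_fractionally_subadditive {X : Type*} [MetricSpace X]
    (t : ℝ) (ht : 0 < t) (α : ℝ) (hα0 : 0 ≤ α) (hα1 : α ≠ 1)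
    (n : ℕ) (μ : Fin n → (X →₀ ℝ)) (hμ : ∀ i, IsFinProb (μ i))
    (hdisj : ∀ i j, i ≠ j → Disjoint (μ i).support (μ j).support)
    (lam : Fin n → ℝ) (hlam : ∀ i, 0 < lam i) (hsum : (∑ i, lam i) = 1)
    (β : Finset (Fin n) → ℝ) (hβ : IsFracPartition β) (hβ0 : β ∅ = 0) :
    Dalpha t α (∑ i, lam i • μ i) ≤
      ∑ s ∈ Finset.univ.filter (fun s : Finset (Fin n) => s ≠ ∅),
        β s * Dalpha t α ((∑ i ∈ s, lam i)⁻¹ • ∑ i ∈ s, lam i • μ i) := by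
  obtain ⟨hβnn, hβ1⟩ := hβ
  set S' := Finset.univ.filter (fun s : Finset (Fin n) => s ≠ ∅) with hS'
  have hS'mem : ∀ s : Finset (Fin n), s ∈ S' ↔ s.Nonempty := by
    intro s
    simp [hS', Finset.nonempty_iff_ne_empty]
  set A : Fin n → Finset X := fun i => (μ i).support with hA
  set w : Finset (Fin n) → ℝ := fun s => ∑ i ∈ s, lam i with hwdef
  set ν : Finset (Fin n) → (X →₀ ℝ) := fun s => ∑ i ∈ s, lam i • μ i with hνdef
  set q : Finset (Fin n) → (X →₀ ℝ) := fun s => (w s)⁻¹ • ν s with hqdef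
  have hgoal1 : (∑ i, lam i • μ i) = ν Finset.univ := rfl
  have hgoal2 : ∀ s : Finset (Fin n),
      ((∑ i ∈ s, lam i)⁻¹ • ∑ i ∈ s, lam i • μ i) = q s := fun s => rfl
  rw [hgoal1]
  simp only [hgoal2]
  classical
  -- basic facts
  have hμnn : ∀ i (x : X), 0 ≤ μ i x := fun i => (hμ i).1
  have hwpos : ∀ s : Finset (Fin n), s.Nonempty → 0 < w s := fun s hs =>
    Finset.sum_pos (fun i _ => hlam i) hs
  have hAne : ∀ i, (A i).Nonempty := by
    intro i
    rw [Finset.nonempty_iff_ne_empty]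
    intro h
    have h2 := (hμ i).2
    rw [show (μ i).support = A i from rfl, h, Finset.sum_empty] at h2
    exact zero_ne_one h2
  have hν_apply : ∀ s (x : X), ν s x = ∑ i ∈ s, lam i * μ i x := by
    intro s x
    rw [hνdef]
    rw [Finsupp.finset_sum_apply]
    exact Finset.sum_congr rfl fun i _ => by rw [Finsupp.smul_apply, smul_eq_mul]
  have hνsupp : ∀ s, (ν s).support ⊆ s.biUnion A := by
    intro s x hx
    rw [Finsupp.mem_support_iff, hν_apply] at hx
    obtain ⟨i, hi, hne⟩ := Finset.exists_ne_zero_of_sum_ne_zero hx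
    refine Finset.mem_biUnion.mpr ⟨i, hi, ?_⟩
    rw [show A i = (μ i).support from rfl, Finsupp.mem_support_iff]
    intro h
    rw [h, mul_zero] at hne
    exact hne rfl
  have hAdisj : ∀ i j, i ≠ j → ∀ x ∈ A i, μ j x = 0 := by
    intro i j hij x hx
    by_contra h
    exact (Finset.disjoint_left.mp (hdisj i j hij)) hx (Finsupp.mem_support_iff.mpr h)
  have hZν : ∀ s (x : X), Zker t (ν s) x = ∑ i ∈ s, lam i * Zker t (μ i) x := by
    intro s x
    rw [zker_eq_sum_subset t (ν s) (hνsupp s) x]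
    have hterm : ∀ y, Real.exp (-(t * dist x y)) * ν s y
        = ∑ i ∈ s, lam i * (Real.exp (-(t * dist x y)) * μ i y) := by
      intro y
      rw [hν_apply, Finset.mul_sum]
      exact Finset.sum_congr rfl fun i _ => by ring
    rw [Finset.sum_congr rfl fun y _ => hterm y, Finset.sum_comm]
    refine Finset.sum_congr rfl fun i hi => ?_
    rw [← Finset.mul_sum]
    congr 1
    exact (zker_eq_sum_subset t (μ i)
      (fun y hy => Finset.mem_biUnion.mpr ⟨i, hi, hy⟩) x).symm
  have hq_apply : ∀ s (x : X), q s x = (w s)⁻¹ * ν s x := fun s x => by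
    rw [hqdef]; rw [Finsupp.smul_apply, smul_eq_mul]
  have hqsupp : ∀ s, (q s).support ⊆ s.biUnion A := fun s =>
    Finsupp.support_smul.trans (hνsupp s)
  have hZq : ∀ s (x : X), Zker t (q s) x
      = (w s)⁻¹ * ∑ i ∈ s, lam i * Zker t (μ i) x := by
    intro s x
    rw [zker_eq_sum_subset t (q s) (hqsupp s) x, ← hZν,
      zker_eq_sum_subset t (ν s) (hνsupp s) x, Finset.mul_sum]
    exact Finset.sum_congr rfl fun y _ => by rw [hq_apply]; ring
  have hZμpos : ∀ i (x : X), 0 < Zker t (μ i) x := by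
    intro i x
    apply Finset.sum_pos _ (hAne i)
    intro y hy
    exact mul_pos (Real.exp_pos _)
      (lt_of_le_of_ne (hμnn i y) (Ne.symm (Finsupp.mem_support_iff.mp hy)))
  have hsums_pos : ∀ s : Finset (Fin n), s.Nonempty → ∀ x : X,
      0 < ∑ i ∈ s, lam i * Zker t (μ i) x := fun s hs x =>
    Finset.sum_pos (fun i _ => mul_pos (hlam i) (hZμpos i x)) hs
  have hZqpos : ∀ s : Finset (Fin n), s.Nonempty → ∀ x : X, 0 < Zker t (q s) x := by
    intro s hs x
    rw [hZq]
    exact mul_pos (inv_pos.mpr (hwpos s hs)) (hsums_pos s hs x)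
  have hnuniv : (Finset.univ : Finset (Fin n)).Nonempty := by
    by_contra h
    rw [Finset.not_nonempty_iff_eq_empty] at h
    rw [show (∑ i, lam i) = ∑ i ∈ Finset.univ, lam i from rfl, h, Finset.sum_empty] at hsum
    exact zero_ne_one hsum
  have hZνupos : ∀ x : X, 0 < Zker t (ν Finset.univ) x := by
    intro x
    rw [hZν]
    exact hsums_pos _ hnuniv x
  have hZcomp : ∀ s : Finset (Fin n), s.Nonempty → ∀ x : X,
      w s * Zker t (q s) x ≤ Zker t (ν Finset.univ) x := by
    intro s hs x
    rw [hZq, hZν, ← mul_assoc, mul_inv_cancel₀ (hwpos s hs).ne', one_mul]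
    exact Finset.sum_le_sum_of_subset_of_nonneg (Finset.subset_univ s)
      (fun i _ _ => (mul_pos (hlam i) (hZμpos i x)).le)
  have hFdec : ∀ (s : Finset (Fin n)) (c : ℝ) (p : X →₀ ℝ), (∀ x, p x = c * ν s x) →
      p.support ⊆ s.biUnion A → ∀ g : X → ℝ,
      ∑ x ∈ p.support, p x * g x = c * ∑ i ∈ s, lam i * ∑ x ∈ A i, μ i x * g x := by
    intro s c p hp hps g
    rw [fsum_eq_sum_subset p g hps,
      Finset.sum_biUnion (fun i _ j _ hij => hdisj i j hij), Finset.mul_sum]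
    refine Finset.sum_congr rfl fun i hi => ?_
    rw [Finset.mul_sum, Finset.mul_sum]
    refine Finset.sum_congr rfl fun x hx => ?_
    have hx1 : ν s x = lam i * μ i x := by
      rw [hν_apply]
      apply Finset.sum_eq_single_of_mem i hi
      intro j _ hji
      rw [hAdisj i j (Ne.symm hji) x hx, mul_zero]
    rw [hp, hx1]
    ring
  have hswap : ∀ g : Fin n → ℝ, ∑ s ∈ S', β s * ∑ i ∈ s, g i = ∑ i, g i := by
    intro g
    have h1 : ∑ s ∈ S', β s * ∑ i ∈ s, g i
        = ∑ s : Finset (Fin n), β s * ∑ i ∈ s, g i := by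
      apply Finset.sum_subset (Finset.filter_subset _ _)
      intro s _ hs
      have hse : s = ∅ := by
        by_contra h
        exact hs ((hS'mem s).mpr (Finset.nonempty_iff_ne_empty.mpr h))
      rw [hse, Finset.sum_empty, mul_zero]
    have h2 : ∀ s : Finset (Fin n), β s * ∑ i ∈ s, g i
        = ∑ i : Fin n, (if i ∈ s then β s * g i else 0) := by
      intro s
      rw [Fintype.sum_ite_mem s (fun i => β s * g i), Finset.mul_sum]
    rw [h1, Finset.sum_congr rfl fun s _ => h2 s, Finset.sum_comm]
    refine Finset.sum_congr rfl fun i _ => ?_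
    have h3 : ∀ s : Finset (Fin n), (if i ∈ s then β s * g i else 0)
        = (if i ∈ s then β s else 0) * g i := by
      intro s
      split <;> simp
    rw [Finset.sum_congr rfl fun s _ => h3 s, ← Finset.sum_mul, hβ1 i, one_mul]
  set Fq : Finset (Fin n) → ℝ :=
    fun s => ∑ x ∈ (q s).support, q s x * (Zker t (q s) x) ^ (α - 1) with hFqdef
  set Fν : ℝ :=
    ∑ x ∈ (ν Finset.univ).support, ν Finset.univ x * (Zker t (ν Finset.univ) x) ^ (α - 1)
    with hFνdef
  have hDq : ∀ s, Dalpha t α (q s) = Fq s ^ (1 / (1 - α)) := fun s => rfl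
  have hDν : Dalpha t α (ν Finset.univ) = Fν ^ (1 / (1 - α)) := rfl
  set Tu : Fin n → ℝ :=
    fun i => ∑ x ∈ A i, μ i x * (Zker t (ν Finset.univ) x) ^ (α - 1) with hTudef
  set Ts : Finset (Fin n) → Fin n → ℝ :=
    fun s i => ∑ x ∈ A i, μ i x * (Zker t (q s) x) ^ (α - 1) with hTsdef
  have hFν_eq : Fν = ∑ i, lam i * Tu i := by
    rw [hFνdef, hFdec Finset.univ 1 (ν Finset.univ) (fun x => (one_mul _).symm)
      (hνsupp _) (fun x => (Zker t (ν Finset.univ) x) ^ (α - 1)), one_mul]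
  have hFq_eq : ∀ s, Fq s = (w s)⁻¹ * ∑ i ∈ s, lam i * Ts s i := by
    intro s
    rw [hFqdef]
    exact hFdec s ((w s)⁻¹) (q s) (hq_apply s) (hqsupp s)
      (fun x => (Zker t (q s) x) ^ (α - 1))
  have hμposA : ∀ i, ∀ x ∈ A i, 0 < μ i x := fun i x hx =>
    lt_of_le_of_ne (hμnn i x) (Ne.symm (Finsupp.mem_support_iff.mp hx))
  have hTspos : ∀ s : Finset (Fin n), s.Nonempty → ∀ i, 0 < Ts s i := by
    intro s hs i
    exact Finset.sum_pos (fun x hx => mul_pos (hμposA i x hx)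
      (Real.rpow_pos_of_pos (hZqpos s hs x) _)) (hAne i)
  have hTupos : ∀ i, 0 < Tu i := by
    intro i
    exact Finset.sum_pos (fun x hx => mul_pos (hμposA i x hx)
      (Real.rpow_pos_of_pos (hZνupos x) _)) (hAne i)
  have hFqpos : ∀ s : Finset (Fin n), s.Nonempty → 0 < Fq s := by
    intro s hs
    rw [hFq_eq s]
    exact mul_pos (inv_pos.mpr (hwpos s hs))
      (Finset.sum_pos (fun i _ => mul_pos (hlam i) (hTspos s hs i)) hs)
  have hFνpos : 0 < Fν := by
    rw [hFν_eq]
    exact Finset.sum_pos (fun i _ => mul_pos (hlam i) (hTupos i)) hnuniv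
  have hDqpos : ∀ s : Finset (Fin n), s.Nonempty → 0 < Dalpha t α (q s) := by
    intro s hs
    rw [hDq s]
    exact Real.rpow_pos_of_pos (hFqpos s hs) _
  have h1mα : (1:ℝ) - α ≠ 0 := sub_ne_zero.mpr (Ne.symm hα1)
  have hFqD : ∀ s : Finset (Fin n), s.Nonempty → Fq s = (Dalpha t α (q s)) ^ (1 - α) := by
    intro s hs
    rw [hDq s, ← Real.rpow_mul (hFqpos s hs).le, one_div_mul_cancel h1mα, Real.rpow_one]
  have hwFq : ∀ s : Finset (Fin n), s.Nonempty →
      w s ^ α * Fq s = ∑ i ∈ s, lam i * (w s ^ (α - 1) * Ts s i) := by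
    intro s hs
    rw [hFq_eq s, ← mul_assoc]
    have : w s ^ α * (w s)⁻¹ = w s ^ (α - 1) := by
      rw [Real.rpow_sub (hwpos s hs), Real.rpow_one, div_eq_mul_inv]
    rw [this, Finset.mul_sum]
    exact Finset.sum_congr rfl fun i _ => by ring
  have hβwsum : ∑ s ∈ S', β s * w s = 1 := by
    have := hswap lam
    rw [hwdef]
    rw [← hsum]
    exact this
  rcases lt_or_gt_of_ne hα1 with hlt | hgt
  · -- case α < 1
    have h1α : (0:ℝ) < 1 - α := by linarith
    have hexp_pos : (0:ℝ) < 1 / (1 - α) := one_div_pos.mpr h1α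
    have hptw : ∀ s : Finset (Fin n), s.Nonempty → ∀ x : X,
        (Zker t (ν Finset.univ) x) ^ (α - 1)
          ≤ w s ^ (α - 1) * (Zker t (q s) x) ^ (α - 1) := by
      intro s hs x
      rw [← Real.mul_rpow (hwpos s hs).le (hZqpos s hs x).le]
      exact Real.rpow_le_rpow_of_nonpos (mul_pos (hwpos s hs) (hZqpos s hs x))
        (hZcomp s hs x) (by linarith)
    have hTus : ∀ s : Finset (Fin n), s.Nonempty → ∀ i,
        Tu i ≤ w s ^ (α - 1) * Ts s i := by
      intro s hs i
      simp only [hTudef, hTsdef, Finset.mul_sum]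
      refine Finset.sum_le_sum fun x hx => ?_
      calc μ i x * (Zker t (ν Finset.univ) x) ^ (α - 1)
          ≤ μ i x * (w s ^ (α - 1) * (Zker t (q s) x) ^ (α - 1)) :=
            mul_le_mul_of_nonneg_left (hptw s hs x) (hμnn i x)
        _ = w s ^ (α - 1) * (μ i x * (Zker t (q s) x) ^ (α - 1)) := by ring
    have key1 : Fν ≤ ∑ s ∈ S', β s * (w s ^ α * Fq s) := by
      calc Fν = ∑ i, lam i * Tu i := hFν_eq
        _ = ∑ s ∈ S', β s * ∑ i ∈ s, lam i * Tu i := (hswap (fun i => lam i * Tu i)).symm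
        _ ≤ ∑ s ∈ S', β s * (w s ^ α * Fq s) := by
            refine Finset.sum_le_sum fun s hs => ?_
            have hsne := (hS'mem s).mp hs
            refine mul_le_mul_of_nonneg_left ?_ (hβnn s)
            rw [hwFq s hsne]
            exact Finset.sum_le_sum fun i _ =>
              mul_le_mul_of_nonneg_left (hTus s hsne i) (hlam i).le
    have hnn2 : 0 ≤ ∑ s ∈ S', β s * (w s ^ α * Fq s) := by
      refine Finset.sum_nonneg fun s hs => ?_
      have hsne := (hS'mem s).mp hs
      exact mul_nonneg (hβnn s)
        (mul_nonneg (Real.rpow_nonneg (hwpos s hsne).le _) (hFqpos s hsne).le)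
    have hD1 : Dalpha t α (ν Finset.univ)
        ≤ (∑ s ∈ S', β s * (w s ^ α * Fq s)) ^ (1 / (1 - α)) := by
      rw [hDν]
      exact Real.rpow_le_rpow hFνpos.le key1 hexp_pos.le
    rcases eq_or_lt_of_le hα0 with h0 | h0
    · -- α = 0
      have heq : ∀ s ∈ S', β s * (w s ^ α * Fq s) = β s * Dalpha t α (q s) := by
        intro s hs
        rw [hDq s, ← h0, Real.rpow_zero, one_mul]
        norm_num
      have hexp1 : 1 / (1 - α) = 1 := by rw [← h0]; norm_num
      calc Dalpha t α (ν Finset.univ)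
          ≤ (∑ s ∈ S', β s * (w s ^ α * Fq s)) ^ (1 / (1 - α)) := hD1
        _ = ∑ s ∈ S', β s * Dalpha t α (q s) := by
            rw [hexp1, Real.rpow_one]
            exact Finset.sum_congr rfl heq
    · -- 0 < α < 1
      have hE0 : 0 ≤ ∑ s ∈ S', β s * Dalpha t α (q s) :=
        Finset.sum_nonneg fun s hs =>
          mul_nonneg (hβnn s) (hDqpos s ((hS'mem s).mp hs)).le
      have hident : ∀ s ∈ S', β s * (w s ^ α * Fq s)
          = (β s * w s) ^ α * (β s * Dalpha t α (q s)) ^ (1 - α) := by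
        intro s hs
        have hsne := (hS'mem s).mp hs
        rcases eq_or_lt_of_le (hβnn s) with hb | hb
        · rw [← hb]
          simp [Real.zero_rpow h0.ne', Real.zero_rpow h1α.ne']
        · rw [Real.mul_rpow (hβnn s) (hwpos s hsne).le,
            Real.mul_rpow (hβnn s) (hDqpos s hsne).le, hFqD s hsne]
          have hββ : β s ^ α * β s ^ (1 - α) = β s := by
            rw [← Real.rpow_add hb, show α + (1 - α) = (1:ℝ) from by ring, Real.rpow_one]
          rw [show β s * (w s ^ α * Dalpha t α (q s) ^ (1 - α))
              = (β s ^ α * β s ^ (1 - α)) * (w s ^ α * Dalpha t α (q s) ^ (1 - α))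
              from by rw [hββ]]
          ring
      have hhold := holder_two S' (fun s => β s * w s)
        (fun s => β s * Dalpha t α (q s))
        (fun s hs => mul_nonneg (hβnn s) (hwpos s ((hS'mem s).mp hs)).le)
        (fun s hs => mul_nonneg (hβnn s) (hDqpos s ((hS'mem s).mp hs)).le) h0 hlt
      have key2 : ∑ s ∈ S', β s * (w s ^ α * Fq s)
          ≤ (∑ s ∈ S', β s * Dalpha t α (q s)) ^ (1 - α) := by
        calc ∑ s ∈ S', β s * (w s ^ α * Fq s)
            = ∑ s ∈ S', (β s * w s) ^ α * (β s * Dalpha t α (q s)) ^ (1 - α) :=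
              Finset.sum_congr rfl hident
          _ ≤ (∑ s ∈ S', β s * w s) ^ α
              * (∑ s ∈ S', β s * Dalpha t α (q s)) ^ (1 - α) := hhold
          _ = (∑ s ∈ S', β s * Dalpha t α (q s)) ^ (1 - α) := by
              rw [hβwsum, Real.one_rpow, one_mul]
      calc Dalpha t α (ν Finset.univ)
          ≤ (∑ s ∈ S', β s * (w s ^ α * Fq s)) ^ (1 / (1 - α)) := hD1
        _ ≤ ((∑ s ∈ S', β s * Dalpha t α (q s)) ^ (1 - α)) ^ (1 / (1 - α)) :=
            Real.rpow_le_rpow hnn2 key2 hexp_pos.le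
        _ = ∑ s ∈ S', β s * Dalpha t α (q s) := by
            rw [← Real.rpow_mul hE0, mul_one_div, div_self h1mα, Real.rpow_one]
  · -- case α > 1
    have hαne : α ≠ 0 := by positivity
    have hαpos : (0:ℝ) < α := by linarith
    have hptw : ∀ s : Finset (Fin n), s.Nonempty → ∀ x : X,
        w s ^ (α - 1) * (Zker t (q s) x) ^ (α - 1)
          ≤ (Zker t (ν Finset.univ) x) ^ (α - 1) := by
      intro s hs x
      rw [← Real.mul_rpow (hwpos s hs).le (hZqpos s hs x).le]
      exact Real.rpow_le_rpow (mul_pos (hwpos s hs) (hZqpos s hs x)).le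
        (hZcomp s hs x) (by linarith)
    have hTus : ∀ s : Finset (Fin n), s.Nonempty → ∀ i,
        w s ^ (α - 1) * Ts s i ≤ Tu i := by
      intro s hs i
      simp only [hTudef, hTsdef, Finset.mul_sum]
      refine Finset.sum_le_sum fun x hx => ?_
      calc w s ^ (α - 1) * (μ i x * (Zker t (q s) x) ^ (α - 1))
          = μ i x * (w s ^ (α - 1) * (Zker t (q s) x) ^ (α - 1)) := by ring
        _ ≤ μ i x * (Zker t (ν Finset.univ) x) ^ (α - 1) :=
            mul_le_mul_of_nonneg_left (hptw s hs x) (hμnn i x)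
    have key1 : ∑ s ∈ S', β s * (w s ^ α * Fq s) ≤ Fν := by
      calc ∑ s ∈ S', β s * (w s ^ α * Fq s)
          ≤ ∑ s ∈ S', β s * ∑ i ∈ s, lam i * Tu i := by
            refine Finset.sum_le_sum fun s hs => ?_
            have hsne := (hS'mem s).mp hs
            refine mul_le_mul_of_nonneg_left ?_ (hβnn s)
            rw [hwFq s hsne]
            exact Finset.sum_le_sum fun i _ =>
              mul_le_mul_of_nonneg_left (hTus s hsne i) (hlam i).le
        _ = ∑ i, lam i * Tu i := hswap (fun i => lam i * Tu i)
        _ = Fν := hFν_eq.symm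
    have hEterms : ∀ s ∈ S', 0 ≤ β s * Dalpha t α (q s) := fun s hs =>
      mul_nonneg (hβnn s) (hDqpos s ((hS'mem s).mp hs)).le
    have hCterms : ∀ s ∈ S', 0 ≤ β s * (w s ^ α * Fq s) := by
      intro s hs
      have hsne := (hS'mem s).mp hs
      exact mul_nonneg (hβnn s)
        (mul_nonneg (Real.rpow_nonneg (hwpos s hsne).le _) (hFqpos s hsne).le)
    have hEpos : 0 < ∑ s ∈ S', β s * Dalpha t α (q s) := by
      obtain ⟨i0, _⟩ := hnuniv
      have hne : (∑ s : Finset (Fin n), if i0 ∈ s then β s else 0) ≠ 0 := by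
        rw [hβ1 i0]; exact one_ne_zero
      obtain ⟨s0, _, hs0⟩ := Finset.exists_ne_zero_of_sum_ne_zero hne
      have hi0s : i0 ∈ s0 := by
        by_contra h
        rw [if_neg h] at hs0
        exact hs0 rfl
      rw [if_pos hi0s] at hs0
      have hs0ne : s0.Nonempty := ⟨i0, hi0s⟩
      refine Finset.sum_pos' hEterms ⟨s0, (hS'mem s0).mpr hs0ne, ?_⟩
      exact mul_pos (lt_of_le_of_ne (hβnn s0) (Ne.symm hs0)) (hDqpos s0 hs0ne)
    have hC0 : 0 ≤ ∑ s ∈ S', β s * (w s ^ α * Fq s) := Finset.sum_nonneg hCterms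
    have hθ0 : (0:ℝ) < 1 / α := one_div_pos.mpr hαpos
    have hθ1 : 1 / α < 1 := by
      rw [div_lt_one hαpos]; linarith
    have hident : ∀ s ∈ S', β s * w s
        = (β s * (w s ^ α * Fq s)) ^ (1/α) * (β s * Dalpha t α (q s)) ^ (1 - 1/α) := by
      intro s hs
      have hsne := (hS'mem s).mp hs
      have hD := hDqpos s hsne
      have hW := hwpos s hsne
      rcases eq_or_lt_of_le (hβnn s) with hb | hb
      · rw [← hb]
        simp [Real.zero_rpow (inv_ne_zero hαne), one_div]
      · rw [hFqD s hsne]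
        have e1 : (β s * (w s ^ α * Dalpha t α (q s) ^ (1 - α))) ^ (1/α)
            = β s ^ (1/α) * (w s * Dalpha t α (q s) ^ ((1 - α) * (1/α))) := by
          rw [Real.mul_rpow hb.le
              (mul_nonneg (Real.rpow_nonneg hW.le _) (Real.rpow_nonneg hD.le _)),
            Real.mul_rpow (Real.rpow_nonneg hW.le _) (Real.rpow_nonneg hD.le _),
            ← Real.rpow_mul hW.le, ← Real.rpow_mul hD.le,
            mul_one_div_cancel hαne, Real.rpow_one]
        have e2 : (β s * Dalpha t α (q s)) ^ (1 - 1/α)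
            = β s ^ (1 - 1/α) * Dalpha t α (q s) ^ (1 - 1/α) :=
          Real.mul_rpow hb.le hD.le
        rw [e1, e2]
        have hββ : β s ^ (1/α) * β s ^ (1 - 1/α) = β s := by
          rw [← Real.rpow_add hb, show 1/α + (1 - 1/α) = (1:ℝ) from by ring, Real.rpow_one]
        have hDD : Dalpha t α (q s) ^ ((1 - α) * (1/α)) * Dalpha t α (q s) ^ (1 - 1/α) = 1 := by
          rw [← Real.rpow_add hD,
            show (1 - α) * (1/α) + (1 - 1/α) = (0:ℝ) from by field_simp; ring,
            Real.rpow_zero]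
        calc β s * w s
            = (β s ^ (1/α) * β s ^ (1 - 1/α)) * (w s
              * (Dalpha t α (q s) ^ ((1 - α) * (1/α)) * Dalpha t α (q s) ^ (1 - 1/α))) := by
              rw [hββ, hDD, mul_one]
          _ = β s ^ (1/α) * (w s * Dalpha t α (q s) ^ ((1 - α) * (1/α)))
              * (β s ^ (1 - 1/α) * Dalpha t α (q s) ^ (1 - 1/α)) := by ring
    have h1le : (1:ℝ) ≤ (∑ s ∈ S', β s * (w s ^ α * Fq s)) ^ (1/α)
        * (∑ s ∈ S', β s * Dalpha t α (q s)) ^ (1 - 1/α) := by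
      have hhold := holder_two S' (fun s => β s * (w s ^ α * Fq s))
        (fun s => β s * Dalpha t α (q s)) hCterms hEterms hθ0 hθ1
      calc (1:ℝ) = ∑ s ∈ S', β s * w s := hβwsum.symm
        _ = ∑ s ∈ S', (β s * (w s ^ α * Fq s)) ^ (1/α)
            * (β s * Dalpha t α (q s)) ^ (1 - 1/α) := Finset.sum_congr rfl hident
        _ ≤ _ := hhold
    have h2 : (1:ℝ) ≤ (∑ s ∈ S', β s * (w s ^ α * Fq s))
        * (∑ s ∈ S', β s * Dalpha t α (q s)) ^ (α - 1) := by
      have h3 := Real.rpow_le_rpow (by norm_num : (0:ℝ) ≤ 1) h1le hα0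
      rw [Real.one_rpow,
        Real.mul_rpow (Real.rpow_nonneg hC0 _) (Real.rpow_nonneg hEpos.le _),
        ← Real.rpow_mul hC0, ← Real.rpow_mul hEpos.le,
        one_div_mul_cancel hαne, Real.rpow_one,
        show (1 - 1/α) * α = α - 1 from by
          rw [sub_mul, one_mul, one_div, inv_mul_cancel₀ hαne]] at h3
      exact h3
    have hECle : (∑ s ∈ S', β s * Dalpha t α (q s)) ^ (1 - α)
        ≤ ∑ s ∈ S', β s * (w s ^ α * Fq s) := by
      have h4 : (∑ s ∈ S', β s * Dalpha t α (q s)) ^ (1 - α) * 1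
          ≤ (∑ s ∈ S', β s * Dalpha t α (q s)) ^ (1 - α)
            * ((∑ s ∈ S', β s * (w s ^ α * Fq s))
              * (∑ s ∈ S', β s * Dalpha t α (q s)) ^ (α - 1)) :=
        mul_le_mul_of_nonneg_left h2 (Real.rpow_nonneg hEpos.le _)
      rw [mul_one] at h4
      calc (∑ s ∈ S', β s * Dalpha t α (q s)) ^ (1 - α)
          ≤ (∑ s ∈ S', β s * Dalpha t α (q s)) ^ (1 - α)
            * ((∑ s ∈ S', β s * (w s ^ α * Fq s))
              * (∑ s ∈ S', β s * Dalpha t α (q s)) ^ (α - 1)) := h4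
        _ = (∑ s ∈ S', β s * (w s ^ α * Fq s))
            * ((∑ s ∈ S', β s * Dalpha t α (q s)) ^ (1 - α)
              * (∑ s ∈ S', β s * Dalpha t α (q s)) ^ (α - 1)) := by ring
        _ = ∑ s ∈ S', β s * (w s ^ α * Fq s) := by
            rw [← Real.rpow_add hEpos, show (1 - α) + (α - 1) = (0:ℝ) from by ring,
              Real.rpow_zero, mul_one]
    have hkey : (∑ s ∈ S', β s * Dalpha t α (q s)) ^ (1 - α) ≤ Fν :=
      le_trans hECle key1
    rw [hDν]
    have h5 : Fν ^ (1 / (1 - α))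
        ≤ ((∑ s ∈ S', β s * Dalpha t α (q s)) ^ (1 - α)) ^ (1 / (1 - α)) :=
      Real.rpow_le_rpow_of_nonpos (Real.rpow_pos_of_pos hEpos _) hkey
        (le_of_lt (one_div_neg.mpr (by linarith)))
    rw [← Real.rpow_mul hEpos.le, mul_one_div, div_self h1mα, Real.rpow_one] at h5
    exact h5
end

section
/- Let (X,d) be a metric space and t > 0. Let μ_1, …, μ_n be finitely supported probability measures on X with pairwise disjoint supports, let λ_1, …, λ_n > 0 with ∑_{i=1}^n λ_i = 1, and set μ = ∑_{i=1}^n λ_i μ_i. Let β be a fractional partition on [n] with β(∅) = 0, and for each nonempty s ⊆ [n] set μ_s = (∑_{i ∈ s} λ_i μ_i)/(∑_{i ∈ s} λ_i). Then D_∞(μ) ≤ ∑_{s ⊆ [n], s ≠ ∅} β(s)·D_∞(μ_s). -/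
/-- The exponentiated kernelized ∞-complexity:
`D_∞(p) = (max_{x ∈ supp p} (Zp)(x))⁻¹` (and `1` for the zero measure). -/
noncomputable def Dinf {X : Type*} [MetricSpace X] (t : ℝ) (p : X →₀ ℝ) : ℝ :=
  if h : p.support.Nonempty then (p.support.sup' h (fun x => Zker t p x))⁻¹ else 1

/-- Monotonicity of `Zker` in the measure. -/
lemma Zker_mono {X : Type*} [MetricSpace X] (t : ℝ) {p q : X →₀ ℝ}
    (hq : ∀ x, 0 ≤ q x) (hle : ∀ x, q x ≤ p x) (x : X) :
    Zker t q x ≤ Zker t p x := by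
  have hsub : q.support ⊆ p.support := by
    intro y hy
    rw [Finsupp.mem_support_iff] at hy ⊢
    have h1 : 0 < q y := lt_of_le_of_ne (hq y) (Ne.symm hy)
    exact ne_of_gt (lt_of_lt_of_le h1 (hle y))
  have h1 : Zker t q x = ∑ y ∈ p.support, Real.exp (-(t * dist x y)) * q y := by
    unfold Zker
    refine Finset.sum_subset hsub ?_
    intro y _ hy
    rw [Finsupp.notMem_support_iff] at hy
    simp [hy]
  rw [h1]
  unfold Zker
  refine Finset.sum_le_sum ?_
  intro y _
  exact mul_le_mul_of_nonneg_left (hle y) (Real.exp_pos _).le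

lemma Zker_smul {X : Type*} [MetricSpace X] (t : ℝ) (c : ℝ) (hc : c ≠ 0) (q : X →₀ ℝ) (x : X) :
    Zker t (c • q) x = c * Zker t q x := by
  unfold Zker
  rw [Finsupp.support_smul_eq hc, Finset.mul_sum]
  refine Finset.sum_congr rfl ?_
  intro y _
  simp [Finsupp.smul_apply, smul_eq_mul]
  ring

lemma Zker_pos {X : Type*} [MetricSpace X] (t : ℝ) {p : X →₀ ℝ}
    (hp : ∀ x, 0 ≤ p x) {x : X} (hx : x ∈ p.support) :
    0 < Zker t p x := by
  unfold Zker
  refine Finset.sum_pos' ?_ ⟨x, hx, ?_⟩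
  · intro y _
    exact mul_nonneg (Real.exp_pos _).le (hp y)
  · have hpx : 0 < p x := lt_of_le_of_ne (hp x) (Ne.symm (Finsupp.mem_support_iff.mp hx))
    exact mul_pos (Real.exp_pos _) hpx

/-- Fractional subadditivity of exponentiated ∞-complexity over mixtures with
pairwise disjointly supported components. -/
theorem Dinf_fractionally_subadditive {X : Type*} [MetricSpace X]
    (t : ℝ) (ht : 0 < t)
    (n : ℕ) (μ : Fin n → (X →₀ ℝ)) (hμ : ∀ i, IsFinProb (μ i))
    (hdisj : ∀ i j, i ≠ j → Disjoint (μ i).support (μ j).support)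
    (lam : Fin n → ℝ) (hlam : ∀ i, 0 < lam i) (hsum : (∑ i, lam i) = 1)
    (β : Finset (Fin n) → ℝ) (hβ : IsFracPartition β) (hβ0 : β ∅ = 0) :
    Dinf t (∑ i, lam i • μ i) ≤
      ∑ s ∈ Finset.univ.filter (fun s : Finset (Fin n) => s ≠ ∅),
        β s * Dinf t ((∑ i ∈ s, lam i)⁻¹ • ∑ i ∈ s, lam i • μ i) := by
  classical
  have hn : 0 < n := by
    rcases Nat.eq_zero_or_pos n with h | h
    · subst h; simp at hsum
    · exact h
  set p : X →₀ ℝ := ∑ i, lam i • μ i with hp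
  set q : Finset (Fin n) → (X →₀ ℝ) := fun s => ∑ i ∈ s, lam i • μ i with hqdef
  have hq_apply : ∀ (s : Finset (Fin n)) (x : X), q s x = ∑ i ∈ s, lam i * μ i x := by
    intro s x
    simp [hqdef, Finsupp.finset_sum_apply, Finsupp.smul_apply, smul_eq_mul]
  have hp_apply : ∀ x : X, p x = ∑ i, lam i * μ i x := hq_apply Finset.univ
  have hq_nonneg : ∀ (s : Finset (Fin n)) (x : X), 0 ≤ q s x := by
    intro s x
    rw [hq_apply]
    exact Finset.sum_nonneg fun i _ => mul_nonneg (hlam i).le ((hμ i).1 x)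
  have hp_nonneg : ∀ x : X, 0 ≤ p x := hq_nonneg Finset.univ
  have hq_le_p : ∀ (s : Finset (Fin n)) (x : X), q s x ≤ p x := by
    intro s x
    rw [hq_apply, hp_apply]
    refine Finset.sum_le_sum_of_subset_of_nonneg (Finset.subset_univ s) ?_
    intro i _ _
    exact mul_nonneg (hlam i).le ((hμ i).1 x)
  -- support of each μ i is nonempty
  have hμsupp : ∀ i, (μ i).support.Nonempty := by
    intro i
    rcases Finset.eq_empty_or_nonempty (μ i).support with h | h
    · exfalso
      have := (hμ i).2
      rw [h] at this
      simp at this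
    · exact h
  -- q s has nonempty support whenever s is nonempty
  have hqsupp : ∀ s : Finset (Fin n), s.Nonempty → (q s).support.Nonempty := by
    intro s ⟨i, hi⟩
    obtain ⟨x, hx⟩ := hμsupp i
    have hμix : 0 < μ i x :=
      lt_of_le_of_ne ((hμ i).1 x) (Ne.symm (Finsupp.mem_support_iff.mp hx))
    refine ⟨x, Finsupp.mem_support_iff.mpr (ne_of_gt ?_)⟩
    rw [hq_apply]
    refine Finset.sum_pos' ?_ ⟨i, hi, mul_pos (hlam i) hμix⟩
    intro j _
    exact mul_nonneg (hlam j).le ((hμ j).1 x)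
  have hpsupp : p.support.Nonempty := by
    have := hqsupp Finset.univ ⟨⟨0, hn⟩, Finset.mem_univ _⟩
    exact this
  -- the max of Zker over supp p
  have hD : Dinf t p = (p.support.sup' hpsupp fun x => Zker t p x)⁻¹ := dif_pos hpsupp
  rw [hD]
  set M : ℝ := p.support.sup' hpsupp (fun x => Zker t p x) with hM
  have hMpos : 0 < M := by
    obtain ⟨x, hx⟩ := hpsupp
    exact lt_of_lt_of_le (Zker_pos t hp_nonneg hx) (Finset.le_sup' _ hx)
  -- key pointwise bound
  have key : ∀ s ∈ Finset.univ.filter (fun s : Finset (Fin n) => s ≠ ∅),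
      (∑ i ∈ s, lam i) * M⁻¹ ≤ Dinf t ((∑ i ∈ s, lam i)⁻¹ • q s) := by
    intro s hs
    rw [Finset.mem_filter] at hs
    have hsne : s.Nonempty := Finset.nonempty_iff_ne_empty.mpr hs.2
    set c : ℝ := ∑ i ∈ s, lam i with hc
    have hcpos : 0 < c := Finset.sum_pos (fun i _ => hlam i) hsne
    have hcinv : (c : ℝ)⁻¹ ≠ 0 := inv_ne_zero (ne_of_gt hcpos)
    have hsupp_eq : ((c⁻¹ • q s).support : Finset X) = (q s).support :=
      Finsupp.support_smul_eq hcinv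
    have hne : (c⁻¹ • q s).support.Nonempty := by
      rw [hsupp_eq]; exact hqsupp s hsne
    rw [show Dinf t (c⁻¹ • q s)
        = ((c⁻¹ • q s).support.sup' hne (fun x => Zker t (c⁻¹ • q s) x))⁻¹ from dif_pos hne]
    set S : ℝ := (c⁻¹ • q s).support.sup' hne (fun x => Zker t (c⁻¹ • q s) x) with hS
    have hSpos : 0 < S := by
      obtain ⟨x, hx⟩ := hne
      have hnn : ∀ y, 0 ≤ (c⁻¹ • q s) y := by
        intro y
        rw [Finsupp.smul_apply, smul_eq_mul]
        exact mul_nonneg (inv_nonneg.mpr hcpos.le) (hq_nonneg s y)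
      exact lt_of_lt_of_le (Zker_pos t hnn hx) (Finset.le_sup' _ hx)
    have hSle : S ≤ c⁻¹ * M := by
      refine Finset.sup'_le _ _ ?_
      intro x hx
      rw [Zker_smul t c⁻¹ hcinv]
      have hxq : x ∈ (q s).support := by rw [← hsupp_eq]; exact hx
      have hxp : x ∈ p.support := by
        rw [Finsupp.mem_support_iff] at hxq ⊢
        have h1 : 0 < q s x := lt_of_le_of_ne (hq_nonneg s x) (Ne.symm hxq)
        exact ne_of_gt (lt_of_lt_of_le h1 (hq_le_p s x))
      have h2 : Zker t (q s) x ≤ M :=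
        le_trans (Zker_mono t (hq_nonneg s) (hq_le_p s) x) (Finset.le_sup' _ hxp)
      exact mul_le_mul_of_nonneg_left h2 (inv_nonneg.mpr hcpos.le)
    have : (c⁻¹ * M)⁻¹ ≤ S⁻¹ := inv_anti₀ hSpos hSle
    calc c * M⁻¹ = (c⁻¹ * M)⁻¹ := by rw [mul_inv, inv_inv]
      _ ≤ S⁻¹ := this
  -- fractional partition identity : ∑_{s ≠ ∅} β s * λ_s = 1
  have hfp : (∑ s ∈ Finset.univ.filter (fun s : Finset (Fin n) => s ≠ ∅),
      β s * (∑ i ∈ s, lam i)) = 1 := by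
    have h1 : (∑ s ∈ Finset.univ.filter (fun s : Finset (Fin n) => s ≠ ∅),
        β s * (∑ i ∈ s, lam i)) = ∑ s : Finset (Fin n), β s * (∑ i ∈ s, lam i) := by
      refine Finset.sum_filter_of_ne ?_
      intro s _ h hse
      rw [hse, hβ0, zero_mul] at h
      exact h rfl
    rw [h1]
    have h2 : ∀ s : Finset (Fin n), β s * (∑ i ∈ s, lam i)
        = ∑ i : Fin n, (if i ∈ s then β s else 0) * lam i := by
      intro s
      rw [Finset.mul_sum]
      symm
      simp only [ite_mul, zero_mul]
      rw [Finset.sum_ite_mem Finset.univ s, Finset.univ_inter]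
    calc (∑ s : Finset (Fin n), β s * (∑ i ∈ s, lam i))
        = ∑ s : Finset (Fin n), ∑ i : Fin n, (if i ∈ s then β s else 0) * lam i := by
          exact Finset.sum_congr rfl fun s _ => h2 s
      _ = ∑ i : Fin n, ∑ s : Finset (Fin n), (if i ∈ s then β s else 0) * lam i :=
          Finset.sum_comm
      _ = ∑ i : Fin n, (∑ s : Finset (Fin n), (if i ∈ s then β s else 0)) * lam i := by
          exact Finset.sum_congr rfl fun i _ => (Finset.sum_mul ..).symm
      _ = ∑ i : Fin n, lam i := by
          refine Finset.sum_congr rfl fun i _ => ?_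
          rw [hβ.2 i, one_mul]
      _ = 1 := hsum
  calc M⁻¹ = (∑ s ∈ Finset.univ.filter (fun s : Finset (Fin n) => s ≠ ∅),
        β s * (∑ i ∈ s, lam i)) * M⁻¹ := by rw [hfp, one_mul]
    _ = ∑ s ∈ Finset.univ.filter (fun s : Finset (Fin n) => s ≠ ∅),
        β s * ((∑ i ∈ s, lam i) * M⁻¹) := by
        rw [Finset.sum_mul]
        exact Finset.sum_congr rfl fun s _ => by ring
    _ ≤ ∑ s ∈ Finset.univ.filter (fun s : Finset (Fin n) => s ≠ ∅),
        β s * Dinf t ((∑ i ∈ s, lam i)⁻¹ • q s) := by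
        refine Finset.sum_le_sum fun s hs => ?_
        exact mul_le_mul_of_nonneg_left (key s hs) (hβ.1 s)
end

section
/- Let (A, d_A) and (B, d_B) be nonempty finite metric spaces, t > 0, and let f : A → B be a surjective 1-Lipschitz map (i.e. d_B(f(x), f(x')) ≤ d_A(x, x') for all x, x' ∈ A). Then D^t(B) ≤ D^t(A); that is, exponentiated metric complexity is non-increasing under 1-Lipschitz surjections. -/
/-- The exponentiated metric complexity of a nonempty finite metric space `Y`:
the supremum over probability vectors `p` on `Y` of
`(∑_{x,y} p(x)·p(y)·e^{−t·d(x,y)})⁻¹`. -/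
noncomputable def DtSpace (t : ℝ) (Y : Type*) [MetricSpace Y] [Fintype Y] : ℝ :=
  sSup { r : ℝ | ∃ p : Y → ℝ, (∀ y, 0 ≤ p y) ∧ (∑ y, p y) = 1 ∧
    r = (∑ x, ∑ y, p x * p y * Real.exp (-(t * dist x y)))⁻¹ }

lemma DtSpace_exists_lb (t : ℝ) (ht : 0 ≤ t)
    (A : Type*) [MetricSpace A] [Fintype A] [Nonempty A] :
    ∃ c : ℝ, 0 < c ∧ ∀ p : A → ℝ, (∀ a, 0 ≤ p a) → (∑ a, p a) = 1 →
      c ≤ ∑ x, ∑ y, p x * p y * Real.exp (-(t * dist x y)) := by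
  have hbdd : Bornology.IsBounded (Set.univ : Set A) := Set.finite_univ.isBounded
  obtain ⟨M, hM⟩ := Metric.isBounded_iff.1 hbdd
  refine ⟨Real.exp (-(t * M)), Real.exp_pos _, ?_⟩
  intro p h0 h1
  have hcle : ∀ x y : A, Real.exp (-(t * M)) ≤ Real.exp (-(t * dist x y)) := by
    intro x y
    apply Real.exp_le_exp.2
    have h := hM (Set.mem_univ x) (Set.mem_univ y)
    nlinarith
  have hsum : ((∑ a, p a) * (∑ a, p a)) = ∑ x, ∑ y, p x * p y := by
    rw [Finset.sum_mul_sum]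
  calc Real.exp (-(t * M)) = Real.exp (-(t * M)) * ((∑ a, p a) * (∑ a, p a)) := by
        rw [h1]; ring
    _ = ∑ x, ∑ y, p x * p y * Real.exp (-(t * M)) := by
        rw [hsum, Finset.mul_sum]
        refine Finset.sum_congr rfl fun x _ => ?_
        rw [Finset.mul_sum]
        exact Finset.sum_congr rfl fun y _ => by ring
    _ ≤ _ := by
        refine Finset.sum_le_sum fun x _ => Finset.sum_le_sum fun y _ => ?_
        exact mul_le_mul_of_nonneg_left (hcle x y) (mul_nonneg (h0 x) (h0 y))

lemma DtSpace_bddAbove (t : ℝ) (ht : 0 ≤ t)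
    (A : Type*) [MetricSpace A] [Fintype A] [Nonempty A] :
    BddAbove { r : ℝ | ∃ p : A → ℝ, (∀ y, 0 ≤ p y) ∧ (∑ y, p y) = 1 ∧
      r = (∑ x, ∑ y, p x * p y * Real.exp (-(t * dist x y)))⁻¹ } := by
  obtain ⟨c, hc, hcb⟩ := DtSpace_exists_lb t ht A
  refine ⟨c⁻¹, ?_⟩
  rintro r ⟨p, h0, h1, rfl⟩
  exact inv_anti₀ hc (hcb p h0 h1)

lemma pull_sum {A B : Type*} [Fintype A] [Fintype B] [DecidableEq A]
    (g : B → A) (p : B → ℝ) (F : A → ℝ) :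
    (∑ a, (∑ b, if g b = a then p b else 0) * F a) = ∑ b, p b * F (g b) := by
  have h : ∀ a : A, (∑ b, if g b = a then p b else 0) * F a
      = ∑ b, if g b = a then p b * F a else 0 := by
    intro a
    rw [Finset.sum_mul]
    refine Finset.sum_congr rfl fun b _ => ?_
    by_cases h : g b = a <;> simp [h]
  simp_rw [h]
  rw [Finset.sum_comm]
  refine Finset.sum_congr rfl fun b _ => ?_
  simp

/-- Exponentiated metric complexity is non-increasing under surjective
1-Lipschitz maps between nonempty finite metric spaces. -/
theorem DtSpace_le_of_lipschitz_surjective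
    {A B : Type*} [MetricSpace A] [Fintype A] [Nonempty A]
    [MetricSpace B] [Fintype B] [Nonempty B]
    (t : ℝ) (ht : 0 < t) (f : A → B) (hsurj : Function.Surjective f)
    (hlip : ∀ x x' : A, dist (f x) (f x') ≤ dist x x') :
    DtSpace t B ≤ DtSpace t A := by
  classical
  obtain ⟨cA, hcA, hbA⟩ := DtSpace_exists_lb t ht.le A
  set g : B → A := Function.surjInv hsurj with hg
  have hfg : ∀ b, f (g b) = b := fun b => Function.surjInv_eq hsurj b
  have hSBne : { r : ℝ | ∃ p : B → ℝ, (∀ y, 0 ≤ p y) ∧ (∑ y, p y) = 1 ∧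
      r = (∑ x, ∑ y, p x * p y * Real.exp (-(t * dist x y)))⁻¹ }.Nonempty := by
    refine ⟨_, fun _ => (Fintype.card B : ℝ)⁻¹, fun y => by positivity, ?_, rfl⟩
    have : (0 : ℝ) < Fintype.card B := by exact_mod_cast Fintype.card_pos
    field_simp
    rw [Finset.sum_const, Finset.card_univ, nsmul_eq_mul, mul_one_div_cancel this.ne']
  refine csSup_le hSBne ?_
  rintro r ⟨p, h0, h1, rfl⟩
  set q : A → ℝ := fun a => ∑ b, if g b = a then p b else 0 with hq
  have hq0 : ∀ a, 0 ≤ q a := by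
    intro a
    refine Finset.sum_nonneg fun b _ => ?_
    by_cases h : g b = a <;> simp [h, h0 b]
  have hq1 : (∑ a, q a) = 1 := by
    rw [hq]
    simp only []
    rw [Finset.sum_comm]
    simpa using h1
  have hZA : (∑ x, ∑ y, q x * q y * Real.exp (-(t * dist x y)))
      = ∑ b, ∑ b', p b * (p b' * Real.exp (-(t * dist (g b) (g b')))) := by
    have h1' : ∀ x : A, (∑ y, q x * q y * Real.exp (-(t * dist x y)))
        = q x * ∑ y, q y * Real.exp (-(t * dist x y)) := by
      intro x
      rw [Finset.mul_sum]
      exact Finset.sum_congr rfl fun y _ => by ring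
    simp_rw [h1']
    calc (∑ x, q x * ∑ y, q y * Real.exp (-(t * dist x y)))
        = ∑ x, (∑ b, if g b = x then p b else 0) * (∑ y, q y * Real.exp (-(t * dist x y))) :=
          rfl
      _ = ∑ b, p b * ∑ y, q y * Real.exp (-(t * dist (g b) y)) :=
          pull_sum g p (fun x => ∑ y, q y * Real.exp (-(t * dist x y)))
      _ = _ := by
          refine Finset.sum_congr rfl fun b _ => ?_
          rw [show (∑ y, q y * Real.exp (-(t * dist (g b) y)))
              = ∑ y, (∑ b', if g b' = y then p b' else 0) * Real.exp (-(t * dist (g b) y))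
              from rfl,
            pull_sum g p (fun y => Real.exp (-(t * dist (g b) y))), Finset.mul_sum]
  have hZle : (∑ x, ∑ y, q x * q y * Real.exp (-(t * dist x y)))
      ≤ ∑ x, ∑ y, p x * p y * Real.exp (-(t * dist x y)) := by
    rw [hZA]
    refine Finset.sum_le_sum fun b _ => Finset.sum_le_sum fun b' _ => ?_
    have hd : dist b b' ≤ dist (g b) (g b') := by
      have h := hlip (g b) (g b')
      rwa [hfg, hfg] at h
    have hexp : Real.exp (-(t * dist (g b) (g b'))) ≤ Real.exp (-(t * dist b b')) := by
      apply Real.exp_le_exp.2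
      nlinarith
    calc p b * (p b' * Real.exp (-(t * dist (g b) (g b'))))
        ≤ p b * (p b' * Real.exp (-(t * dist b b'))) :=
          mul_le_mul_of_nonneg_left (mul_le_mul_of_nonneg_left hexp (h0 b')) (h0 b)
      _ = p b * p b' * Real.exp (-(t * dist b b')) := by ring
  have hZApos : 0 < ∑ x, ∑ y, q x * q y * Real.exp (-(t * dist x y)) :=
    lt_of_lt_of_le hcA (hbA q hq0 hq1)
  have hle : (∑ x, ∑ y, p x * p y * Real.exp (-(t * dist x y)))⁻¹
      ≤ (∑ x, ∑ y, q x * q y * Real.exp (-(t * dist x y)))⁻¹ :=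
    inv_anti₀ hZApos hZle
  exact le_trans hle (le_csSup (DtSpace_bddAbove t ht.le A) ⟨q, hq0, hq1, rfl⟩)
end
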